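/- arXiv:2402.02684 — 9 statements merged into one kernel-verified Lean document; each statement's English description precedes it below -/
import Mathlib

section
/- Under assumptions (A1)–(A5) for the fixed treatment a, the event {X̃ = x̃, S = s} has positive probability, i.e. ℙ(X̃ = x̃ ∧ S = s) > 0, and the subgroup potential outcome mean in the internal target population s is identified by the g-formula: 𝔼[Y^a | X̃ = x̃ ∧ S = s] = 𝔼[μ_a(X) | X̃ = x̃ ∧ S = s]. -/
open MeasureTheory ProbabilityTheory

/-- The σ-algebra generated by a map into a measurable space. -/
def sigmaGen {Ω β : Type*} [MeasurableSpace β] (f : Ω → β) : MeasurableSpace Ω :=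
  MeasurableSpace.comap f inferInstance

lemma measurable_sigmaGen {Ω β γ : Type*} [MeasurableSpace β] [MeasurableSpace γ]
    {f : Ω → β} {h : β → γ} (hh : Measurable h) :
    Measurable[sigmaGen f] fun ω => h (f ω) := fun _t ht => ⟨h ⁻¹' _t, hh ht, rfl⟩

lemma sigmaGen_mono {Ω β γ : Type*} [MeasurableSpace β] [MeasurableSpace γ]
    (f : Ω → β) (h : β → γ) (hh : Measurable h) :
    sigmaGen (fun ω => h (f ω)) ≤ sigmaGen f := by
  have he : (fun ω => h (f ω)) = h ∘ f := rfl
  rw [sigmaGen, sigmaGen, he, ← MeasurableSpace.comap_comp]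
  exact MeasurableSpace.comap_mono (measurable_iff_comap_le.mp hh)

lemma condexp_pos_of_pos {Ω : Type*} {m m0 : MeasurableSpace Ω} (hm : m ≤ m0)
    (P : Measure Ω) [IsFiniteMeasure P] {Z : Ω → ℝ} (hZ : Integrable Z P)
    (hpos : ∀ᵐ ω ∂P, 0 < Z ω) : ∀ᵐ ω ∂P, 0 < (P[Z|m]) ω := by
  have hnn : 0 ≤ᵐ[P] P[Z|m] := condExp_nonneg (hpos.mono fun ω h => h.le)
  set N : Set Ω := {ω | (P[Z|m]) ω = 0} with hN
  have hNm : MeasurableSet[m] N :=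
    stronglyMeasurable_condExp.measurable (measurableSet_singleton 0)
  have hint : ∫ ω in N, Z ω ∂P = 0 := by
    rw [← setIntegral_condExp hm hZ hNm]
    rw [setIntegral_congr_fun (hm _ hNm) (fun ω hω => hω)]
    simp
  have hPN : P N = 0 := by
    by_contra hc
    have hle : P N ≤ P (Function.support Z ∩ N) := by
      refine measure_mono_ae ?_
      filter_upwards [hpos] with ω h hω
      exact ⟨h.ne', hω⟩
    have : 0 < ∫ ω in N, Z ω ∂P := by
      rw [setIntegral_pos_iff_support_of_nonneg_ae
        (ae_restrict_of_ae (hpos.mono fun ω h => h.le)) hZ.integrableOn]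
      exact lt_of_lt_of_le (pos_iff_ne_zero.mpr hc) hle
    exact this.ne' hint
  have hN' : ∀ᵐ ω ∂P, ω ∉ N := measure_eq_zero_iff_ae_notMem.mp hPN
  filter_upwards [hnn, hN'] with ω h1 h2
  exact lt_of_le_of_ne h1 (Ne.symm h2)

/-- Under (A1)–(A5), the event {X̃ = xt, S = s} has positive probability and the
subgroup potential outcome mean in internal population s is identified by the g-formula. -/
theorem internal_identification
    {Ω 𝒜 𝒮 𝒯 𝒳 : Type*}
    [MeasurableSpace Ω]
    [Fintype 𝒜] [Nonempty 𝒜] [DecidableEq 𝒜] [MeasurableSpace 𝒜] [DiscreteMeasurableSpace 𝒜]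
    [Fintype 𝒮] [Nonempty 𝒮] [DecidableEq 𝒮] [MeasurableSpace 𝒮] [DiscreteMeasurableSpace 𝒮]
    [Fintype 𝒯] [Nonempty 𝒯] [DecidableEq 𝒯] [MeasurableSpace 𝒯] [DiscreteMeasurableSpace 𝒯]
    [MeasurableSpace 𝒳]
    (P : Measure Ω) [IsProbabilityMeasure P]
    (A : Ω → 𝒜) (S : Ω → 𝒮) (X : Ω → 𝒳) (g : 𝒳 → 𝒯) (Y : Ω → ℝ)
    (hA : Measurable A) (hS : Measurable S) (hX : Measurable X) (hg : Measurable g)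
    (hY : MemLp Y 2 P)
    (a : 𝒜) (s : 𝒮) (xt : 𝒯)
    (η q μ : 𝒳 → ℝ) (hηm : Measurable η) (hqm : Measurable q) (hμm : Measurable μ)
    -- propensity score: η_a(X) = E[1{A=a} | σ(X)] a.s.
    (hη : (fun ω => η (X ω)) =ᵐ[P]
      condExp (sigmaGen X) P (fun ω => if A ω = a then (1 : ℝ) else 0))
    -- source model: q_s(X) = E[1{S=s} | σ(X)] a.s.
    (hq : (fun ω => q (X ω)) =ᵐ[P]
      condExp (sigmaGen X) P (fun ω => if S ω = s then (1 : ℝ) else 0))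
    -- outcome regression: 1{A=a}·E[Y | σ(X,A)] = 1{A=a}·μ_a(X) a.s.
    (hμ : (fun ω => (if A ω = a then (1 : ℝ) else 0) *
        condExp (sigmaGen (fun ω => (X ω, A ω))) P Y ω) =ᵐ[P]
      (fun ω => (if A ω = a then (1 : ℝ) else 0) * μ (X ω)))
    -- potential outcomes
    (Ypot : 𝒜 → Ω → ℝ) (hYpot : ∀ b, MemLp (Ypot b) 2 P)
    -- (A1) consistency
    (hA1 : ∀ᵐ ω ∂P, Y ω = Ypot (A ω) ω)
    -- (A2) mean exchangeability over treatment
    (hA2 : condExp (sigmaGen (fun ω => (X ω, S ω))) P (fun ω => (if A ω = a then (1 : ℝ) else 0) * Ypot a ω) =ᵐ[P]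
      fun ω => (condExp (sigmaGen (fun ω => (X ω, S ω))) P (Ypot a) ω) *
        (condExp (sigmaGen (fun ω => (X ω, S ω))) P (fun ω => if A ω = a then (1 : ℝ) else 0) ω))
    -- (A3) treatment positivity
    (hA3 : ∀ᵐ ω ∂P,
      0 < condExp (sigmaGen (fun ω => (X ω, S ω))) P (fun ω => if A ω = a then (1 : ℝ) else 0) ω)
    -- (A4) mean exchangeability over source
    (hA4 : condExp (sigmaGen (fun ω => (X ω, S ω))) P (Ypot a) =ᵐ[P] condExp (sigmaGen X) P (Ypot a))
    -- (A5) participation positivity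
    (hA5 : ∀ᵐ ω ∂P, 0 < q (X ω)) (hA5' : 0 < P {ω | g (X ω) = xt}) :
    0 < P {ω | g (X ω) = xt ∧ S ω = s} ∧
    (∫ ω in {ω | g (X ω) = xt ∧ S ω = s}, Ypot a ω ∂P) /
        (P {ω | g (X ω) = xt ∧ S ω = s}).toReal =
      (∫ ω in {ω | g (X ω) = xt ∧ S ω = s}, μ (X ω) ∂P) /
        (P {ω | g (X ω) = xt ∧ S ω = s}).toReal := by
  classical
  have hmX : (sigmaGen X) ≤ (inferInstance : MeasurableSpace Ω) := measurable_iff_comap_le.mp hX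
  have hmXS : (sigmaGen (fun ω => (X ω, S ω))) ≤ (inferInstance : MeasurableSpace Ω) := measurable_iff_comap_le.mp (hX.prodMk hS)
  have hmXA : (sigmaGen (fun ω => (X ω, A ω))) ≤ (inferInstance : MeasurableSpace Ω) := measurable_iff_comap_le.mp (hX.prodMk hA)
  have hmX_XS : (sigmaGen X) ≤ (sigmaGen (fun ω => (X ω, S ω))) :=
    sigmaGen_mono (fun ω => (X ω, S ω)) Prod.fst measurable_fst
  have hmX_XA : (sigmaGen X) ≤ (sigmaGen (fun ω => (X ω, A ω))) :=
    sigmaGen_mono (fun ω => (X ω, A ω)) Prod.fst measurable_fst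
  haveI : SigmaFinite (P.trim hmX) := inferInstance
  haveI : SigmaFinite (P.trim hmXS) := inferInstance
  haveI : SigmaFinite (P.trim hmXA) := inferInstance
  set indA : Ω → ℝ := fun ω => if A ω = a then 1 else 0 with hindAdef
  set indS : Ω → ℝ := fun ω => if S ω = s then 1 else 0 with hindSdef
  -- basic integrability and measurability facts
  have hindAm : Measurable indA :=
    Measurable.ite (hA (measurableSet_singleton a)) measurable_const measurable_const
  have hindSm : Measurable indS :=
    Measurable.ite (hS (measurableSet_singleton s)) measurable_const measurable_const
  have hindAb : ∀ ω, ‖indA ω‖ ≤ 1 := by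
    intro ω; by_cases h : A ω = a <;> simp [hindAdef, h]
  have hindSb : ∀ ω, ‖indS ω‖ ≤ 1 := by
    intro ω; by_cases h : S ω = s <;> simp [hindSdef, h]
  have hindAint : Integrable indA P :=
    Integrable.mono' (integrable_const 1) hindAm.aestronglyMeasurable
      (Filter.Eventually.of_forall hindAb)
  have hindSint : Integrable indS P :=
    Integrable.mono' (integrable_const 1) hindSm.aestronglyMeasurable
      (Filter.Eventually.of_forall hindSb)
  have hYint : Integrable Y P := hY.integrable one_le_two
  have hYaint : Integrable (Ypot a) P := (hYpot a).integrable one_le_two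
  have hindAY : Integrable (fun ω => indA ω * Y ω) P :=
    hYint.bdd_mul hindAm.aestronglyMeasurable (Filter.Eventually.of_forall hindAb)
  have hindA_mXA : StronglyMeasurable[(sigmaGen (fun ω => (X ω, A ω)))] indA := by
    have h := measurable_sigmaGen (f := fun ω => (X ω, A ω))
      (h := fun p : 𝒳 × 𝒜 => if p.2 = a then (1 : ℝ) else 0)
      (Measurable.ite (measurable_snd (measurableSet_singleton a))
        measurable_const measurable_const)
    exact h.stronglyMeasurable
  have hmuX : StronglyMeasurable[(sigmaGen X)] fun ω => μ (X ω) :=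
    (measurable_sigmaGen (f := X) hμm).stronglyMeasurable
  -- positivity of the propensity score composed with X
  have hcc : condExp (sigmaGen X) P (condExp (sigmaGen (fun ω => (X ω, S ω))) P indA) =ᵐ[P] condExp (sigmaGen X) P indA :=
    condExp_condExp_of_le hmX_XS hmXS
  have hetaX : (fun ω => η (X ω)) =ᵐ[P] condExp (sigmaGen X) P (condExp (sigmaGen (fun ω => (X ω, S ω))) P indA) :=
    hη.trans hcc.symm
  have hetapos : ∀ᵐ ω ∂P, 0 < η (X ω) := by
    have hp := condexp_pos_of_pos hmX P (integrable_condExp (f := indA) (m := (sigmaGen (fun ω => (X ω, S ω))))) hA3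
    filter_upwards [hetaX, hp] with ω h1 h2
    rw [h1]; exact h2
  -- step A : conditional expectation over σ(X,A)
  have hstepA : condExp (sigmaGen (fun ω => (X ω, A ω))) P (fun ω => indA ω * Y ω) =ᵐ[P] fun ω => indA ω * μ (X ω) := by
    refine (condExp_mul_of_stronglyMeasurable_left hindA_mXA hindAY hYint).trans ?_
    filter_upwards [hμ] with ω h
    exact h
  -- LHS : E[1{A=a} Y | σ(X)] = μ(X) η(X)
  have hLHS : condExp (sigmaGen X) P (fun ω => indA ω * Y ω) =ᵐ[P] fun ω => μ (X ω) * η (X ω) := by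
    have h1 : condExp (sigmaGen X) P (fun ω => indA ω * Y ω) =ᵐ[P]
        condExp (sigmaGen X) P (fun ω => μ (X ω) * indA ω) := by
      refine (condExp_condExp_of_le hmX_XA hmXA).symm.trans (condExp_congr_ae ?_)
      filter_upwards [hstepA] with ω h
      rw [h, mul_comm]
    have hintg : Integrable (fun ω => μ (X ω) * indA ω) P := by
      refine (integrable_condExp (f := fun ω => indA ω * Y ω) (m := (sigmaGen (fun ω => (X ω, A ω))))).congr ?_
      filter_upwards [hstepA] with ω h
      rw [h, mul_comm]
    have h2 : condExp (sigmaGen X) P (fun ω => μ (X ω) * indA ω) =ᵐ[P]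
        (fun ω => μ (X ω)) * condExp (sigmaGen X) P indA :=
      condExp_mul_of_stronglyMeasurable_left hmuX hintg hindAint
    refine h1.trans (h2.trans ?_)
    filter_upwards [hη] with ω h
    simp only [Pi.mul_apply]
    rw [h]
  -- RHS : E[1{A=a} Y^a | σ(X)] = E[Y^a | σ(X)] η(X)
  have hRHS : condExp (sigmaGen X) P (fun ω => indA ω * Ypot a ω) =ᵐ[P]
      fun ω => condExp (sigmaGen X) P (Ypot a) ω * η (X ω) := by
    have h0 : condExp (sigmaGen (fun ω => (X ω, S ω))) P (fun ω => indA ω * Ypot a ω) =ᵐ[P]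
        fun ω => condExp (sigmaGen X) P (Ypot a) ω * condExp (sigmaGen (fun ω => (X ω, S ω))) P indA ω := by
      filter_upwards [hA2, hA4] with ω h2 h4
      rw [h2, h4]
    have h1 : condExp (sigmaGen X) P (fun ω => indA ω * Ypot a ω) =ᵐ[P]
        condExp (sigmaGen X) P (fun ω => condExp (sigmaGen X) P (Ypot a) ω * condExp (sigmaGen (fun ω => (X ω, S ω))) P indA ω) :=
      (condExp_condExp_of_le hmX_XS hmXS).symm.trans (condExp_congr_ae h0)
    have hintg : Integrable (fun ω => condExp (sigmaGen X) P (Ypot a) ω * condExp (sigmaGen (fun ω => (X ω, S ω))) P indA ω) P :=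
      (integrable_condExp (f := fun ω => indA ω * Ypot a ω) (m := (sigmaGen (fun ω => (X ω, S ω))))).congr h0
    have h2 : condExp (sigmaGen X) P (fun ω => condExp (sigmaGen X) P (Ypot a) ω * condExp (sigmaGen (fun ω => (X ω, S ω))) P indA ω) =ᵐ[P]
        condExp (sigmaGen X) P (Ypot a) * condExp (sigmaGen X) P (condExp (sigmaGen (fun ω => (X ω, S ω))) P indA) :=
      condExp_mul_of_stronglyMeasurable_left stronglyMeasurable_condExp hintg integrable_condExp
    refine h1.trans (h2.trans ?_)
    filter_upwards [hetaX] with ω h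
    simp only [Pi.mul_apply]
    rw [← h]
  -- consistency
  have hcons : (fun ω => indA ω * Y ω) =ᵐ[P] fun ω => indA ω * Ypot a ω := by
    filter_upwards [hA1] with ω h
    by_cases hω : A ω = a
    · rw [h, hω]
    · simp [hindAdef, hω]
  -- key identity : μ(X) = E[Y^a | σ(X)] a.s.
  have hkey : (fun ω => μ (X ω)) =ᵐ[P] condExp (sigmaGen X) P (Ypot a) := by
    have h1 : condExp (sigmaGen X) P (fun ω => indA ω * Y ω) =ᵐ[P]
        condExp (sigmaGen X) P (fun ω => indA ω * Ypot a ω) := condExp_congr_ae hcons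
    have h2 := hLHS.symm.trans (h1.trans hRHS)
    filter_upwards [h2, hetapos] with ω h hp
    exact mul_right_cancel₀ hp.ne' h
  -- the event E
  set E := {ω | g (X ω) = xt ∧ S ω = s} with hEdef
  have hEm : MeasurableSet[(sigmaGen (fun ω => (X ω, S ω)))] E :=
    ⟨{p : 𝒳 × 𝒮 | g p.1 = xt ∧ p.2 = s},
      ((hg.comp measurable_fst) (measurableSet_singleton xt)).inter
        (measurable_snd (measurableSet_singleton s)), rfl⟩
  -- the g-formula equality of set integrals
  have hEq2 : ∫ ω in E, Ypot a ω ∂P = ∫ ω in E, μ (X ω) ∂P := by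
    have e1 : ∫ ω in E, Ypot a ω ∂P = ∫ ω in E, condExp (sigmaGen (fun ω => (X ω, S ω))) P (Ypot a) ω ∂P :=
      (setIntegral_condExp hmXS hYaint hEm).symm
    have e2 : ∫ ω in E, condExp (sigmaGen (fun ω => (X ω, S ω))) P (Ypot a) ω ∂P =
        ∫ ω in E, condExp (sigmaGen X) P (Ypot a) ω ∂P :=
      integral_congr_ae (ae_restrict_of_ae hA4)
    have e3 : ∫ ω in E, condExp (sigmaGen X) P (Ypot a) ω ∂P = ∫ ω in E, μ (X ω) ∂P :=
      integral_congr_ae (ae_restrict_of_ae hkey.symm)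
    rw [e1, e2, e3]
  -- positivity of P E
  set T := {ω | g (X ω) = xt} with hTdef
  have hTm : MeasurableSet[(sigmaGen X)] T := ⟨g ⁻¹' {xt}, hg (measurableSet_singleton xt), rfl⟩
  have hSm : MeasurableSet {ω | S ω = s} := hS (measurableSet_singleton s)
  have e4 : ∫ ω in T, q (X ω) ∂P = (P E).toReal := by
    rw [integral_congr_ae (ae_restrict_of_ae hq), setIntegral_condExp hmX hindSint hTm]
    calc ∫ ω in T, indS ω ∂P
        = ∫ ω in T, Set.indicator {ω | S ω = s} (fun _ => (1 : ℝ)) ω ∂P := by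
          refine integral_congr_ae (ae_of_all _ fun ω => ?_)
          by_cases hω : S ω = s <;> simp [hindSdef, Set.indicator, hω]
      _ = ∫ _ω in T ∩ {ω | S ω = s}, (1 : ℝ) ∂P := setIntegral_indicator hSm
      _ = (P (T ∩ {ω | S ω = s})).toReal := by rw [setIntegral_const]; simp [Measure.real]
      _ = (P E).toReal := by
          congr 1
  have hqint : Integrable (fun ω => q (X ω)) P :=
    (integrable_condExp (f := indS) (m := (sigmaGen X))).congr hq.symm
  have e5 : 0 < ∫ ω in T, q (X ω) ∂P := by
    rw [setIntegral_pos_iff_support_of_nonneg_ae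
      (ae_restrict_of_ae (hA5.mono fun ω h => h.le)) hqint.integrableOn]
    refine lt_of_lt_of_le hA5' (measure_mono_ae ?_)
    filter_upwards [hA5] with ω h hω
    exact ⟨h.ne', hω⟩
  have hPE : 0 < P E := by
    have h6 : 0 < (P E).toReal := e4 ▸ e5
    exact (ENNReal.toReal_pos_iff.mp h6).1
  exact ⟨hPE, by rw [hEq2]⟩
end

section
/- Under assumptions (A1)–(A4) for the fixed treatment a, together with a.s. positivity of the propensity score η_a(X) > 0, the outcome regression equals the conditional potential-outcome mean: μ_a(X) = 𝔼[Y^a | σ(X)] a.s. -/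
open MeasureTheory ProbabilityTheory Filter

/-- under (A1)-(A4) and positivity of the propensity score,
the outcome regression equals the conditional potential-outcome mean. -/
theorem outcome_regression_eq_condexp_potential
    {Ω 𝒜 𝒮 𝒯 𝒳 : Type*}
    [MeasurableSpace Ω]
    [Fintype 𝒜] [Nonempty 𝒜] [DecidableEq 𝒜] [MeasurableSpace 𝒜] [DiscreteMeasurableSpace 𝒜]
    [Fintype 𝒮] [Nonempty 𝒮] [DecidableEq 𝒮] [MeasurableSpace 𝒮] [DiscreteMeasurableSpace 𝒮]
    [Fintype 𝒯] [Nonempty 𝒯] [DecidableEq 𝒯] [MeasurableSpace 𝒯] [DiscreteMeasurableSpace 𝒯]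
    [MeasurableSpace 𝒳]
    (P : Measure Ω) [IsProbabilityMeasure P]
    (A : Ω → 𝒜) (S : Ω → 𝒮) (X : Ω → 𝒳) (g : 𝒳 → 𝒯) (Y : Ω → ℝ)
    (hA : Measurable A) (hS : Measurable S) (hX : Measurable X) (hg : Measurable g)
    (hY : MemLp Y 2 P)
    (a : 𝒜)
    (η μ : 𝒳 → ℝ) (hηm : Measurable η) (hμm : Measurable μ)
    -- propensity score: η_a(X) = E[1{A=a} | σ(X)] a.s.
    (hη : (fun ω => η (X ω)) =ᵐ[P]
      condExp (sigmaGen X) P (fun ω => if A ω = a then (1 : ℝ) else 0))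
    -- outcome regression: 1{A=a}·E[Y | σ(X,A)] = 1{A=a}·μ_a(X) a.s.
    (hμ : (fun ω => (if A ω = a then (1 : ℝ) else 0) *
        condExp (sigmaGen (fun ω => (X ω, A ω))) P Y ω) =ᵐ[P]
      (fun ω => (if A ω = a then (1 : ℝ) else 0) * μ (X ω)))
    -- potential outcomes
    (Ypot : 𝒜 → Ω → ℝ) (hYpot : ∀ b, MemLp (Ypot b) 2 P)
    -- (A1) consistency
    (hA1 : ∀ᵐ ω ∂P, Y ω = Ypot (A ω) ω)
    -- (A2) mean exchangeability over treatment
    (hA2 : condExp (sigmaGen (fun ω => (X ω, S ω))) P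
        (fun ω => (if A ω = a then (1 : ℝ) else 0) * Ypot a ω) =ᵐ[P]
      fun ω => (condExp (sigmaGen (fun ω => (X ω, S ω))) P (Ypot a) ω) *
        (condExp (sigmaGen (fun ω => (X ω, S ω))) P (fun ω => if A ω = a then (1 : ℝ) else 0) ω))
    -- (A3) treatment positivity
    (hA3 : ∀ᵐ ω ∂P,
      0 < condExp (sigmaGen (fun ω => (X ω, S ω))) P (fun ω => if A ω = a then (1 : ℝ) else 0) ω)
    -- (A4) mean exchangeability over source
    (hA4 : condExp (sigmaGen (fun ω => (X ω, S ω))) P (Ypot a) =ᵐ[P]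
      condExp (sigmaGen X) P (Ypot a))
    -- positivity of the propensity score
    (hpos : ∀ᵐ ω ∂P, 0 < η (X ω)) :
    (fun ω => μ (X ω)) =ᵐ[P] condExp (sigmaGen X) P (Ypot a) := by
  classical
  rename_i mΩ iA1 iA2 iA3 iA4 iA5 iS1 iS2 iS3 iS4 iS5 iT1 iT2 iT3 iT4 iT5 iX1 iP
  set m0 := sigmaGen X with hm0def
  set mXA := sigmaGen (fun ω => (X ω, A ω)) with hmXAdef
  set mXS := sigmaGen (fun ω => (X ω, S ω)) with hmXSdef
  set I : Ω → ℝ := fun ω => if A ω = a then (1 : ℝ) else 0 with hIdef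
  -- measurability of the σ-algebras
  have hm0le : m0 ≤ mΩ := hX.comap_le
  have hXAle : mXA ≤ mΩ := (hX.prodMk hA).comap_le
  have hXSle : mXS ≤ mΩ := (hX.prodMk hS).comap_le
  have hXA_self : Measurable[mXA] (fun ω => (X ω, A ω)) := measurable_iff_comap_le.mpr le_rfl
  have hXS_self : Measurable[mXS] (fun ω => (X ω, S ω)) := measurable_iff_comap_le.mpr le_rfl
  have hX_m0 : Measurable[m0] X := measurable_iff_comap_le.mpr le_rfl
  have hm0XA : m0 ≤ mXA := measurable_iff_comap_le.mp (measurable_fst.comp hXA_self)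
  have hm0XS : m0 ≤ mXS := measurable_iff_comap_le.mp (measurable_fst.comp hXS_self)
  -- the indicator I
  have hIbound : ∀ ω, ‖I ω‖ ≤ 1 := by
    intro ω; simp only [hIdef]; split <;> simp
  have hImeas : Measurable[mΩ] I :=
    Measurable.ite (hA (MeasurableSet.singleton a)) measurable_const measurable_const
  have hImeasXA : Measurable[mXA] I :=
    Measurable.ite ((measurable_snd.comp hXA_self) (MeasurableSet.singleton a))
      measurable_const measurable_const
  have hIint : Integrable I P := by
    have : Integrable (fun ω => I ω * (1 : ℝ)) P :=
      (integrable_const (1 : ℝ)).bdd_mul hImeas.aestronglyMeasurable (μ := P)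
        (Eventually.of_forall hIbound)
    simpa using this
  have hYint : Integrable Y P := hY.integrable one_le_two
  have hYpint : Integrable (Ypot a) P := (hYpot a).integrable one_le_two
  have hIY : Integrable (fun ω => I ω * Y ω) P :=
    hYint.bdd_mul hImeas.aestronglyMeasurable (μ := P) (Eventually.of_forall hIbound)
  have hIYp : Integrable (fun ω => I ω * Ypot a ω) P :=
    hYpint.bdd_mul hImeas.aestronglyMeasurable (μ := P) (Eventually.of_forall hIbound)
  have hIcond : Integrable (fun ω => I ω * condExp mXA P Y ω) P :=
    integrable_condExp.bdd_mul hImeas.aestronglyMeasurable (μ := P) (Eventually.of_forall hIbound)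
  have hμXI : Integrable (fun ω => μ (X ω) * I ω) P :=
    (hIcond.congr hμ).congr (Eventually.of_forall fun ω => mul_comm _ _)
  -- bound on E[I | mXS]
  have hg0 : 0 ≤ᵐ[P] condExp mXS P I :=
    condExp_nonneg (Eventually.of_forall fun ω => by
      simp only [hIdef]; split <;> norm_num)
  have hg1 : condExp mXS P I ≤ᵐ[P] condExp mXS P (fun _ => (1 : ℝ)) :=
    condExp_mono hIint (integrable_const 1)
      (Eventually.of_forall fun ω => by simp only [hIdef]; split <;> norm_num)
  rw [condExp_const hXSle] at hg1
  have hgbound : ∀ᵐ ω ∂P, ‖condExp mXS P I ω‖ ≤ 1 := by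
    filter_upwards [hg0, hg1] with ω h0 h1
    rw [Real.norm_eq_abs, abs_le]
    have h0' : (0:ℝ) ≤ condExp mXS P I ω := by simpa using h0
    have h1' : condExp mXS P I ω ≤ 1 := by simpa using h1
    constructor <;> linarith
  have hprod : Integrable (fun ω => condExp m0 P (Ypot a) ω * condExp mXS P I ω) P :=
    (integrable_condExp.bdd_mul
      (stronglyMeasurable_condExp.mono hXSle).aestronglyMeasurable
      hgbound).congr (Eventually.of_forall fun ω => mul_comm _ _)
  -- chain 1 : E[I·Y | m0] = μ(X)·η(X)
  have step1 : condExp m0 P (fun ω => I ω * Y ω) =ᵐ[P] fun ω => μ (X ω) * η (X ω) := by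
    calc condExp m0 P (fun ω => I ω * Y ω)
        =ᵐ[P] condExp m0 P (condExp mXA P (fun ω => I ω * Y ω)) :=
          (condExp_condExp_of_le hm0XA hXAle).symm
      _ =ᵐ[P] condExp m0 P (fun ω => I ω * condExp mXA P Y ω) :=
          condExp_congr_ae (condExp_mul_of_stronglyMeasurable_left hImeasXA.stronglyMeasurable hIY hYint)
      _ =ᵐ[P] condExp m0 P (fun ω => I ω * μ (X ω)) := condExp_congr_ae hμ
      _ =ᵐ[P] condExp m0 P (fun ω => μ (X ω) * I ω) := by
          apply condExp_congr_ae
          exact Eventually.of_forall fun ω => mul_comm _ _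
      _ =ᵐ[P] fun ω => μ (X ω) * condExp m0 P I ω :=
          condExp_mul_of_stronglyMeasurable_left (hμm.comp hX_m0).stronglyMeasurable hμXI hIint
      _ =ᵐ[P] fun ω => μ (X ω) * η (X ω) := by
          filter_upwards [hη] with ω h
          rw [← h]
  -- chain 2 : E[I·Y | m0] = E[Ypot a | m0]·η(X)
  have hcons : (fun ω => I ω * Y ω) =ᵐ[P] fun ω => I ω * Ypot a ω := by
    filter_upwards [hA1] with ω h
    by_cases hω : A ω = a
    · simp only [hIdef, hω, if_pos, h]
    · simp [hIdef, hω]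
  have step2 : condExp m0 P (fun ω => I ω * Y ω) =ᵐ[P]
      fun ω => condExp m0 P (Ypot a) ω * η (X ω) := by
    calc condExp m0 P (fun ω => I ω * Y ω)
        =ᵐ[P] condExp m0 P (fun ω => I ω * Ypot a ω) := condExp_congr_ae hcons
      _ =ᵐ[P] condExp m0 P (condExp mXS P (fun ω => I ω * Ypot a ω)) :=
          (condExp_condExp_of_le hm0XS hXSle).symm
      _ =ᵐ[P] condExp m0 P (fun ω => condExp mXS P (Ypot a) ω * condExp mXS P I ω) :=
          condExp_congr_ae hA2
      _ =ᵐ[P] condExp m0 P (fun ω => condExp m0 P (Ypot a) ω * condExp mXS P I ω) := by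
          apply condExp_congr_ae
          filter_upwards [hA4] with ω h
          rw [h]
      _ =ᵐ[P] fun ω => condExp m0 P (Ypot a) ω * condExp m0 P (condExp mXS P I) ω :=
          condExp_mul_of_stronglyMeasurable_left stronglyMeasurable_condExp hprod integrable_condExp
      _ =ᵐ[P] fun ω => condExp m0 P (Ypot a) ω * condExp m0 P I ω := by
          filter_upwards [condExp_condExp_of_le hm0XS hXSle (f := I)] with ω h
          rw [h]
      _ =ᵐ[P] fun ω => condExp m0 P (Ypot a) ω * η (X ω) := by
          filter_upwards [hη] with ω h
          rw [← h]
  have key : (fun ω => μ (X ω) * η (X ω)) =ᵐ[P]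
      fun ω => condExp m0 P (Ypot a) ω * η (X ω) := step1.symm.trans step2
  filter_upwards [key, hpos] with ω hk hp
  exact mul_right_cancel₀ (ne_of_gt hp) hk
end

section
/- The influence function Φ has mean zero: assume ℙ(X̃ = x̃ ∧ S = s) > 0 and η_a(X) ≥ ε a.s. for some ε > 0. Set κ := 1/ℙ(X̃ = x̃ ∧ S = s), φ := 𝔼[μ_a(X) | X̃ = x̃ ∧ S = s], and Φ := κ·[ 1{X̃ = x̃, S = s}·(μ_a(X) − φ) + 1{A = a, X̃ = x̃}·(q_s(X)/η_a(X))·(Y − μ_a(X)) ]. Then Φ is integrable and 𝔼[Φ] = 0. -/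
open MeasureTheory ProbabilityTheory

/-- the influence function Φ is integrable with mean zero. -/
theorem influence_function_mean_zero
    {Ω 𝒜 𝒮 𝒯 𝒳 : Type*}
    [MeasurableSpace Ω]
    [Fintype 𝒜] [Nonempty 𝒜] [DecidableEq 𝒜] [MeasurableSpace 𝒜] [DiscreteMeasurableSpace 𝒜]
    [Fintype 𝒮] [Nonempty 𝒮] [DecidableEq 𝒮] [MeasurableSpace 𝒮] [DiscreteMeasurableSpace 𝒮]
    [Fintype 𝒯] [Nonempty 𝒯] [DecidableEq 𝒯] [MeasurableSpace 𝒯] [DiscreteMeasurableSpace 𝒯]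
    [MeasurableSpace 𝒳]
    (P : Measure Ω) [IsProbabilityMeasure P]
    (A : Ω → 𝒜) (S : Ω → 𝒮) (X : Ω → 𝒳) (g : 𝒳 → 𝒯) (Y : Ω → ℝ)
    (hA : Measurable A) (hS : Measurable S) (hX : Measurable X) (hg : Measurable g)
    (hY : MemLp Y 2 P)
    (a : 𝒜) (s : 𝒮) (xt : 𝒯)
    (η q μ : 𝒳 → ℝ) (hηm : Measurable η) (hqm : Measurable q) (hμm : Measurable μ)
    -- propensity score: η_a(X) = E[1{A=a} | σ(X)] a.s.
    (hη : (fun ω => η (X ω)) =ᵐ[P]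
      condExp (sigmaGen X) P (fun ω => if A ω = a then (1 : ℝ) else 0))
    -- source model: q_s(X) = E[1{S=s} | σ(X)] a.s.
    (hq : (fun ω => q (X ω)) =ᵐ[P]
      condExp (sigmaGen X) P (fun ω => if S ω = s then (1 : ℝ) else 0))
    -- outcome regression: 1{A=a}·E[Y | σ(X,A)] = 1{A=a}·μ_a(X) a.s.
    (hμ : (fun ω => (if A ω = a then (1 : ℝ) else 0) *
        condExp (sigmaGen (fun ω => (X ω, A ω))) P Y ω) =ᵐ[P]
      (fun ω => (if A ω = a then (1 : ℝ) else 0) * μ (X ω)))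
    (ε : ℝ) (hε : 0 < ε) (hεη : ∀ᵐ ω ∂P, ε ≤ η (X ω))
    (hE : 0 < P {ω | g (X ω) = xt ∧ S ω = s})
    (κ φ : ℝ) (Φ : Ω → ℝ)
    (hκ : κ = ((P {ω | g (X ω) = xt ∧ S ω = s}).toReal)⁻¹)
    (hφ : φ = (∫ ω in {ω | g (X ω) = xt ∧ S ω = s}, μ (X ω) ∂P) / (P {ω | g (X ω) = xt ∧ S ω = s}).toReal)
    (hΦ : Φ = fun ω => κ *
      ((if g (X ω) = xt ∧ S ω = s then (1 : ℝ) else 0) * (μ (X ω) - φ) +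
        (if A ω = a ∧ g (X ω) = xt then (1 : ℝ) else 0) * (q (X ω) / η (X ω)) *
          (Y ω - μ (X ω)))) :
    Integrable Φ P ∧ ∫ ω, Φ ω ∂P = 0 := by
  classical
  have hm : sigmaGen X ≤ ‹MeasurableSpace Ω› := hX.comap_le
  have hm2 : sigmaGen (fun ω => (X ω, A ω)) ≤ ‹MeasurableSpace Ω› := (hX.prodMk hA).comap_le
  have hYint : Integrable Y P := hY.integrable one_le_two
  -- the indicator of A = a
  have hIam : Measurable (fun ω => if A ω = a then (1:ℝ) else 0) :=
    Measurable.ite (hA (measurableSet_singleton a)) measurable_const measurable_const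
  have hIaInt : Integrable (fun ω => if A ω = a then (1:ℝ) else 0) P := by
    refine Integrable.mono' (integrable_const (1:ℝ)) hIam.aestronglyMeasurable ?_
    exact Filter.Eventually.of_forall fun ω => by by_cases h : A ω = a <;> simp [h]
  have hIsInt : Integrable (fun ω => if S ω = s then (1:ℝ) else 0) P := by
    refine Integrable.mono' (integrable_const (1:ℝ))
      (Measurable.ite (hS (measurableSet_singleton s)) measurable_const
        measurable_const).aestronglyMeasurable ?_
    exact Filter.Eventually.of_forall fun ω => by by_cases h : S ω = s <;> simp [h]
  have hηint : Integrable (fun ω => η (X ω)) P := integrable_condExp.congr hη.symm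
  -- pull-out lemma over σ(X)
  have pull : ∀ (f : 𝒳 → ℝ) (c : ℝ), Measurable f → (∀ x, ‖f x‖ ≤ c) →
      ∫ ω, f (X ω) * (if A ω = a then (1:ℝ) else 0) ∂P = ∫ ω, f (X ω) * η (X ω) ∂P := by
    intro f c hf hfc
    have hfXsm : StronglyMeasurable[sigmaGen X] (fun ω => f (X ω)) :=
      (hf.comp (comap_measurable X)).stronglyMeasurable
    have hprod : Integrable (fun ω => f (X ω) * (if A ω = a then (1:ℝ) else 0)) P :=
      hIaInt.bdd_mul (hf.comp hX).aestronglyMeasurable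
        (Filter.Eventually.of_forall fun ω => hfc _)
    have h1 := condExp_mul_of_stronglyMeasurable_left (m := sigmaGen X) (μ := P) hfXsm hprod hIaInt
    calc ∫ ω, f (X ω) * (if A ω = a then (1:ℝ) else 0) ∂P
        = ∫ ω, (condExp (sigmaGen X) P
            (fun ω => f (X ω) * (if A ω = a then (1:ℝ) else 0))) ω ∂P :=
          (integral_condExp hm).symm
      _ = ∫ ω, f (X ω) * (condExp (sigmaGen X) P (fun ω => if A ω = a then (1:ℝ) else 0)) ω ∂P :=
          integral_congr_ae h1
      _ = ∫ ω, f (X ω) * η (X ω) ∂P := by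
          refine integral_congr_ae ?_
          filter_upwards [hη] with ω h
          rw [h]
  -- q bounds
  have hq0 : ∀ᵐ ω ∂P, 0 ≤ q (X ω) := by
    have h0 : (0 : Ω → ℝ) ≤ᵐ[P] condExp (sigmaGen X) P (fun ω => if S ω = s then (1:ℝ) else 0) :=
      condExp_nonneg (Filter.Eventually.of_forall fun ω => by by_cases h : S ω = s <;> simp [h])
    filter_upwards [hq, h0] with ω h1 h2
    rw [h1]; exact h2
  have hq1 : ∀ᵐ ω ∂P, q (X ω) ≤ 1 := by
    have hle : condExp (sigmaGen X) P (fun ω => if S ω = s then (1:ℝ) else 0) ≤ᵐ[P]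
        condExp (sigmaGen X) P (fun _ => (1:ℝ)) :=
      condExp_mono hIsInt (integrable_const 1)
        (Filter.Eventually.of_forall fun ω => by by_cases h : S ω = s <;> simp [h])
    have hc := condExp_const (μ := P) hm (1:ℝ)
    filter_upwards [hq, hle] with ω h1 h2
    rw [h1]; exact h2.trans_eq (congrFun hc ω)
  -- integrability of 1{A=a} μ(X)
  have hIaμ : Integrable (fun ω => (if A ω = a then (1:ℝ) else 0) * μ (X ω)) P := by
    refine Integrable.congr ?_ hμ
    exact integrable_condExp.bdd_mul (c := 1) hIam.aestronglyMeasurable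
      (Filter.Eventually.of_forall fun ω => by by_cases h : A ω = a <;> simp [h])
  -- integrability of μ(X)
  set Cb := ∫ ω, |(if A ω = a then (1:ℝ) else 0) * μ (X ω)| ∂P with hCb
  have hfn_meas : ∀ n : ℕ, Measurable (fun x => min |μ x| (n:ℝ)) :=
    fun n => hμm.abs.min measurable_const
  have hfn_nonneg : ∀ (n : ℕ) (x : 𝒳), 0 ≤ min |μ x| (n:ℝ) :=
    fun n x => le_min (abs_nonneg _) (Nat.cast_nonneg n)
  have hfn_bdd : ∀ (n : ℕ) (x : 𝒳), ‖min |μ x| (n:ℝ)‖ ≤ (n:ℝ) := fun n x => by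
    rw [Real.norm_eq_abs, abs_of_nonneg (hfn_nonneg n x)]
    exact min_le_right _ _
  have hfnint : ∀ n : ℕ, Integrable (fun ω => min |μ (X ω)| (n:ℝ)) P := fun n =>
    Integrable.mono' (integrable_const (n:ℝ))
      ((hfn_meas n).comp hX).aestronglyMeasurable
      (Filter.Eventually.of_forall fun ω => hfn_bdd n _)
  have hfn_le : ∀ n : ℕ, ε * ∫ ω, min |μ (X ω)| (n:ℝ) ∂P ≤ Cb := by
    intro n
    have h1 : ∫ ω, min |μ (X ω)| (n:ℝ) * ε ∂P ≤ ∫ ω, min |μ (X ω)| (n:ℝ) * η (X ω) ∂P := by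
      refine integral_mono_ae ((hfnint n).mul_const ε)
        (hηint.bdd_mul ((hfn_meas n).comp hX).aestronglyMeasurable
          (Filter.Eventually.of_forall fun ω => hfn_bdd n _)) ?_
      filter_upwards [hεη] with ω hω
      exact mul_le_mul_of_nonneg_left hω (hfn_nonneg n _)
    have h2 : ∫ ω, min |μ (X ω)| (n:ℝ) * η (X ω) ∂P
        = ∫ ω, min |μ (X ω)| (n:ℝ) * (if A ω = a then (1:ℝ) else 0) ∂P :=
      (pull _ n (hfn_meas n) (hfn_bdd n)).symm
    have h3 : ∫ ω, min |μ (X ω)| (n:ℝ) * (if A ω = a then (1:ℝ) else 0) ∂P ≤ Cb := by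
      refine integral_mono_ae
        (hIaInt.bdd_mul ((hfn_meas n).comp hX).aestronglyMeasurable
          (Filter.Eventually.of_forall fun ω => hfn_bdd n _)) hIaμ.abs ?_
      refine Filter.Eventually.of_forall fun ω => ?_
      by_cases h : A ω = a
      · simpa [h] using min_le_left |μ (X ω)| (n:ℝ)
      · simp [h]
    calc ε * ∫ ω, min |μ (X ω)| (n:ℝ) ∂P = ∫ ω, min |μ (X ω)| (n:ℝ) * ε ∂P := by
          rw [integral_mul_const, mul_comm]
      _ ≤ Cb := (h1.trans_eq h2).trans h3
  have hμint : Integrable (fun ω => μ (X ω)) P := by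
    refine ⟨(hμm.comp hX).aestronglyMeasurable, ?_⟩
    have key : ∀ ω : Ω, (⨆ n : ℕ, ENNReal.ofReal (min |μ (X ω)| (n:ℝ)))
        = ‖μ (X ω)‖ₑ := by
      intro ω
      rw [← Real.enorm_abs, Real.enorm_eq_ofReal (abs_nonneg _)]
      refine le_antisymm (iSup_le fun n => ENNReal.ofReal_le_ofReal (min_le_left _ _)) ?_
      obtain ⟨n, hn⟩ := exists_nat_ge |μ (X ω)|
      calc ENNReal.ofReal |μ (X ω)| = ENNReal.ofReal (min |μ (X ω)| (n:ℝ)) := by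
            rw [min_eq_left hn]
        _ ≤ ⨆ n : ℕ, ENNReal.ofReal (min |μ (X ω)| (n:ℝ)) :=
            le_iSup (fun n : ℕ => ENNReal.ofReal (min |μ (X ω)| (n:ℝ))) n
    rw [HasFiniteIntegral]
    calc ∫⁻ ω, ‖μ (X ω)‖ₑ ∂P
        = ∫⁻ ω, ⨆ n : ℕ, ENNReal.ofReal (min |μ (X ω)| (n:ℝ)) ∂P :=
          lintegral_congr fun ω => (key ω).symm
      _ = ⨆ n : ℕ, ∫⁻ ω, ENNReal.ofReal (min |μ (X ω)| (n:ℝ)) ∂P := by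
          refine lintegral_iSup (fun n => ENNReal.measurable_ofReal.comp
            ((hfn_meas n).comp hX)) ?_
          intro i j hij ω
          exact ENNReal.ofReal_le_ofReal (min_le_min le_rfl (Nat.cast_le.2 hij))
      _ = ⨆ n : ℕ, ENNReal.ofReal (∫ ω, min |μ (X ω)| (n:ℝ) ∂P) := by
          refine iSup_congr fun n => ?_
          exact (ofReal_integral_eq_lintegral_ofReal (hfnint n)
            (Filter.Eventually.of_forall fun ω => hfn_nonneg n _)).symm
      _ ≤ ENNReal.ofReal (Cb / ε) := by
          refine iSup_le fun n => ENNReal.ofReal_le_ofReal ?_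
          rw [le_div_iff₀ hε, mul_comm]
          exact hfn_le n
      _ < ⊤ := ENNReal.ofReal_lt_top
  -- measurability of the event E
  have hEm : MeasurableSet {ω | g (X ω) = xt ∧ S ω = s} := by
    have h1 : MeasurableSet {ω | g (X ω) = xt} := (hg.comp hX) (measurableSet_singleton xt)
    have h2 : MeasurableSet {ω | S ω = s} := hS (measurableSet_singleton s)
    exact h1.inter h2
  have hpE0 : (P {ω | g (X ω) = xt ∧ S ω = s}).toReal ≠ 0 :=
    (ENNReal.toReal_pos hE.ne' (measure_ne_top _ _)).ne'
  -- term T1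
  have hT1eq : (fun ω => (if g (X ω) = xt ∧ S ω = s then (1:ℝ) else 0) * (μ (X ω) - φ))
      = Set.indicator {ω | g (X ω) = xt ∧ S ω = s} (fun ω => μ (X ω) - φ) := by
    funext ω
    by_cases h : g (X ω) = xt ∧ S ω = s <;>
      simp [Set.indicator_apply, Set.mem_setOf_eq, h]
  have hT1int : Integrable
      (fun ω => (if g (X ω) = xt ∧ S ω = s then (1:ℝ) else 0) * (μ (X ω) - φ)) P := by
    rw [hT1eq]
    exact (hμint.sub (integrable_const φ)).indicator hEm
  have hT1zero : ∫ ω, (if g (X ω) = xt ∧ S ω = s then (1:ℝ) else 0) * (μ (X ω) - φ) ∂P = 0 := by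
    rw [hT1eq, integral_indicator hEm]
    rw [integral_sub hμint.integrableOn (integrableOn_const (measure_ne_top _ _))]
    rw [setIntegral_const, smul_eq_mul, measureReal_def, hφ, mul_comm,
      div_mul_cancel₀ _ hpE0, sub_self]
  -- term T2
  set W : Ω → ℝ := fun ω =>
    (if A ω = a ∧ g (X ω) = xt then (1:ℝ) else 0) * (q (X ω) / η (X ω)) with hWdef
  have hwm : Measurable (fun p : 𝒳 × 𝒜 =>
      (if p.2 = a ∧ g p.1 = xt then (1:ℝ) else 0) * (q p.1 / η p.1)) := by
    refine Measurable.mul ?_ ((hqm.comp measurable_fst).div (hηm.comp measurable_fst))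
    refine Measurable.ite ?_ measurable_const measurable_const
    exact (measurable_snd (measurableSet_singleton a)).inter
      ((hg.comp measurable_fst) (measurableSet_singleton xt))
  have hWmeas : Measurable W := hwm.comp (hX.prodMk hA)
  have hWsm : StronglyMeasurable[sigmaGen (fun ω => (X ω, A ω))] W :=
    (hwm.comp (comap_measurable (fun ω => (X ω, A ω)))).stronglyMeasurable
  have hWbdd : ∀ᵐ ω ∂P, ‖W ω‖ ≤ ε⁻¹ := by
    filter_upwards [hq0, hq1, hεη] with ω h0 h1 hηε
    have hηpos : 0 < η (X ω) := lt_of_lt_of_le hε hηε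
    by_cases hc : A ω = a ∧ g (X ω) = xt
    · simp only [hWdef]
      rw [if_pos hc, one_mul, Real.norm_eq_abs, abs_of_nonneg (div_nonneg h0 hηpos.le)]
      exact (div_le_div₀ zero_le_one h1 hε hηε).trans_eq (one_div ε)
    · simp [hWdef, hc, inv_nonneg, hε.le]
  have hWY : Integrable (fun ω => W ω * Y ω) P :=
    hYint.bdd_mul hWmeas.aestronglyMeasurable hWbdd
  have hWμ : Integrable (fun ω => W ω * μ (X ω)) P :=
    hμint.bdd_mul hWmeas.aestronglyMeasurable hWbdd
  have hT2int : Integrable (fun ω => W ω * (Y ω - μ (X ω))) P :=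
    (hYint.sub hμint).bdd_mul hWmeas.aestronglyMeasurable hWbdd
  have hWYeq : ∫ ω, W ω * Y ω ∂P = ∫ ω, W ω * μ (X ω) ∂P := by
    have h1 : condExp (sigmaGen (fun ω => (X ω, A ω))) P (W * Y) =ᵐ[P]
        W * condExp (sigmaGen (fun ω => (X ω, A ω))) P Y :=
      condExp_mul_of_stronglyMeasurable_left hWsm hWY hYint
    calc ∫ ω, W ω * Y ω ∂P
        = ∫ ω, (condExp (sigmaGen (fun ω => (X ω, A ω))) P (W * Y)) ω ∂P :=
          (integral_condExp hm2).symm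
      _ = ∫ ω, W ω * (condExp (sigmaGen (fun ω => (X ω, A ω))) P Y) ω ∂P :=
          integral_congr_ae h1
      _ = ∫ ω, W ω * μ (X ω) ∂P := by
          refine integral_congr_ae ?_
          filter_upwards [hμ] with ω h
          by_cases hc : A ω = a ∧ g (X ω) = xt
          · simp only [hc.1, if_pos, one_mul] at h
            rw [h]
          · simp [hWdef, hc]
  have hT2zero : ∫ ω, W ω * (Y ω - μ (X ω)) ∂P = 0 := by
    have : (fun ω => W ω * (Y ω - μ (X ω)))
        = fun ω => W ω * Y ω - W ω * μ (X ω) := by funext ω; ring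
    rw [this, integral_sub hWY hWμ, hWYeq, sub_self]
  -- assembly
  have hΦeq : Φ = fun ω => κ *
      ((if g (X ω) = xt ∧ S ω = s then (1:ℝ) else 0) * (μ (X ω) - φ) +
        W ω * (Y ω - μ (X ω))) := hΦ
  constructor
  · rw [hΦeq]
    exact (hT1int.add hT2int).const_mul κ
  · rw [hΦeq]
    rw [integral_const_mul, integral_add hT1int hT2int, hT1zero, hT2zero]
    ring
end

section
/- Second-order (doubly robust) bias identity for the internal-population estimator: assume ℙ(X̃ = x̃ ∧ S = s) > 0 and η_a(X) ≥ ε a.s. for some ε > 0; set κ := 1/ℙ(X̃ = x̃ ∧ S = s) and φ := 𝔼[μ_a(X) | X̃ = x̃ ∧ S = s]. Let μ', η', q' : 𝒳 → ℝ be measurable with η'(X) ≥ ε a.s., |q'(X)| ≤ 1 a.s., μ'(X) square-integrable, and let κ' ∈ ℝ. Define G := κ'·[ 1{X̃ = x̃, S = s}·μ'(X) + 1{A = a, X̃ = x̃}·(q'(X)/η'(X))·(Y − μ'(X)) ]. Then 𝔼[G] − φ = κ'·𝔼[ 1{X̃ = x̃} · { (q_s(X) − q'(X)) + q'(X)·(1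 − η_a(X)/η'(X)) } · (μ'(X) − μ_a(X)) ] + (κ'/κ − 1)·φ. -/
open MeasureTheory ProbabilityTheory

lemma sm_comp {Ω 𝒳 : Type*} [MeasurableSpace Ω] [MeasurableSpace 𝒳] {F : 𝒳 → ℝ}
    (hF : Measurable F) (X : Ω → 𝒳) :
    StronglyMeasurable[sigmaGen X] (fun ω => F (X ω)) :=
  (hF.comp (measurable_iff_comap_le.mpr le_rfl)).stronglyMeasurable

lemma tower_mul {Ω : Type*} {m : MeasurableSpace Ω} {m0 : MeasurableSpace Ω}
    (P : Measure Ω) [IsFiniteMeasure P] (hm : m ≤ m0) {f g : Ω → ℝ}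
    (hf : StronglyMeasurable[m] f) (hfg : Integrable (fun ω => f ω * g ω) P)
    (hg : Integrable g P) :
    ∫ ω, f ω * g ω ∂P = ∫ ω, f ω * (P[g|m]) ω ∂P := by
  have hfg' : Integrable (f * g) P := hfg
  have h2 : P[f * g|m] =ᵐ[P] f * P[g|m] := condExp_mul_of_stronglyMeasurable_left hf hfg' hg
  calc ∫ ω, f ω * g ω ∂P = ∫ ω, (f * g) ω ∂P := rfl
    _ = ∫ ω, (P[f * g|m]) ω ∂P := (integral_condExp hm (f := f * g) (μ := P)).symm
    _ = ∫ ω, (f * P[g|m]) ω ∂P := integral_congr_ae h2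
    _ = _ := rfl

/-- condexp of a [0,1]-valued indicator is a.e. in [-1,1]. -/
lemma condexp_indicator_abs_le {Ω : Type*} {m : MeasurableSpace Ω} {m0 : MeasurableSpace Ω}
    (P : Measure Ω) [IsProbabilityMeasure P] (hm : m ≤ m0) {f : Ω → ℝ}
    (hf : Integrable f P) (h0 : ∀ ω, 0 ≤ f ω) (h1 : ∀ ω, f ω ≤ 1) :
    ∀ᵐ ω ∂P, |(P[f|m]) ω| ≤ 1 := by
  have hnn : 0 ≤ᵐ[P] P[f|m] := condExp_nonneg (Filter.Eventually.of_forall h0)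
  have hub : P[f|m] ≤ᵐ[P] P[(fun _ => (1 : ℝ))|m] :=
    condExp_mono hf (integrable_const 1) (Filter.Eventually.of_forall h1)
  rw [condExp_const hm (1 : ℝ)] at hub
  filter_upwards [hnn, hub] with ω h₀ h₁
  have h₀' : (0 : ℝ) ≤ (P[f|m]) ω := h₀
  rw [abs_le]; exact ⟨by linarith, h₁⟩

/-- second-order (doubly robust) bias identity, internal population. -/
theorem second_order_bias_identity_internal
    {Ω 𝒜 𝒮 𝒯 𝒳 : Type*}
    [MeasurableSpace Ω]
    [Fintype 𝒜] [Nonempty 𝒜] [DecidableEq 𝒜] [MeasurableSpace 𝒜] [DiscreteMeasurableSpace 𝒜]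
    [Fintype 𝒮] [Nonempty 𝒮] [DecidableEq 𝒮] [MeasurableSpace 𝒮] [DiscreteMeasurableSpace 𝒮]
    [Fintype 𝒯] [Nonempty 𝒯] [DecidableEq 𝒯] [MeasurableSpace 𝒯] [DiscreteMeasurableSpace 𝒯]
    [MeasurableSpace 𝒳]
    (P : Measure Ω) [IsProbabilityMeasure P]
    (A : Ω → 𝒜) (S : Ω → 𝒮) (X : Ω → 𝒳) (g : 𝒳 → 𝒯) (Y : Ω → ℝ)
    (hA : Measurable A) (hS : Measurable S) (hX : Measurable X) (hg : Measurable g)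
    (hY : MemLp Y 2 P)
    (a : 𝒜) (s : 𝒮) (xt : 𝒯)
    (η q μ : 𝒳 → ℝ) (hηm : Measurable η) (hqm : Measurable q) (hμm : Measurable μ)
    -- propensity score: η_a(X) = E[1{A=a} | σ(X)] a.s.
    (hη : (fun ω => η (X ω)) =ᵐ[P]
      condExp (sigmaGen X) P (fun ω => if A ω = a then (1 : ℝ) else 0))
    -- source model: q_s(X) = E[1{S=s} | σ(X)] a.s.
    (hq : (fun ω => q (X ω)) =ᵐ[P]
      condExp (sigmaGen X) P (fun ω => if S ω = s then (1 : ℝ) else 0))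
    -- outcome regression: 1{A=a}·E[Y | σ(X,A)] = 1{A=a}·μ_a(X) a.s.
    (hμ : (fun ω => (if A ω = a then (1 : ℝ) else 0) *
        condExp (sigmaGen (fun ω => (X ω, A ω))) P Y ω) =ᵐ[P]
      (fun ω => (if A ω = a then (1 : ℝ) else 0) * μ (X ω)))
    (ε : ℝ) (hε : 0 < ε) (hεη : ∀ᵐ ω ∂P, ε ≤ η (X ω))
    (hE : 0 < P {ω | g (X ω) = xt ∧ S ω = s})
    (κ φ : ℝ)
    (hκ : κ = ((P {ω | g (X ω) = xt ∧ S ω = s}).toReal)⁻¹)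
    (hφ : φ = (∫ ω in {ω | g (X ω) = xt ∧ S ω = s}, μ (X ω) ∂P) / (P {ω | g (X ω) = xt ∧ S ω = s}).toReal)
    (μ' η' q' : 𝒳 → ℝ) (hμ'm : Measurable μ') (hη'm : Measurable η') (hq'm : Measurable q')
    (hη' : ∀ᵐ ω ∂P, ε ≤ η' (X ω)) (hq' : ∀ᵐ ω ∂P, |q' (X ω)| ≤ 1)
    (hμ'L2 : MemLp (fun ω => μ' (X ω)) 2 P)
    (κ' : ℝ) (G : Ω → ℝ)
    (hG : G = fun ω => κ' *
      ((if g (X ω) = xt ∧ S ω = s then (1 : ℝ) else 0) * μ' (X ω) +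
        (if A ω = a ∧ g (X ω) = xt then (1 : ℝ) else 0) * (q' (X ω) / η' (X ω)) *
          (Y ω - μ' (X ω)))) :
    (∫ ω, G ω ∂P) - φ =
      κ' * (∫ ω, (if g (X ω) = xt then (1 : ℝ) else 0) *
          ((q (X ω) - q' (X ω)) + q' (X ω) * (1 - η (X ω) / η' (X ω))) *
          (μ' (X ω) - μ (X ω)) ∂P) +
        (κ' / κ - 1) * φ := by
  classical
  -- basic measurability
  have hm1 : sigmaGen X ≤ ‹MeasurableSpace Ω› := measurable_iff_comap_le.mp hX
  have hm2 : sigmaGen (fun ω => (X ω, A ω)) ≤ ‹MeasurableSpace Ω› :=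
    measurable_iff_comap_le.mp (hX.prodMk hA)
  -- indicator functions
  set Tx : 𝒳 → ℝ := fun x => if g x = xt then 1 else 0 with hTx
  set IS : Ω → ℝ := fun ω => if S ω = s then 1 else 0 with hIS
  set IA : Ω → ℝ := fun ω => if A ω = a then 1 else 0 with hIA
  have hTxm : Measurable Tx := Measurable.ite (hg (measurableSet_singleton xt))
    measurable_const measurable_const
  have hISm : Measurable IS := Measurable.ite (hS (measurableSet_singleton s))
    measurable_const measurable_const
  have hIAm : Measurable IA := Measurable.ite (hA (measurableSet_singleton a))
    measurable_const measurable_const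
  have hIS01 : (∀ ω, 0 ≤ IS ω) ∧ (∀ ω, IS ω ≤ 1) := by
    constructor <;> intro ω <;> by_cases h : S ω = s <;> simp [hIS, h]
  have hIA01 : (∀ ω, 0 ≤ IA ω) ∧ (∀ ω, IA ω ≤ 1) := by
    constructor <;> intro ω <;> by_cases h : A ω = a <;> simp [hIA, h]
  have hTx1 : ∀ x, |Tx x| ≤ 1 := by
    intro x; by_cases h : g x = xt <;> simp [hTx, h]
  -- integrability of basic objects
  have hYi : Integrable Y P := hY.integrable one_le_two
  have hμ'i : Integrable (fun ω => μ' (X ω)) P := hμ'L2.integrable one_le_two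
  have hISi : Integrable IS P := by
    refine Integrable.mono' (integrable_const (1 : ℝ)) hISm.aestronglyMeasurable ?_
    filter_upwards with ω
    rw [Real.norm_eq_abs, abs_le]
    exact ⟨by linarith [hIS01.1 ω], hIS01.2 ω⟩
  have hIAi : Integrable IA P := by
    refine Integrable.mono' (integrable_const (1 : ℝ)) hIAm.aestronglyMeasurable ?_
    filter_upwards with ω
    rw [Real.norm_eq_abs, abs_le]
    exact ⟨by linarith [hIA01.1 ω], hIA01.2 ω⟩
  -- a.e. bounds on q and η
  have hqb : ∀ᵐ ω ∂P, |q (X ω)| ≤ 1 := by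
    have := condexp_indicator_abs_le (m := sigmaGen X) P hm1 hISi hIS01.1 hIS01.2
    filter_upwards [hq, this] with ω h1 h2
    rw [h1]; exact h2
  have hηb : ∀ᵐ ω ∂P, |η (X ω)| ≤ 1 := by
    have := condexp_indicator_abs_le (m := sigmaGen X) P hm1 hIAi hIA01.1 hIA01.2
    filter_upwards [hη, this] with ω h1 h2
    rw [h1]; exact h2
  have hη'pos : ∀ᵐ ω ∂P, 0 < η' (X ω) := by
    filter_upwards [hη'] with ω h; linarith
  have hratio : ∀ᵐ ω ∂P, |q' (X ω) / η' (X ω)| ≤ ε⁻¹ := by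
    filter_upwards [hq', hη'] with ω h1 h2
    rw [abs_div]
    have h3 : 0 < η' (X ω) := by linarith
    rw [abs_of_pos h3]
    calc |q' (X ω)| / η' (X ω) ≤ 1 / η' (X ω) := by gcongr
      _ ≤ 1 / ε := one_div_le_one_div_of_le hε h2
      _ = ε⁻¹ := one_div ε

  -- Integrability of μ ∘ X
  have hIAcondY : Integrable (fun ω => IA ω *
      (P[Y|sigmaGen (fun ω => (X ω, A ω))]) ω) P := by
    refine Integrable.bdd_mul (c := 1) integrable_condExp hIAm.aestronglyMeasurable ?_
    filter_upwards with ω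
    rw [Real.norm_eq_abs, abs_le]; exact ⟨by linarith [hIA01.1 ω], hIA01.2 ω⟩
  have hIAμ : Integrable (fun ω => μ (X ω) * IA ω) P :=
    (hIAcondY.congr hμ).congr (Filter.Eventually.of_forall fun ω => mul_comm _ _)
  have hμηint : Integrable (fun ω => μ (X ω) * η (X ω)) P := by
    have hpull : P[(fun ω => μ (X ω)) * IA|sigmaGen X]
        =ᵐ[P] (fun ω => μ (X ω)) * P[IA|sigmaGen X] :=
      condExp_mul_of_stronglyMeasurable_left (sm_comp hμm X) hIAμ hIAi
    have h2 : (fun ω => μ (X ω)) * P[IA|sigmaGen X] =ᵐ[P] fun ω => μ (X ω) * η (X ω) := by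
      filter_upwards [hη] with ω hω
      simp only [Pi.mul_apply]
      rw [← hω]
    exact integrable_condExp.congr (hpull.trans h2)
  have hμXi : Integrable (fun ω => μ (X ω)) P := by
    refine Integrable.mono' (hμηint.abs.const_mul ε⁻¹) (hμm.comp hX).aestronglyMeasurable ?_
    filter_upwards [hεη] with ω hω
    have h2 : 0 < η (X ω) := lt_of_lt_of_le hε hω
    rw [Real.norm_eq_abs]
    calc |μ (X ω)| = ε⁻¹ * (|μ (X ω)| * ε) := by field_simp
      _ ≤ ε⁻¹ * (|μ (X ω)| * η (X ω)) := by gcongr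
      _ = ε⁻¹ * |μ (X ω) * η (X ω)| := by rw [abs_mul, abs_of_pos h2]
  -- the three key integrals
  set J1 := ∫ ω, Tx (X ω) * q (X ω) * μ' (X ω) ∂P with hJ1def
  set J2 := ∫ ω, Tx (X ω) * (q' (X ω) / η' (X ω)) * (μ (X ω) - μ' (X ω)) * η (X ω) ∂P
    with hJ2def
  set J3 := ∫ ω, Tx (X ω) * q (X ω) * μ (X ω) ∂P with hJ3def
  have hJ1i : Integrable (fun ω => Tx (X ω) * q (X ω) * μ' (X ω)) P := by
    refine Integrable.bdd_mul (c := 1) hμ'i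
      ((hTxm.comp hX).mul (hqm.comp hX)).aestronglyMeasurable ?_
    filter_upwards [hqb] with ω h
    rw [Real.norm_eq_abs, abs_mul]
    have := hTx1 (X ω)
    nlinarith [abs_nonneg (q (X ω)), abs_nonneg (Tx (X ω))]
  have hJ3i : Integrable (fun ω => Tx (X ω) * q (X ω) * μ (X ω)) P := by
    refine Integrable.bdd_mul (c := 1) hμXi
      ((hTxm.comp hX).mul (hqm.comp hX)).aestronglyMeasurable ?_
    filter_upwards [hqb] with ω h
    rw [Real.norm_eq_abs, abs_mul]
    have := hTx1 (X ω)
    nlinarith [abs_nonneg (q (X ω)), abs_nonneg (Tx (X ω))]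
  have hJ2i : Integrable
      (fun ω => Tx (X ω) * (q' (X ω) / η' (X ω)) * (μ (X ω) - μ' (X ω)) * η (X ω)) P := by
    have h1 : Integrable
        (fun ω => (Tx (X ω) * (q' (X ω) / η' (X ω)) * η (X ω)) * (μ (X ω) - μ' (X ω))) P := by
      refine Integrable.bdd_mul (c := ε⁻¹) (hμXi.sub hμ'i)
        (((hTxm.comp hX).mul ((hq'm.comp hX).div (hη'm.comp hX))).mul
          (hηm.comp hX)).aestronglyMeasurable ?_
      filter_upwards [hratio, hηb] with ω h1 h2
      rw [Real.norm_eq_abs, abs_mul, abs_mul]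
      have h3 := hTx1 (X ω)
      have h4 : |Tx (X ω)| * |q' (X ω) / η' (X ω)| * |η (X ω)| ≤ 1 * ε⁻¹ * 1 :=
        mul_le_mul (mul_le_mul h3 h1 (abs_nonneg _) zero_le_one) h2 (abs_nonneg _)
          (by positivity)
      simpa using h4
    exact h1.congr (Filter.Eventually.of_forall fun ω => by ring)
  -- Step 1: first term of G
  have hF1i : Integrable
      (fun ω => (if g (X ω) = xt ∧ S ω = s then (1 : ℝ) else 0) * μ' (X ω)) P := by
    refine Integrable.bdd_mul (c := 1) hμ'i ?_ ?_
    · refine (Measurable.ite ?_ measurable_const measurable_const).aestronglyMeasurable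
      rw [Set.setOf_and]
      exact ((hg.comp hX) (measurableSet_singleton xt)).inter (hS (measurableSet_singleton s))
    · filter_upwards with ω
      by_cases h : g (X ω) = xt ∧ S ω = s <;> simp [h]
  have eF1 : ∫ ω, (if g (X ω) = xt ∧ S ω = s then (1 : ℝ) else 0) * μ' (X ω) ∂P = J1 := by
    have hint : Integrable (fun ω => (Tx (X ω) * μ' (X ω)) * IS ω) P := by
      have h1 : Integrable (fun ω => (Tx (X ω) * IS ω) * μ' (X ω)) P := by
        refine Integrable.bdd_mul (c := 1) hμ'i
          ((hTxm.comp hX).mul hISm).aestronglyMeasurable ?_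
        filter_upwards with ω
        rw [Real.norm_eq_abs, abs_mul]
        have h3 := hTx1 (X ω)
        have h4 : |IS ω| ≤ 1 := by rw [abs_le]; exact ⟨by linarith [hIS01.1 ω], hIS01.2 ω⟩
        nlinarith [abs_nonneg (IS ω), abs_nonneg (Tx (X ω))]
      exact h1.congr (Filter.Eventually.of_forall fun ω => by ring)
    calc ∫ ω, (if g (X ω) = xt ∧ S ω = s then (1 : ℝ) else 0) * μ' (X ω) ∂P
        = ∫ ω, (Tx (X ω) * μ' (X ω)) * IS ω ∂P := by
          refine integral_congr_ae (Filter.Eventually.of_forall fun ω => ?_)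
          by_cases h1 : g (X ω) = xt <;> by_cases h2 : S ω = s <;>
            simp [hTx, hIS, h1, h2]
      _ = ∫ ω, (Tx (X ω) * μ' (X ω)) * (P[IS|sigmaGen X]) ω ∂P :=
          tower_mul P hm1 (f := fun ω => Tx (X ω) * μ' (X ω)) (g := IS)
            (sm_comp (hTxm.mul hμ'm) X) hint hISi
      _ = J1 := by
          rw [hJ1def]
          refine integral_congr_ae ?_
          filter_upwards [hq] with ω hω
          rw [← hω]; ring
  -- Step 2: second term of G
  have hF2i : Integrable (fun ω => (if A ω = a ∧ g (X ω) = xt then (1 : ℝ) else 0) *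
      (q' (X ω) / η' (X ω)) * (Y ω - μ' (X ω))) P := by
    refine Integrable.bdd_mul (c := ε⁻¹) (hYi.sub hμ'i) ?_ ?_
    · refine ((Measurable.ite ?_ measurable_const measurable_const).mul
        ((hq'm.comp hX).div (hη'm.comp hX))).aestronglyMeasurable
      rw [Set.setOf_and]
      exact (hA (measurableSet_singleton a)).inter ((hg.comp hX) (measurableSet_singleton xt))
    · filter_upwards [hratio] with ω h1
      rw [Real.norm_eq_abs, abs_mul]
      have h2 : |if A ω = a ∧ g (X ω) = xt then (1 : ℝ) else 0| ≤ 1 := by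
        by_cases h : A ω = a ∧ g (X ω) = xt <;> simp [h]
      have h5 : |if A ω = a ∧ g (X ω) = xt then (1 : ℝ) else 0| * |q' (X ω) / η' (X ω)|
          ≤ 1 * ε⁻¹ := mul_le_mul h2 h1 (abs_nonneg _) zero_le_one
      simpa using h5
  have eF2 : ∫ ω, (if A ω = a ∧ g (X ω) = xt then (1 : ℝ) else 0) *
      (q' (X ω) / η' (X ω)) * (Y ω - μ' (X ω)) ∂P = J2 := by
    set h0 : Ω → ℝ := fun ω => IA ω * (Tx (X ω) * (q' (X ω) / η' (X ω))) with hh0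
    have h0m : Measurable h0 :=
      hIAm.mul ((hTxm.comp hX).mul ((hq'm.comp hX).div (hη'm.comp hX)))
    have h0b : ∀ᵐ ω ∂P, ‖h0 ω‖ ≤ ε⁻¹ := by
      filter_upwards [hratio] with ω h1
      rw [hh0, Real.norm_eq_abs, abs_mul, abs_mul]
      have h3 := hTx1 (X ω)
      have h4 : |IA ω| ≤ 1 := by rw [abs_le]; exact ⟨by linarith [hIA01.1 ω], hIA01.2 ω⟩
      have h5 : |IA ω| * (|Tx (X ω)| * |q' (X ω) / η' (X ω)|) ≤ 1 * (1 * ε⁻¹) :=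
        mul_le_mul h4 (mul_le_mul h3 h1 (abs_nonneg _) zero_le_one) (by positivity)
          zero_le_one
      simpa using h5
    have smh0 : StronglyMeasurable[sigmaGen (fun ω => (X ω, A ω))] h0 := by
      have hΦ : Measurable (fun p : 𝒳 × 𝒜 =>
          (if p.2 = a then (1 : ℝ) else 0) * (Tx p.1 * (q' p.1 / η' p.1))) :=
        (Measurable.ite (measurable_snd (measurableSet_singleton a)) measurable_const
          measurable_const).mul ((hTxm.comp measurable_fst).mul
            ((hq'm.comp measurable_fst).div (hη'm.comp measurable_fst)))
      exact (hΦ.comp (measurable_iff_comap_le.mpr le_rfl)).stronglyMeasurable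
    have hInt2a : Integrable (fun ω => h0 ω * (Y ω - μ' (X ω))) P :=
      Integrable.bdd_mul (hYi.sub hμ'i) h0m.aestronglyMeasurable h0b
    have hsub : P[(fun ω => Y ω - μ' (X ω))|sigmaGen (fun ω => (X ω, A ω))]
        =ᵐ[P] fun ω => (P[Y|sigmaGen (fun ω => (X ω, A ω))]) ω - μ' (X ω) := by
      have h1 := condExp_sub (m := sigmaGen (fun ω => (X ω, A ω))) (μ := P) hYi hμ'i
      have h2 : P[(fun ω => μ' (X ω))|sigmaGen (fun ω => (X ω, A ω))]
          = fun ω => μ' (X ω) := by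
        refine condExp_of_stronglyMeasurable hm2 ?_ hμ'i
        have hΦ : Measurable (fun p : 𝒳 × 𝒜 => μ' p.1) := hμ'm.comp measurable_fst
        exact (hΦ.comp (measurable_iff_comap_le.mpr le_rfl)).stronglyMeasurable
      filter_upwards [h1] with ω hω
      rw [show (fun ω => Y ω - μ' (X ω)) = Y - fun ω => μ' (X ω) from rfl, hω,
        Pi.sub_apply, h2]
    have hIntK : Integrable (fun ω =>
        (Tx (X ω) * (q' (X ω) / η' (X ω)) * (μ (X ω) - μ' (X ω))) * IA ω) P := by
      have h1 : Integrable (fun ω => h0 ω * (μ (X ω) - μ' (X ω))) P :=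
        Integrable.bdd_mul (hμXi.sub hμ'i) h0m.aestronglyMeasurable h0b
      refine h1.congr (Filter.Eventually.of_forall fun ω => ?_)
      rw [hh0]; ring
    calc ∫ ω, (if A ω = a ∧ g (X ω) = xt then (1 : ℝ) else 0) *
          (q' (X ω) / η' (X ω)) * (Y ω - μ' (X ω)) ∂P
        = ∫ ω, h0 ω * (Y ω - μ' (X ω)) ∂P := by
          refine integral_congr_ae (Filter.Eventually.of_forall fun ω => ?_)
          rw [hh0, hIA, hTx]
          by_cases h1 : A ω = a <;> by_cases h2 : g (X ω) = xt <;> simp [h1, h2]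
      _ = ∫ ω, h0 ω * (P[(fun ω => Y ω - μ' (X ω))|sigmaGen (fun ω => (X ω, A ω))]) ω ∂P :=
          tower_mul P hm2 (f := h0) (g := fun ω => Y ω - μ' (X ω)) smh0 hInt2a
            (hYi.sub hμ'i)
      _ = ∫ ω, (Tx (X ω) * (q' (X ω) / η' (X ω)) * (μ (X ω) - μ' (X ω))) * IA ω ∂P := by
          refine integral_congr_ae ?_
          filter_upwards [hsub, hμ] with ω h1 h2
          rw [h1, hh0]
          have h3 : IA ω * (P[Y|sigmaGen (fun ω => (X ω, A ω))]) ω = IA ω * μ (X ω) := h2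
          calc IA ω * (Tx (X ω) * (q' (X ω) / η' (X ω))) *
                ((P[Y|sigmaGen (fun ω => (X ω, A ω))]) ω - μ' (X ω))
              = Tx (X ω) * (q' (X ω) / η' (X ω)) *
                  (IA ω * (P[Y|sigmaGen (fun ω => (X ω, A ω))]) ω - IA ω * μ' (X ω)) := by
                ring
            _ = Tx (X ω) * (q' (X ω) / η' (X ω)) * (IA ω * μ (X ω) - IA ω * μ' (X ω)) := by
                rw [h3]
            _ = (Tx (X ω) * (q' (X ω) / η' (X ω)) * (μ (X ω) - μ' (X ω))) * IA ω := by ring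
      _ = ∫ ω, (Tx (X ω) * (q' (X ω) / η' (X ω)) * (μ (X ω) - μ' (X ω))) *
            (P[IA|sigmaGen X]) ω ∂P :=
          tower_mul P hm1
            (f := fun ω => Tx (X ω) * (q' (X ω) / η' (X ω)) * (μ (X ω) - μ' (X ω)))
            (g := IA)
            (sm_comp ((hTxm.mul (hq'm.div hη'm)).mul (hμm.sub hμ'm)) X) hIntK hIAi
      _ = J2 := by
          rw [hJ2def]
          refine integral_congr_ae ?_
          filter_upwards [hη] with ω hω
          rw [← hω]
  -- Step 3: φ and J3
  set E : Set Ω := {ω | g (X ω) = xt ∧ S ω = s} with hEdef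
  have hEm : MeasurableSet E := by
    rw [hEdef, Set.setOf_and]
    exact ((hg.comp hX) (measurableSet_singleton xt)).inter (hS (measurableSet_singleton s))
  have hPE : (0 : ℝ) < (P E).toReal := ENNReal.toReal_pos hE.ne' (measure_ne_top P E)
  have hφE : φ * (P E).toReal = ∫ ω in E, μ (X ω) ∂P := by
    rw [hφ]; field_simp
  have hEJ3 : ∫ ω in E, μ (X ω) ∂P = J3 := by
    have hint : Integrable (fun ω => (Tx (X ω) * μ (X ω)) * IS ω) P := by
      have h1 : Integrable (fun ω => (Tx (X ω) * IS ω) * μ (X ω)) P := by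
        refine Integrable.bdd_mul (c := 1) hμXi
          ((hTxm.comp hX).mul hISm).aestronglyMeasurable ?_
        filter_upwards with ω
        rw [Real.norm_eq_abs, abs_mul]
        have h3 := hTx1 (X ω)
        have h4 : |IS ω| ≤ 1 := by rw [abs_le]; exact ⟨by linarith [hIS01.1 ω], hIS01.2 ω⟩
        nlinarith [abs_nonneg (IS ω), abs_nonneg (Tx (X ω))]
      exact h1.congr (Filter.Eventually.of_forall fun ω => by ring)
    calc ∫ ω in E, μ (X ω) ∂P
        = ∫ ω, E.indicator (fun ω => μ (X ω)) ω ∂P := (integral_indicator hEm).symm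
      _ = ∫ ω, (Tx (X ω) * μ (X ω)) * IS ω ∂P := by
          refine integral_congr_ae (Filter.Eventually.of_forall fun ω => ?_)
          by_cases h : ω ∈ E
          · have h1 : g (X ω) = xt := h.1
            have h2 : S ω = s := h.2
            rw [Set.indicator_of_mem h]
            simp [hTx, hIS, h1, h2]
          · rw [Set.indicator_of_notMem h]
            have h' : ¬(g (X ω) = xt ∧ S ω = s) := h
            rcases not_and_or.mp h' with h3 | h3 <;> simp [hTx, hIS, h3]
      _ = ∫ ω, (Tx (X ω) * μ (X ω)) * (P[IS|sigmaGen X]) ω ∂P :=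
          tower_mul P hm1 (f := fun ω => Tx (X ω) * μ (X ω)) (g := IS)
            (sm_comp (hTxm.mul hμm) X) hint hISi
      _ = J3 := by
          rw [hJ3def]
          refine integral_congr_ae ?_
          filter_upwards [hq] with ω hω
          rw [← hω]; ring
  -- Step 4: right-hand side integral
  have hRHS : ∫ ω, (if g (X ω) = xt then (1 : ℝ) else 0) *
      ((q (X ω) - q' (X ω)) + q' (X ω) * (1 - η (X ω) / η' (X ω))) *
      (μ' (X ω) - μ (X ω)) ∂P = J1 - J3 + J2 := by
    have e : ∀ ω, (if g (X ω) = xt then (1 : ℝ) else 0) *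
        ((q (X ω) - q' (X ω)) + q' (X ω) * (1 - η (X ω) / η' (X ω))) *
        (μ' (X ω) - μ (X ω))
        = (Tx (X ω) * q (X ω) * μ' (X ω) - Tx (X ω) * q (X ω) * μ (X ω)) +
          Tx (X ω) * (q' (X ω) / η' (X ω)) * (μ (X ω) - μ' (X ω)) * η (X ω) := by
      intro ω
      rw [hTx]
      by_cases h1 : g (X ω) = xt <;> simp [h1] <;> ring
    have h13 : Integrable (fun ω => Tx (X ω) * q (X ω) * μ' (X ω) -
        Tx (X ω) * q (X ω) * μ (X ω)) P := hJ1i.sub hJ3i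
    rw [integral_congr_ae (Filter.Eventually.of_forall e),
      integral_add h13 hJ2i, integral_sub hJ1i hJ3i]
  -- Step 5: compute ∫ G
  have hIntG : ∫ ω, G ω ∂P = κ' * (J1 + J2) := by
    simp only [hG]
    rw [integral_const_mul, integral_add hF1i hF2i, eF1, eF2]
  -- Final assembly
  rw [hIntG, hRHS, hκ, div_eq_mul_inv, inv_inv]
  have hJ3φ : (P E).toReal * φ = J3 := by rw [mul_comm, hφE, hEJ3]
  linear_combination (-κ') * hJ3φ
end

section
/- Double robustness of the one-step estimating functional (internal population): assume ℙ(X̃ = x̃ ∧ S = s) > 0 and η_a(X) ≥ ε a.s. for some ε > 0; set κ := 1/ℙ(X̃ = x̃ ∧ S = s) and φ := 𝔼[μ_a(X) | X̃ = x̃ ∧ S = s]. Let μ', η', q' : 𝒳 → ℝ be measurable with η'(X) ≥ ε a.s., |q'(X)| ≤ 1 a.s., μ'(X) square-integrable, and define G := κ·[ 1{X̃ = x̃, S = s}·μ'(X) + 1{A = a, X̃ = x̃}·(q'(X)/η'(X))·(Y − μ'(X)) ]. If either (i) μ'(X) = μ_a(X) a.s., or (ii) q'(X) = q_s(X) a.s.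 and η'(X) = η_a(X) a.s., then 𝔼[G] = φ. -/
open MeasureTheory ProbabilityTheory

/-- Pull-out property for integrals: `∫ f·g = ∫ f·E[g|m]` for `m`-measurable `f`. -/
lemma pullout_integral {Ω : Type*} [m0 : MeasurableSpace Ω] {P : Measure Ω}
    [IsProbabilityMeasure P] {m : MeasurableSpace Ω} (hm : m ≤ m0) {f g : Ω → ℝ}
    (hf : StronglyMeasurable[m] f) (hfg : Integrable (fun ω => f ω * g ω) P)
    (hg : Integrable g P) :
    ∫ ω, f ω * g ω ∂P = ∫ ω, f ω * condExp m P g ω ∂P := by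
  have h0 : Integrable (f * g) P := hfg
  calc ∫ ω, f ω * g ω ∂P = ∫ ω, condExp m P (f * g) ω ∂P := by
        rw [integral_condExp hm]; rfl
    _ = ∫ ω, f ω * condExp m P g ω ∂P :=
        integral_congr_ae (condExp_mul_of_stronglyMeasurable_left hf h0 hg)

/-- double robustness of the one-step estimating functional, internal population. -/
theorem double_robustness_internal
    {Ω 𝒜 𝒮 𝒯 𝒳 : Type*}
    [MeasurableSpace Ω]
    [Fintype 𝒜] [Nonempty 𝒜] [DecidableEq 𝒜] [MeasurableSpace 𝒜] [DiscreteMeasurableSpace 𝒜]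
    [Fintype 𝒮] [Nonempty 𝒮] [DecidableEq 𝒮] [MeasurableSpace 𝒮] [DiscreteMeasurableSpace 𝒮]
    [Fintype 𝒯] [Nonempty 𝒯] [DecidableEq 𝒯] [MeasurableSpace 𝒯] [DiscreteMeasurableSpace 𝒯]
    [MeasurableSpace 𝒳]
    (P : Measure Ω) [IsProbabilityMeasure P]
    (A : Ω → 𝒜) (S : Ω → 𝒮) (X : Ω → 𝒳) (g : 𝒳 → 𝒯) (Y : Ω → ℝ)
    (hA : Measurable A) (hS : Measurable S) (hX : Measurable X) (hg : Measurable g)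
    (hY : MemLp Y 2 P)
    (a : 𝒜) (s : 𝒮) (xt : 𝒯)
    (η q μ : 𝒳 → ℝ) (hηm : Measurable η) (hqm : Measurable q) (hμm : Measurable μ)
    -- propensity score: η_a(X) = E[1{A=a} | σ(X)] a.s.
    (hη : (fun ω => η (X ω)) =ᵐ[P]
      condExp (sigmaGen X) P (fun ω => if A ω = a then (1 : ℝ) else 0))
    -- source model: q_s(X) = E[1{S=s} | σ(X)] a.s.
    (hq : (fun ω => q (X ω)) =ᵐ[P]
      condExp (sigmaGen X) P (fun ω => if S ω = s then (1 : ℝ) else 0))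
    -- outcome regression: 1{A=a}·E[Y | σ(X,A)] = 1{A=a}·μ_a(X) a.s.
    (hμ : (fun ω => (if A ω = a then (1 : ℝ) else 0) *
        condExp (sigmaGen (fun ω => (X ω, A ω))) P Y ω) =ᵐ[P]
      (fun ω => (if A ω = a then (1 : ℝ) else 0) * μ (X ω)))
    (ε : ℝ) (hε : 0 < ε) (hεη : ∀ᵐ ω ∂P, ε ≤ η (X ω))
    (hE : 0 < P {ω | g (X ω) = xt ∧ S ω = s})
    (κ φ : ℝ)
    (hκ : κ = ((P {ω | g (X ω) = xt ∧ S ω = s}).toReal)⁻¹)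
    (hφ : φ = (∫ ω in {ω | g (X ω) = xt ∧ S ω = s}, μ (X ω) ∂P) / (P {ω | g (X ω) = xt ∧ S ω = s}).toReal)
    (μ' η' q' : 𝒳 → ℝ) (hμ'm : Measurable μ') (hη'm : Measurable η') (hq'm : Measurable q')
    (hη' : ∀ᵐ ω ∂P, ε ≤ η' (X ω)) (hq' : ∀ᵐ ω ∂P, |q' (X ω)| ≤ 1)
    (hμ'L2 : MemLp (fun ω => μ' (X ω)) 2 P)
    (G : Ω → ℝ)
    (hG : G = fun ω => κ *
      ((if g (X ω) = xt ∧ S ω = s then (1 : ℝ) else 0) * μ' (X ω) +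
        (if A ω = a ∧ g (X ω) = xt then (1 : ℝ) else 0) * (q' (X ω) / η' (X ω)) *
          (Y ω - μ' (X ω))))
    (hrobust : ((fun ω => μ' (X ω)) =ᵐ[P] fun ω => μ (X ω)) ∨
      (((fun ω => q' (X ω)) =ᵐ[P] fun ω => q (X ω)) ∧
        ((fun ω => η' (X ω)) =ᵐ[P] fun ω => η (X ω)))) :
    ∫ ω, G ω ∂P = φ := by
  -- basic measurability / integrability setup
  have hm₁ : sigmaGen X ≤ ‹MeasurableSpace Ω› := hX.comap_le
  have hm₂ : sigmaGen (fun ω => (X ω, A ω)) ≤ ‹MeasurableSpace Ω› := (hX.prodMk hA).comap_le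
  have hXm : Measurable[sigmaGen X] X := Measurable.of_comap_le le_rfl
  have hXAm : Measurable[sigmaGen (fun ω => (X ω, A ω))] (fun ω => (X ω, A ω)) :=
    Measurable.of_comap_le le_rfl
  have smX : ∀ (h : 𝒳 → ℝ), Measurable h → StronglyMeasurable[sigmaGen X] (fun ω => h (X ω)) :=
    fun h hh => (hh.comp hXm).stronglyMeasurable
  have smXA : ∀ (F : 𝒳 × 𝒜 → ℝ), Measurable F →
      StronglyMeasurable[sigmaGen (fun ω => (X ω, A ω))] (fun ω => F (X ω, A ω)) :=
    fun F hF => (hF.comp hXAm).stronglyMeasurable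
  have hYint : Integrable Y P := hY.integrable one_le_two
  have hμ'int : Integrable (fun ω => μ' (X ω)) P := hμ'L2.integrable one_le_two
  set W : Ω → ℝ := condExp (sigmaGen (fun ω => (X ω, A ω))) P Y with hWdef
  have hWint : Integrable W P := integrable_condExp
  have hWsm : AEStronglyMeasurable W P :=
    (stronglyMeasurable_condExp.mono hm₂).aestronglyMeasurable
  have hZint : Integrable (fun ω => Y ω - μ' (X ω)) P := hYint.sub hμ'int
  have hratio : ∀ᵐ ω ∂P, |q' (X ω) / η' (X ω)| ≤ ε⁻¹ := by
    filter_upwards [hq', hη'] with ω h1 h2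
    rw [abs_div, abs_of_nonneg (le_trans hε.le h2), ← one_div]
    exact div_le_div₀ (by norm_num) h1 hε h2
  set E : Set Ω := {ω | g (X ω) = xt ∧ S ω = s} with hEdef
  have hEm : MeasurableSet E := by
    have h1 : MeasurableSet {ω | g (X ω) = xt} := (hg.comp hX) (measurableSet_singleton xt)
    have h2 : MeasurableSet {ω | S ω = s} := hS (measurableSet_singleton s)
    rw [hEdef, Set.setOf_and]
    exact h1.inter h2
  -- indicator functions
  have hindAm : Measurable (fun ω => if A ω = a then (1:ℝ) else 0) :=
    Measurable.ite (hA (measurableSet_singleton a)) measurable_const measurable_const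
  have hindSm : Measurable (fun ω => if S ω = s then (1:ℝ) else 0) :=
    Measurable.ite (hS (measurableSet_singleton s)) measurable_const measurable_const
  have hindAint : Integrable (fun ω => if A ω = a then (1:ℝ) else 0) P := by
    refine Integrable.mono' (integrable_const (1:ℝ)) hindAm.aestronglyMeasurable ?_
    filter_upwards with ω
    split_ifs <;> simp
  have hindSint : Integrable (fun ω => if S ω = s then (1:ℝ) else 0) P := by
    refine Integrable.mono' (integrable_const (1:ℝ)) hindSm.aestronglyMeasurable ?_
    filter_upwards with ω
    split_ifs <;> simp
  -- measurability of the pieces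
  have hgXm : Measurable (fun ω => if g (X ω) = xt then (1:ℝ) else 0) :=
    Measurable.ite ((hg.comp hX) (measurableSet_singleton xt)) measurable_const measurable_const
  -- coefficient of the augmentation term, as a function on 𝒳 × 𝒜
  set F₂ : 𝒳 × 𝒜 → ℝ := fun p => (if p.2 = a ∧ g p.1 = xt then (1:ℝ) else 0) *
    (q' p.1 / η' p.1) with hF₂def
  have hF₂m : Measurable F₂ := by
    have hset : MeasurableSet {p : 𝒳 × 𝒜 | p.2 = a ∧ g p.1 = xt} := by
      rw [Set.setOf_and]
      exact (measurable_snd (measurableSet_singleton a)).inter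
        ((hg.comp measurable_fst) (measurableSet_singleton xt))
    exact (Measurable.ite hset measurable_const measurable_const).mul
      ((hq'm.comp measurable_fst).div (hη'm.comp measurable_fst))
  have hF₂bd : ∀ᵐ ω ∂P, |F₂ (X ω, A ω)| ≤ ε⁻¹ := by
    filter_upwards [hratio] with ω hr
    rw [hF₂def]
    simp only [abs_mul]
    split_ifs with h
    · simpa using hr
    · simp [hε.le]
  -- integrability of both pieces of G
  have hI2Fint : Integrable (fun ω => F₂ (X ω, A ω) * (Y ω - μ' (X ω))) P := by
    refine Integrable.mono' (hZint.norm.const_mul ε⁻¹)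
      (((hF₂m.comp (hX.prodMk hA)).aestronglyMeasurable).mul hZint.aestronglyMeasurable) ?_
    filter_upwards [hF₂bd] with ω h
    simp only [norm_mul, Real.norm_eq_abs]
    exact mul_le_mul_of_nonneg_right h (abs_nonneg _)
  have hI2eq : (fun ω => F₂ (X ω, A ω) * (Y ω - μ' (X ω))) =
      fun ω => (if A ω = a ∧ g (X ω) = xt then (1:ℝ) else 0) * (q' (X ω) / η' (X ω)) *
        (Y ω - μ' (X ω)) := rfl
  have hI2int : Integrable (fun ω => (if A ω = a ∧ g (X ω) = xt then (1:ℝ) else 0) *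
      (q' (X ω) / η' (X ω)) * (Y ω - μ' (X ω))) P := hI2eq ▸ hI2Fint
  have hI1int : Integrable (fun ω => (if g (X ω) = xt ∧ S ω = s then (1:ℝ) else 0) *
      μ' (X ω)) P := by
    have hm : MeasurableSet {ω | g (X ω) = xt ∧ S ω = s} := hEdef ▸ hEm
    refine Integrable.mono' hμ'int.norm
      ((Measurable.ite hm measurable_const measurable_const).mul
        (hμ'm.comp hX)).aestronglyMeasurable ?_
    filter_upwards with ω
    simp only [norm_mul, Real.norm_eq_abs]
    split_ifs <;> simp
  -- Step 0: split the integral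
  have hsplit : ∫ ω, G ω ∂P = κ *
      ((∫ ω, (if g (X ω) = xt ∧ S ω = s then (1:ℝ) else 0) * μ' (X ω) ∂P) +
       (∫ ω, (if A ω = a ∧ g (X ω) = xt then (1:ℝ) else 0) * (q' (X ω) / η' (X ω)) *
          (Y ω - μ' (X ω)) ∂P)) := by
    rw [hG, ← integral_add hI1int hI2int, ← integral_const_mul]
  -- conditional expectation of Y - μ'(X) given σ(X, A)
  have hcondZ : condExp (sigmaGen (fun ω => (X ω, A ω))) P (fun ω => Y ω - μ' (X ω)) =ᵐ[P]
      fun ω => W ω - μ' (X ω) := by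
    have hpi : (fun ω => Y ω - μ' (X ω)) = Y - fun ω => μ' (X ω) := rfl
    have h2 : condExp (sigmaGen (fun ω => (X ω, A ω))) P (fun ω => μ' (X ω)) =
        fun ω => μ' (X ω) :=
      condExp_of_stronglyMeasurable hm₂ (smXA (fun p => μ' p.1) (hμ'm.comp measurable_fst))
        hμ'int
    rw [hpi]
    refine (condExp_sub hYint hμ'int _).trans ?_
    rw [h2]
    rfl
  -- the augmentation term after conditioning on σ(X,A)
  have hT2a : ∫ ω, (if A ω = a ∧ g (X ω) = xt then (1:ℝ) else 0) * (q' (X ω) / η' (X ω)) *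
      (Y ω - μ' (X ω)) ∂P = ∫ ω, F₂ (X ω, A ω) * (W ω - μ' (X ω)) ∂P := by
    rw [← hI2eq]
    rw [pullout_integral hm₂ (smXA F₂ hF₂m) hI2Fint hZint]
    refine integral_congr_ae ?_
    filter_upwards [hcondZ] with ω h
    rw [h]
  -- key pointwise identity, using the outcome-regression assumption
  have hkey : (fun ω => F₂ (X ω, A ω) * (W ω - μ' (X ω))) =ᵐ[P]
      fun ω => ((if g (X ω) = xt then (1:ℝ) else 0) * (q' (X ω) / η' (X ω)) *
        (μ (X ω) - μ' (X ω))) * (if A ω = a then (1:ℝ) else 0) := by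
    filter_upwards [hμ] with ω hω
    rw [hF₂def]
    by_cases h1 : A ω = a
    · have hW : W ω = μ (X ω) := by simpa [h1] using hω
      by_cases h2 : g (X ω) = xt <;> simp [h1, h2, hW] <;> ring
    · simp [h1]
  have hF₂Wint : Integrable (fun ω => F₂ (X ω, A ω) * (W ω - μ' (X ω))) P := by
    refine Integrable.mono' ((hWint.sub hμ'int).norm.const_mul ε⁻¹)
      (((hF₂m.comp (hX.prodMk hA)).aestronglyMeasurable).mul
        (hWsm.sub (hμ'm.comp hX).aestronglyMeasurable)) ?_
    filter_upwards [hF₂bd] with ω h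
    simp only [norm_mul, Real.norm_eq_abs]
    exact mul_le_mul_of_nonneg_right h (abs_nonneg _)
  have hDindint : Integrable (fun ω => ((if g (X ω) = xt then (1:ℝ) else 0) *
      (q' (X ω) / η' (X ω)) * (μ (X ω) - μ' (X ω))) * (if A ω = a then (1:ℝ) else 0)) P :=
    hF₂Wint.congr hkey
  have hsmD : StronglyMeasurable[sigmaGen X] (fun ω => (if g (X ω) = xt then (1:ℝ) else 0) *
      (q' (X ω) / η' (X ω)) * (μ (X ω) - μ' (X ω))) :=
    smX (fun x => (if g x = xt then (1:ℝ) else 0) * (q' x / η' x) * (μ x - μ' x))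
      (((Measurable.ite (hg (measurableSet_singleton xt)) measurable_const
        measurable_const).mul (hq'm.div hη'm)).mul (hμm.sub hμ'm))
  have hcondD : condExp (sigmaGen X) P (fun ω => ((if g (X ω) = xt then (1:ℝ) else 0) *
      (q' (X ω) / η' (X ω)) * (μ (X ω) - μ' (X ω))) * (if A ω = a then (1:ℝ) else 0)) =ᵐ[P]
      fun ω => ((if g (X ω) = xt then (1:ℝ) else 0) * (q' (X ω) / η' (X ω)) *
        (μ (X ω) - μ' (X ω))) * η (X ω) := by
    refine (condExp_mul_of_stronglyMeasurable_left hsmD hDindint hindAint).trans ?_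
    filter_upwards [hη] with ω h
    simp only [Pi.mul_apply]
    rw [← h]
  have hDηint : Integrable (fun ω => ((if g (X ω) = xt then (1:ℝ) else 0) *
      (q' (X ω) / η' (X ω)) * (μ (X ω) - μ' (X ω))) * η (X ω)) P :=
    integrable_condExp.congr hcondD
  -- the augmentation term equals ∫ D·η(X)
  have hT2 : ∫ ω, (if A ω = a ∧ g (X ω) = xt then (1:ℝ) else 0) * (q' (X ω) / η' (X ω)) *
      (Y ω - μ' (X ω)) ∂P = ∫ ω, ((if g (X ω) = xt then (1:ℝ) else 0) *
        (q' (X ω) / η' (X ω)) * (μ (X ω) - μ' (X ω))) * η (X ω) ∂P := by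
    rw [hT2a, integral_congr_ae hkey,
      pullout_integral hm₁ hsmD hDindint hindAint]
    refine integral_congr_ae ?_
    filter_upwards [hη] with ω h
    rw [← h]
  -- case analysis on which nuisance is correct
  rcases hrobust with hcase | ⟨hq'q, hη'η⟩
  · -- Case (i): outcome regression correct, μ' = μ a.e.
    have hD0 : (fun ω => ((if g (X ω) = xt then (1:ℝ) else 0) * (q' (X ω) / η' (X ω)) *
        (μ (X ω) - μ' (X ω))) * η (X ω)) =ᵐ[P] fun _ => (0:ℝ) := by
      filter_upwards [hcase] with ω hω
      rw [hω]
      ring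
    have hzero : ∫ ω, (if A ω = a ∧ g (X ω) = xt then (1:ℝ) else 0) *
        (q' (X ω) / η' (X ω)) * (Y ω - μ' (X ω)) ∂P = 0 := by
      rw [hT2, integral_congr_ae hD0, integral_zero]
    have hI1E : ∫ ω, (if g (X ω) = xt ∧ S ω = s then (1:ℝ) else 0) * μ' (X ω) ∂P =
        ∫ ω in E, μ (X ω) ∂P := by
      rw [← integral_indicator hEm]
      refine integral_congr_ae ?_
      filter_upwards [hcase] with ω hω
      simp only [Set.indicator_apply, hEdef, Set.mem_setOf_eq]
      split_ifs <;> simp [hω]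
    rw [hsplit, hzero, add_zero, hI1E, hφ, hκ, div_eq_mul_inv, mul_comm]
  · -- Case (ii): source model and propensity score correct
    -- bound on q(X)
    have hqb : ∀ᵐ ω ∂P, |q (X ω)| ≤ 1 := by
      have h0 : (0 : Ω → ℝ) ≤ᵐ[P] condExp (sigmaGen X) P (fun ω => if S ω = s then (1:ℝ) else 0) :=
        condExp_nonneg (Filter.Eventually.of_forall fun ω => by dsimp; split_ifs <;> norm_num)
      have h1 : condExp (sigmaGen X) P (fun ω => if S ω = s then (1:ℝ) else 0) ≤ᵐ[P]
          condExp (sigmaGen X) P (fun _ => (1:ℝ)) :=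
        condExp_mono hindSint (integrable_const 1)
          (Filter.Eventually.of_forall fun ω => by dsimp; split_ifs <;> norm_num)
      have h2 : condExp (sigmaGen X) P (fun _ => (1:ℝ)) = fun _ => (1:ℝ) := condExp_const hm₁ 1
      filter_upwards [hq, h0, h1] with ω ha hb hc
      rw [ha, abs_le]
      refine ⟨le_trans (by norm_num) hb, ?_⟩
      calc condExp (sigmaGen X) P (fun ω => if S ω = s then (1:ℝ) else 0) ω
          ≤ condExp (sigmaGen X) P (fun _ => (1:ℝ)) ω := hc
        _ = 1 := by rw [h2]
    -- T1: the first term after conditioning on σ(X)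
    have hBSint : Integrable (fun ω => ((if g (X ω) = xt then (1:ℝ) else 0) * μ' (X ω)) *
        (if S ω = s then (1:ℝ) else 0)) P := by
      refine Integrable.mono' hμ'int.norm
        (((hgXm.mul (hμ'm.comp hX)).mul hindSm).aestronglyMeasurable) ?_
      filter_upwards with ω
      simp only [norm_mul, Real.norm_eq_abs]
      split_ifs <;> simp
    have hsmB : StronglyMeasurable[sigmaGen X]
        (fun ω => (if g (X ω) = xt then (1:ℝ) else 0) * μ' (X ω)) :=
      smX (fun x => (if g x = xt then (1:ℝ) else 0) * μ' x)
        ((Measurable.ite (hg (measurableSet_singleton xt)) measurable_const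
          measurable_const).mul hμ'm)
    have hT1 : ∫ ω, (if g (X ω) = xt ∧ S ω = s then (1:ℝ) else 0) * μ' (X ω) ∂P =
        ∫ ω, ((if g (X ω) = xt then (1:ℝ) else 0) * μ' (X ω)) * q (X ω) ∂P := by
      have heq : (fun ω => (if g (X ω) = xt ∧ S ω = s then (1:ℝ) else 0) * μ' (X ω)) =
          fun ω => ((if g (X ω) = xt then (1:ℝ) else 0) * μ' (X ω)) *
            (if S ω = s then (1:ℝ) else 0) := by
        funext ω
        by_cases h1 : g (X ω) = xt <;> by_cases h2 : S ω = s <;> simp [h1, h2]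
      rw [heq, pullout_integral hm₁ hsmB hBSint hindSint]
      refine integral_congr_ae ?_
      filter_upwards [hq] with ω h
      rw [← h]
    -- integrability of B·q
    have hBqint : Integrable (fun ω => ((if g (X ω) = xt then (1:ℝ) else 0) * μ' (X ω)) *
        q (X ω)) P := by
      refine Integrable.mono' hμ'int.norm
        (((hgXm.mul (hμ'm.comp hX)).mul (hqm.comp hX)).aestronglyMeasurable) ?_
      filter_upwards [hqb] with ω hqω
      simp only [norm_mul, Real.norm_eq_abs]
      calc |if g (X ω) = xt then (1:ℝ) else 0| * |μ' (X ω)| * |q (X ω)|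
          ≤ 1 * |μ' (X ω)| * 1 := by
            refine mul_le_mul (mul_le_mul ?_ le_rfl (abs_nonneg _) zero_le_one) hqω
              (abs_nonneg _) (by positivity)
            split_ifs <;> norm_num
        _ = |μ' (X ω)| := by ring
    -- combine the two terms
    have hcombine : (∫ ω, ((if g (X ω) = xt then (1:ℝ) else 0) * μ' (X ω)) * q (X ω) ∂P) +
        (∫ ω, ((if g (X ω) = xt then (1:ℝ) else 0) * (q' (X ω) / η' (X ω)) *
          (μ (X ω) - μ' (X ω))) * η (X ω) ∂P) =
        ∫ ω, ((if g (X ω) = xt then (1:ℝ) else 0) * μ (X ω)) * q (X ω) ∂P := by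
      rw [← integral_add hBqint hDηint]
      refine integral_congr_ae ?_
      filter_upwards [hq'q, hη'η, hη'] with ω e1 e2 e3
      by_cases hgx : g (X ω) = xt
      · simp only [hgx, if_pos, one_mul]
        rw [← e1, ← e2]
        have hne : η' (X ω) ≠ 0 := ne_of_gt (lt_of_lt_of_le hε e3)
        field_simp
        ring
      · simp [hgx]
    -- integrability of R = 1{g(X)=xt}·μ(X), via the ε-lower bound on η
    have hRindint : Integrable (fun ω => ((if g (X ω) = xt then (1:ℝ) else 0) * μ (X ω)) *
        (if A ω = a then (1:ℝ) else 0)) P := by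
      refine Integrable.congr (f := fun ω => (if g (X ω) = xt then (1:ℝ) else 0) *
        ((if A ω = a then (1:ℝ) else 0) * W ω)) ?_ ?_
      · refine Integrable.mono' hWint.norm
          ((hgXm.aestronglyMeasurable).mul ((hindAm.aestronglyMeasurable).mul hWsm)) ?_
        filter_upwards with ω
        simp only [norm_mul, Real.norm_eq_abs]
        split_ifs <;> simp [abs_nonneg]
      · filter_upwards [hμ] with ω hω
        rw [hω]
        ring
    have hsmR : StronglyMeasurable[sigmaGen X]
        (fun ω => (if g (X ω) = xt then (1:ℝ) else 0) * μ (X ω)) :=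
      smX (fun x => (if g x = xt then (1:ℝ) else 0) * μ x)
        ((Measurable.ite (hg (measurableSet_singleton xt)) measurable_const
          measurable_const).mul hμm)
    have hcondR : condExp (sigmaGen X) P (fun ω => ((if g (X ω) = xt then (1:ℝ) else 0) *
        μ (X ω)) * (if A ω = a then (1:ℝ) else 0)) =ᵐ[P]
        fun ω => ((if g (X ω) = xt then (1:ℝ) else 0) * μ (X ω)) * η (X ω) := by
      refine (condExp_mul_of_stronglyMeasurable_left hsmR hRindint hindAint).trans ?_
      filter_upwards [hη] with ω h
      simp only [Pi.mul_apply]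
      rw [← h]
    have hRηint : Integrable (fun ω => ((if g (X ω) = xt then (1:ℝ) else 0) * μ (X ω)) *
        η (X ω)) P := integrable_condExp.congr hcondR
    have hRint : Integrable (fun ω => (if g (X ω) = xt then (1:ℝ) else 0) * μ (X ω)) P := by
      refine Integrable.mono' (hRηint.norm.const_mul ε⁻¹)
        ((hgXm.mul (hμm.comp hX)).aestronglyMeasurable) ?_
      filter_upwards [hεη] with ω hω
      have h0 : (0:ℝ) ≤ η (X ω) := le_trans hε.le hω
      simp only [Real.norm_eq_abs, abs_mul, abs_of_nonneg h0]
      set r := |if g (X ω) = xt then (1:ℝ) else 0| * |μ (X ω)| with hr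
      have hrn : 0 ≤ r := by positivity
      calc r = ε⁻¹ * (r * ε) := by field_simp
        _ ≤ ε⁻¹ * (r * η (X ω)) := by
            refine mul_le_mul_of_nonneg_left ?_ (by positivity)
            exact mul_le_mul_of_nonneg_left hω hrn
    have hRSint : Integrable (fun ω => ((if g (X ω) = xt then (1:ℝ) else 0) * μ (X ω)) *
        (if S ω = s then (1:ℝ) else 0)) P := by
      refine Integrable.mono' hRint.norm
        (((hgXm.mul (hμm.comp hX)).mul hindSm).aestronglyMeasurable) ?_
      filter_upwards with ω
      simp only [norm_mul, Real.norm_eq_abs]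
      split_ifs <;> simp [abs_nonneg, abs_mul]
    -- final identification with the set integral
    have hfinal : ∫ ω, ((if g (X ω) = xt then (1:ℝ) else 0) * μ (X ω)) * q (X ω) ∂P =
        ∫ ω in E, μ (X ω) ∂P := by
      have hstep : ∫ ω, ((if g (X ω) = xt then (1:ℝ) else 0) * μ (X ω)) * q (X ω) ∂P =
          ∫ ω, ((if g (X ω) = xt then (1:ℝ) else 0) * μ (X ω)) *
            (if S ω = s then (1:ℝ) else 0) ∂P := by
        rw [pullout_integral hm₁ hsmR hRSint hindSint]
        refine integral_congr_ae ?_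
        filter_upwards [hq] with ω h
        rw [← h]
      rw [hstep, ← integral_indicator hEm]
      refine integral_congr_ae (Filter.Eventually.of_forall fun ω => ?_)
      simp only [Set.indicator_apply, hEdef, Set.mem_setOf_eq]
      by_cases h1 : g (X ω) = xt <;> by_cases h2 : S ω = s <;> simp [h1, h2]
    rw [hsplit, hT1, hT2, hcombine, hfinal, hφ, hκ, div_eq_mul_inv, mul_comm]
end

section
/- L² Lipschitz continuity of the estimating functional in the nuisances (used for empirical-process term 1 in Theorem 2): assume |Y| ≤ M a.s. with M ≥ 0, ε ≤ η_a(X) ≤ 1 and ε ≤ η'(X) ≤ 1 a.s. for some ε ∈ (0,1], 0 ≤ q_s(X) ≤ 1 and 0 ≤ q'(X) ≤ 1 a.s., |μ_a(X)| ≤ M and |μ'(X)| ≤ M a.s., and 0 < κ ≤ K, 0 < κ' ≤ K. Define G(μ', η', q', κ') := κ'·[ 1{X̃ = x̃, S = s}·μ'(X) + 1{A = a, X̃ = x̃}·(q'(X)/η'(X))·(Y − μ'(X)) ] and G(μ_a, η_a, q_s, κ) analogously with the true nuisances. Then, with C := 6·(K + 1)·(M + 1)/ε², ‖G(μ', η',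 q', κ') − G(μ_a, η_a, q_s, κ)‖_{L²(ℙ)} ≤ C·( ‖μ'(X) − μ_a(X)‖_{L²(ℙ)} + ‖η'(X) − η_a(X)‖_{L²(ℙ)} + ‖q'(X) − q_s(X)‖_{L²(ℙ)} + |κ' − κ| ). -/
open MeasureTheory ProbabilityTheory

lemma coef1 (M K t : ℝ) (hM : 0 ≤ M) (hK0 : 0 < K) (ht1 : 1 ≤ t) :
    M + 2 * M * t ≤ 6 * (K + 1) * (M + 1) * (t * t) := by
  nlinarith [mul_nonneg hM (by nlinarith : (0:ℝ) ≤ t * t - 1),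
    mul_nonneg hM (by nlinarith : (0:ℝ) ≤ t * t - t),
    mul_nonneg (mul_nonneg hK0.le hM) (by nlinarith : (0:ℝ) ≤ t * t),
    mul_nonneg hK0.le (by nlinarith : (0:ℝ) ≤ t * t)]

lemma coef2 (M K κ t : ℝ) (hM : 0 ≤ M) (hκ : 0 < κ) (hκK : κ ≤ K) (ht1 : 1 ≤ t) :
    κ * (1 + t) ≤ 6 * (K + 1) * (M + 1) * (t * t) := by
  have hK0 : 0 < K := hκ.trans_le hκK
  nlinarith [mul_nonneg (sub_nonneg.2 hκK) (by linarith : (0:ℝ) ≤ 1 + t),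
    mul_nonneg hK0.le (by nlinarith : (0:ℝ) ≤ t * t - 1),
    mul_nonneg hK0.le (by nlinarith : (0:ℝ) ≤ t * t - t),
    mul_nonneg (mul_nonneg hK0.le hM) (by nlinarith : (0:ℝ) ≤ t * t),
    mul_nonneg hM (by nlinarith : (0:ℝ) ≤ t * t)]

lemma coef3 (M K κ t : ℝ) (hM : 0 ≤ M) (hκ : 0 < κ) (hκK : κ ≤ K) (ht1 : 1 ≤ t) :
    κ * (2 * M * t) ≤ 6 * (K + 1) * (M + 1) * (t * t) := by
  have hK0 : 0 < K := hκ.trans_le hκK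
  nlinarith [mul_nonneg (mul_nonneg (sub_nonneg.2 hκK) hM) (by linarith : (0:ℝ) ≤ t),
    mul_nonneg (mul_nonneg hK0.le hM) (by nlinarith : (0:ℝ) ≤ t * t - t),
    mul_nonneg (mul_nonneg hK0.le hM) (by nlinarith : (0:ℝ) ≤ t * t),
    mul_nonneg hK0.le (by nlinarith : (0:ℝ) ≤ t * t),
    mul_nonneg hM (by nlinarith : (0:ℝ) ≤ t * t)]

lemma coef4 (M K κ t : ℝ) (hM : 0 ≤ M) (hκ : 0 < κ) (hκK : κ ≤ K) (ht1 : 1 ≤ t) :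
    κ * (2 * M * (t * t)) ≤ 6 * (K + 1) * (M + 1) * (t * t) := by
  have hK0 : 0 < K := hκ.trans_le hκK
  have hu : (0:ℝ) ≤ t * t := by nlinarith
  have h : κ * (2 * M) ≤ 6 * (K + 1) * (M + 1) := by
    nlinarith [mul_nonneg (sub_nonneg.2 hκK) hM, mul_nonneg hK0.le hM]
  calc κ * (2 * M * (t * t)) = κ * (2 * M) * (t * t) := by ring
    _ ≤ 6 * (K + 1) * (M + 1) * (t * t) := mul_le_mul_of_nonneg_right h hu

set_option maxHeartbeats 1000000 in
lemma key_bound (M ε K κ κ' m m' e e' qv qv' y i1 i2 : ℝ)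
    (hM : 0 ≤ M) (hε0 : 0 < ε) (hε1 : ε ≤ 1)
    (hy : |y| ≤ M) (hm : |m| ≤ M) (hm' : |m'| ≤ M)
    (he : ε ≤ e) (he1 : e ≤ 1) (he' : ε ≤ e') (he'1 : e' ≤ 1)
    (hqv0 : 0 ≤ qv) (hqv1 : qv ≤ 1) (hqv'0 : 0 ≤ qv') (hqv'1 : qv' ≤ 1)
    (hκ : 0 < κ) (hκK : κ ≤ K) (hκ' : 0 < κ') (hκ'K : κ' ≤ K)
    (hi1 : i1 = 0 ∨ i1 = 1) (hi2 : i2 = 0 ∨ i2 = 1) :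
    |κ' * (i1 * m' + i2 * (qv' / e') * (y - m')) -
      κ * (i1 * m + i2 * (qv / e) * (y - m))| ≤
      6 * (K + 1) * (M + 1) / ε ^ 2 *
        (|m' - m| + |e' - e| + |qv' - qv| + |κ' - κ|) := by
  have he0 : 0 < e := hε0.trans_le he
  have he'0 : 0 < e' := hε0.trans_le he'
  have hK0 : 0 < K := hκ.trans_le hκK
  set t := 1 / ε with htdef
  have htpos : 0 < t := by positivity
  have ht1 : 1 ≤ t := by rw [htdef, le_div_iff₀ hε0]; linarith
  have hεt : ε * t = 1 := by rw [htdef]; field_simp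
  set r := qv / e * (y - m) with hrdef
  set r' := qv' / e' * (y - m') with hr'def
  have hym' : |y - m'| ≤ 2 * M := by
    calc |y - m'| ≤ |y| + |m'| := abs_sub _ _
    _ ≤ 2 * M := by linarith
  have hr'b : |r'| ≤ 2 * M * t := by
    rw [hr'def, abs_mul, abs_div, abs_of_nonneg hqv'0, abs_of_pos he'0]
    calc qv' / e' * |y - m'| ≤ 1 / ε * (2 * M) := by
          apply mul_le_mul _ hym' (abs_nonneg _) (by positivity)
          exact div_le_div₀ one_pos.le hqv'1 hε0 he'
      _ = 2 * M * t := by rw [htdef]; ring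
  have hdiff : r' - r = (qv' - qv) / e' * (y - m') +
      qv * (e - e') / (e * e') * (y - m') + qv / e * (m - m') := by
    rw [hrdef, hr'def]; field_simp; ring
  have hb1 : |(qv' - qv) / e' * (y - m')| ≤ 2 * M * t * |qv' - qv| := by
    rw [abs_mul, abs_div, abs_of_pos he'0]
    calc |qv' - qv| / e' * |y - m'| ≤ |qv' - qv| / ε * (2 * M) := by
          apply mul_le_mul _ hym' (abs_nonneg _) (by positivity)
          exact div_le_div_of_nonneg_left (abs_nonneg _) hε0 he'
      _ = 2 * M * t * |qv' - qv| := by rw [htdef]; ring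
  have hb2 : |qv * (e - e') / (e * e') * (y - m')| ≤ 2 * M * (t * t) * |e' - e| := by
    rw [abs_mul, abs_div, abs_mul, abs_mul, abs_of_nonneg hqv0,
      abs_of_pos he0, abs_of_pos he'0]
    calc qv * |e - e'| / (e * e') * |y - m'| ≤ 1 * |e - e'| / (ε * ε) * (2 * M) := by
          gcongr
      _ = 2 * M * (t * t) * |e' - e| := by rw [abs_sub_comm, htdef]; field_simp
  have hb3 : |qv / e * (m - m')| ≤ t * |m' - m| := by
    rw [abs_mul, abs_div, abs_of_nonneg hqv0, abs_of_pos he0]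
    calc qv / e * |m - m'| ≤ 1 / ε * |m - m'| := by
          apply mul_le_mul _ le_rfl (abs_nonneg _) (by positivity)
          exact div_le_div₀ one_pos.le hqv1 hε0 he
      _ = t * |m' - m| := by rw [abs_sub_comm, htdef]
  have hrr : |r' - r| ≤ 2 * M * t * |qv' - qv| + 2 * M * (t * t) * |e' - e| + t * |m' - m| := by
    rw [hdiff]
    calc |(qv' - qv) / e' * (y - m') + qv * (e - e') / (e * e') * (y - m') + qv / e * (m - m')|
        ≤ |(qv' - qv) / e' * (y - m')| + |qv * (e - e') / (e * e') * (y - m')| + |qv / e * (m - m')| := by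
          exact (abs_add_le _ _).trans (by gcongr; exact abs_add_le _ _)
      _ ≤ _ := by gcongr
  have hi1b : |i1| ≤ 1 := by rcases hi1 with h | h <;> simp [h]
  have hi2b : |i2| ≤ 1 := by rcases hi2 with h | h <;> simp [h]
  have hD : κ' * (i1 * m' + i2 * r') - κ * (i1 * m + i2 * r) =
      (κ' - κ) * (i1 * m' + i2 * r') + κ * (i1 * (m' - m) + i2 * (r' - r)) := by ring
  have hX1 : |i1 * m' + i2 * r'| ≤ M + 2 * M * t := by
    calc |i1 * m' + i2 * r'| ≤ |i1| * |m'| + |i2| * |r'| := by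
          rw [← abs_mul, ← abs_mul]; exact abs_add_le _ _
      _ ≤ 1 * M + 1 * (2 * M * t) := by gcongr
      _ = M + 2 * M * t := by ring
  have hX2 : |i1 * (m' - m) + i2 * (r' - r)| ≤ |m' - m| + |r' - r| := by
    calc |i1 * (m' - m) + i2 * (r' - r)| ≤ |i1| * |m' - m| + |i2| * |r' - r| := by
          rw [← abs_mul, ← abs_mul]; exact abs_add_le _ _
      _ ≤ 1 * |m' - m| + 1 * |r' - r| := by gcongr
      _ = _ := by ring
  have hmain : |κ' * (i1 * m' + i2 * r') - κ * (i1 * m + i2 * r)| ≤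
      |κ' - κ| * (M + 2 * M * t) + κ * (|m' - m| + |r' - r|) := by
    rw [hD]
    calc |(κ' - κ) * (i1 * m' + i2 * r') + κ * (i1 * (m' - m) + i2 * (r' - r))|
        ≤ |κ' - κ| * |i1 * m' + i2 * r'| + |κ| * |i1 * (m' - m) + i2 * (r' - r)| := by
          rw [← abs_mul, ← abs_mul]; exact abs_add_le _ _
      _ ≤ |κ' - κ| * (M + 2 * M * t) + κ * (|m' - m| + |r' - r|) := by
          rw [abs_of_pos hκ]; gcongr
  have hC : 6 * (K + 1) * (M + 1) / ε ^ 2 = 6 * (K + 1) * (M + 1) * (t * t) := by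
    rw [htdef]; field_simp
  rw [hC]
  have hu : (0:ℝ) ≤ t * t := by positivity
  have h1u : (1:ℝ) ≤ t * t := by
    simpa using mul_le_mul ht1 ht1 zero_le_one htpos.le
  have htu : t ≤ t * t := by
    simpa using mul_le_mul_of_nonneg_left ht1 htpos.le
  have hKMu : (0:ℝ) ≤ K * M * (t * t) := by positivity
  have hKu : (0:ℝ) ≤ K * (t * t) := by positivity
  have hMu : (0:ℝ) ≤ M * (t * t) := by positivity
  have c1 := coef1 M K t hM hK0 ht1
  have c2 := coef2 M K κ t hM hκ hκK ht1
  have c3 := coef3 M K κ t hM hκ hκK ht1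
  have c4 := coef4 M K κ t hM hκ hκK ht1
  calc |κ' * (i1 * m' + i2 * (qv' / e') * (y - m')) - κ * (i1 * m + i2 * (qv / e) * (y - m))|
      = |κ' * (i1 * m' + i2 * r') - κ * (i1 * m + i2 * r)| := by
        congr 1; rw [hrdef, hr'def]; ring
    _ ≤ |κ' - κ| * (M + 2 * M * t) + κ * (|m' - m| + |r' - r|) := hmain
    _ ≤ |κ' - κ| * (M + 2 * M * t) +
        κ * (|m' - m| + (2 * M * t * |qv' - qv| + 2 * M * (t * t) * |e' - e| + t * |m' - m|)) := by
        gcongr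
    _ = |κ' - κ| * (M + 2 * M * t) + (κ * (1 + t)) * |m' - m| +
        (κ * (2 * M * t)) * |qv' - qv| + (κ * (2 * M * (t * t))) * |e' - e| := by ring
    _ ≤ |κ' - κ| * (6 * (K + 1) * (M + 1) * (t * t)) +
        (6 * (K + 1) * (M + 1) * (t * t)) * |m' - m| +
        (6 * (K + 1) * (M + 1) * (t * t)) * |qv' - qv| +
        (6 * (K + 1) * (M + 1) * (t * t)) * |e' - e| := by
        refine add_le_add (add_le_add (add_le_add ?_ ?_) ?_) ?_
        · exact mul_le_mul_of_nonneg_left c1 (abs_nonneg _)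
        · exact mul_le_mul_of_nonneg_right c2 (abs_nonneg _)
        · exact mul_le_mul_of_nonneg_right c3 (abs_nonneg _)
        · exact mul_le_mul_of_nonneg_right c4 (abs_nonneg _)
    _ = 6 * (K + 1) * (M + 1) * (t * t) * (|m' - m| + |e' - e| + |qv' - qv| + |κ' - κ|) := by
        ring

/-- L² Lipschitz continuity of the estimating functional in the nuisances. -/
theorem L2_lipschitz_in_nuisances
    {Ω 𝒜 𝒮 𝒯 𝒳 : Type*}
    [MeasurableSpace Ω]
    [Fintype 𝒜] [Nonempty 𝒜] [DecidableEq 𝒜] [MeasurableSpace 𝒜] [DiscreteMeasurableSpace 𝒜]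
    [Fintype 𝒮] [Nonempty 𝒮] [DecidableEq 𝒮] [MeasurableSpace 𝒮] [DiscreteMeasurableSpace 𝒮]
    [Fintype 𝒯] [Nonempty 𝒯] [DecidableEq 𝒯] [MeasurableSpace 𝒯] [DiscreteMeasurableSpace 𝒯]
    [MeasurableSpace 𝒳]
    (P : Measure Ω) [IsProbabilityMeasure P]
    (A : Ω → 𝒜) (S : Ω → 𝒮) (X : Ω → 𝒳) (g : 𝒳 → 𝒯) (Y : Ω → ℝ)
    (hA : Measurable A) (hS : Measurable S) (hX : Measurable X) (hg : Measurable g)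
    (hY : MemLp Y 2 P)
    (a : 𝒜) (s : 𝒮) (xt : 𝒯)
    (η q μ : 𝒳 → ℝ) (hηm : Measurable η) (hqm : Measurable q) (hμm : Measurable μ)
    -- propensity score: η_a(X) = E[1{A=a} | σ(X)] a.s.
    (hη : (fun ω => η (X ω)) =ᵐ[P]
      condExp (sigmaGen X) P (fun ω => if A ω = a then (1 : ℝ) else 0))
    -- source model: q_s(X) = E[1{S=s} | σ(X)] a.s.
    (hq : (fun ω => q (X ω)) =ᵐ[P]
      condExp (sigmaGen X) P (fun ω => if S ω = s then (1 : ℝ) else 0))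
    -- outcome regression: 1{A=a}·E[Y | σ(X,A)] = 1{A=a}·μ_a(X) a.s.
    (hμ : (fun ω => (if A ω = a then (1 : ℝ) else 0) *
        condExp (sigmaGen (fun ω => (X ω, A ω))) P Y ω) =ᵐ[P]
      (fun ω => (if A ω = a then (1 : ℝ) else 0) * μ (X ω)))
    (M ε K : ℝ) (hM : 0 ≤ M) (hε0 : 0 < ε) (hε1 : ε ≤ 1)
    (hYbd : ∀ᵐ ω ∂P, |Y ω| ≤ M)
    (hηbd : ∀ᵐ ω ∂P, ε ≤ η (X ω) ∧ η (X ω) ≤ 1)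
    (hqbd : ∀ᵐ ω ∂P, 0 ≤ q (X ω) ∧ q (X ω) ≤ 1)
    (hμbd : ∀ᵐ ω ∂P, |μ (X ω)| ≤ M)
    (μ' η' q' : 𝒳 → ℝ) (hμ'm : Measurable μ') (hη'm : Measurable η') (hq'm : Measurable q')
    (hη'bd : ∀ᵐ ω ∂P, ε ≤ η' (X ω) ∧ η' (X ω) ≤ 1)
    (hq'bd : ∀ᵐ ω ∂P, 0 ≤ q' (X ω) ∧ q' (X ω) ≤ 1)
    (hμ'bd : ∀ᵐ ω ∂P, |μ' (X ω)| ≤ M)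
    (κ κ' : ℝ) (hκ : 0 < κ) (hκK : κ ≤ K) (hκ' : 0 < κ') (hκ'K : κ' ≤ K)
    (G G' : Ω → ℝ)
    (hG : G = fun ω => κ *
      ((if g (X ω) = xt ∧ S ω = s then (1 : ℝ) else 0) * μ (X ω) +
        (if A ω = a ∧ g (X ω) = xt then (1 : ℝ) else 0) * (q (X ω) / η (X ω)) *
          (Y ω - μ (X ω))))
    (hG' : G' = fun ω => κ' *
      ((if g (X ω) = xt ∧ S ω = s then (1 : ℝ) else 0) * μ' (X ω) +
        (if A ω = a ∧ g (X ω) = xt then (1 : ℝ) else 0) * (q' (X ω) / η' (X ω)) *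
          (Y ω - μ' (X ω)))) :
    eLpNorm (fun ω => G' ω - G ω) 2 P ≤
      ENNReal.ofReal (6 * (K + 1) * (M + 1) / ε ^ 2) *
        (eLpNorm (fun ω => μ' (X ω) - μ (X ω)) 2 P +
          eLpNorm (fun ω => η' (X ω) - η (X ω)) 2 P +
          eLpNorm (fun ω => q' (X ω) - q (X ω)) 2 P +
          ENNReal.ofReal |κ' - κ|) := by
  have hK0 : 0 < K := hκ.trans_le hκK
  have hC : 0 ≤ 6 * (K + 1) * (M + 1) / ε ^ 2 := by
    apply div_nonneg _ (by positivity); nlinarith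
  have hpt : ∀ᵐ ω ∂P, ‖G' ω - G ω‖ ≤
      ‖6 * (K + 1) * (M + 1) / ε ^ 2 *
        (|μ' (X ω) - μ (X ω)| + |η' (X ω) - η (X ω)| + |q' (X ω) - q (X ω)| + |κ' - κ|)‖ := by
    filter_upwards [hYbd, hηbd, hqbd, hμbd, hη'bd, hq'bd, hμ'bd] with ω h1 h2 h3 h4 h5 h6 h7
    rw [Real.norm_eq_abs, Real.norm_eq_abs,
      abs_of_nonneg (mul_nonneg hC (by positivity))]
    rw [hG, hG']
    exact key_bound M ε K κ κ' (μ (X ω)) (μ' (X ω)) (η (X ω)) (η' (X ω)) (q (X ω))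
      (q' (X ω)) (Y ω) _ _ hM hε0 hε1 h1 h4 h7 h2.1 h2.2 h5.1 h5.2 h3.1 h3.2 h6.1 h6.2
      hκ hκK hκ' hκ'K
      (by by_cases h : g (X ω) = xt ∧ S ω = s <;> simp [h])
      (by by_cases h : A ω = a ∧ g (X ω) = xt <;> simp [h])
  have m1 : AEStronglyMeasurable (fun ω => |μ' (X ω) - μ (X ω)|) P :=
    (((hμ'm.sub hμm).comp hX).abs).aestronglyMeasurable
  have m2 : AEStronglyMeasurable (fun ω => |η' (X ω) - η (X ω)|) P :=
    (((hη'm.sub hηm).comp hX).abs).aestronglyMeasurable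
  have m3 : AEStronglyMeasurable (fun ω => |q' (X ω) - q (X ω)|) P :=
    (((hq'm.sub hqm).comp hX).abs).aestronglyMeasurable
  have habs1 : eLpNorm (fun ω => |μ' (X ω) - μ (X ω)|) 2 P =
      eLpNorm (fun ω => μ' (X ω) - μ (X ω)) 2 P := by
    simpa [Real.norm_eq_abs] using
      eLpNorm_norm (p := 2) (μ := P) (fun ω => μ' (X ω) - μ (X ω))
  have habs2 : eLpNorm (fun ω => |η' (X ω) - η (X ω)|) 2 P =
      eLpNorm (fun ω => η' (X ω) - η (X ω)) 2 P := by
    simpa [Real.norm_eq_abs] using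
      eLpNorm_norm (p := 2) (μ := P) (fun ω => η' (X ω) - η (X ω))
  have habs3 : eLpNorm (fun ω => |q' (X ω) - q (X ω)|) 2 P =
      eLpNorm (fun ω => q' (X ω) - q (X ω)) 2 P := by
    simpa [Real.norm_eq_abs] using
      eLpNorm_norm (p := 2) (μ := P) (fun ω => q' (X ω) - q (X ω))
  have hconst : eLpNorm (fun _ : Ω => |κ' - κ|) 2 P = ENNReal.ofReal |κ' - κ| := by
    rw [eLpNorm_const _ two_ne_zero (by simp [IsProbabilityMeasure.ne_zero])]
    simp [Real.enorm_eq_ofReal_abs]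
  calc eLpNorm (fun ω => G' ω - G ω) 2 P
      ≤ eLpNorm (fun ω => 6 * (K + 1) * (M + 1) / ε ^ 2 *
          (|μ' (X ω) - μ (X ω)| + |η' (X ω) - η (X ω)| + |q' (X ω) - q (X ω)| + |κ' - κ|))
          2 P := eLpNorm_mono_ae hpt
    _ = ENNReal.ofReal (6 * (K + 1) * (M + 1) / ε ^ 2) *
        eLpNorm (fun ω =>
          |μ' (X ω) - μ (X ω)| + |η' (X ω) - η (X ω)| + |q' (X ω) - q (X ω)| + |κ' - κ|)
          2 P := by
        rw [show (fun ω => 6 * (K + 1) * (M + 1) / ε ^ 2 *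
            (|μ' (X ω) - μ (X ω)| + |η' (X ω) - η (X ω)| + |q' (X ω) - q (X ω)| + |κ' - κ|)) =
          (6 * (K + 1) * (M + 1) / ε ^ 2) • (fun ω =>
            |μ' (X ω) - μ (X ω)| + |η' (X ω) - η (X ω)| + |q' (X ω) - q (X ω)| + |κ' - κ|)
          from rfl, eLpNorm_const_smul]
        rw [Real.enorm_eq_ofReal hC]
    _ ≤ ENNReal.ofReal (6 * (K + 1) * (M + 1) / ε ^ 2) *
        (eLpNorm (fun ω => μ' (X ω) - μ (X ω)) 2 P +
          eLpNorm (fun ω => η' (X ω) - η (X ω)) 2 P +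
          eLpNorm (fun ω => q' (X ω) - q (X ω)) 2 P +
          ENNReal.ofReal |κ' - κ|) := by
        refine mul_le_mul_right ?_ _
        calc eLpNorm (fun ω =>
              |μ' (X ω) - μ (X ω)| + |η' (X ω) - η (X ω)| + |q' (X ω) - q (X ω)| + |κ' - κ|)
              2 P
            ≤ eLpNorm (fun ω =>
                |μ' (X ω) - μ (X ω)| + |η' (X ω) - η (X ω)| + |q' (X ω) - q (X ω)|) 2 P +
              eLpNorm (fun _ : Ω => |κ' - κ|) 2 P :=
              eLpNorm_add_le ((m1.add m2).add m3) aestronglyMeasurable_const one_le_two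
          _ ≤ (eLpNorm (fun ω => |μ' (X ω) - μ (X ω)| + |η' (X ω) - η (X ω)|) 2 P +
              eLpNorm (fun ω => |q' (X ω) - q (X ω)|) 2 P) +
              eLpNorm (fun _ : Ω => |κ' - κ|) 2 P := by
              gcongr
              exact eLpNorm_add_le (m1.add m2) m3 one_le_two
          _ ≤ ((eLpNorm (fun ω => |μ' (X ω) - μ (X ω)|) 2 P +
              eLpNorm (fun ω => |η' (X ω) - η (X ω)|) 2 P) +
              eLpNorm (fun ω => |q' (X ω) - q (X ω)|) 2 P) +
              eLpNorm (fun _ : Ω => |κ' - κ|) 2 P := by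
              gcongr
              exact eLpNorm_add_le m1 m2 one_le_two
          _ = eLpNorm (fun ω => μ' (X ω) - μ (X ω)) 2 P +
              eLpNorm (fun ω => η' (X ω) - η (X ω)) 2 P +
              eLpNorm (fun ω => q' (X ω) - q (X ω)) 2 P +
              ENNReal.ofReal |κ' - κ| := by
              rw [habs1, habs2, habs3, hconst]
end

section
/- (Theorem 3, g-formula part.) Under assumptions (E1)–(E4) for the fixed treatment a and ℙ(X̃ = x̃ ∧ R = 0) > 0, the subgroup potential outcome mean in the external target population is identified: 𝔼[Y^a | X̃ = x̃ ∧ R = 0] = 𝔼[g_a(X) | X̃ = x̃ ∧ R = 0]. -/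
open MeasureTheory ProbabilityTheory

/-- Theorem 3, g-formula part: identification of the subgroup potential
outcome mean in the external target population. -/
theorem external_identification
    {Ω 𝒜 𝒯 𝒳 : Type*}
    [MeasurableSpace Ω]
    [Fintype 𝒜] [Nonempty 𝒜] [DecidableEq 𝒜] [MeasurableSpace 𝒜] [DiscreteMeasurableSpace 𝒜]
    [Fintype 𝒯] [Nonempty 𝒯] [DecidableEq 𝒯] [MeasurableSpace 𝒯] [DiscreteMeasurableSpace 𝒯]
    [MeasurableSpace 𝒳]
    (P : Measure Ω) [IsProbabilityMeasure P]
    (A : Ω → 𝒜) (R : Ω → Bool) (X : Ω → 𝒳) (em : 𝒳 → 𝒯) (Y : Ω → ℝ)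
    (hA : Measurable A) (hR : Measurable R) (hX : Measurable X) (hem : Measurable em)
    (hY : MemLp Y 2 P)
    (a : 𝒜) (xt : 𝒯)
    (pf ea ga : 𝒳 → ℝ) (hpfm : Measurable pf) (heam : Measurable ea) (hgam : Measurable ga)
    -- participation model: p(X) = E[1{R=1} | σ(X)] a.s.
    (hpf : (fun ω => pf (X ω)) =ᵐ[P]
      condExp (sigmaGen X) P (fun ω => if R ω = true then (1 : ℝ) else 0))
    -- propensity in the multi-source data: p(X)·e_a(X) = E[1{R=1, A=a} | σ(X)] a.s.
    (hea : (fun ω => pf (X ω) * ea (X ω)) =ᵐ[P]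
      condExp (sigmaGen X) P (fun ω => if R ω = true ∧ A ω = a then (1 : ℝ) else 0))
    -- outcome regression: 1{R=1, A=a}·E[Y | σ(X,A,R)] = 1{R=1, A=a}·g_a(X) a.s.
    (hga : (fun ω => (if R ω = true ∧ A ω = a then (1 : ℝ) else 0) *
        condExp (sigmaGen (fun ω => (X ω, A ω, R ω))) P Y ω) =ᵐ[P]
      (fun ω => (if R ω = true ∧ A ω = a then (1 : ℝ) else 0) * ga (X ω)))
    -- potential outcomes
    (Ypot : 𝒜 → Ω → ℝ) (hYpot : ∀ b, MemLp (Ypot b) 2 P)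
    -- (E1) consistency
    (hE1 : ∀ᵐ ω ∂P, Y ω = Ypot (A ω) ω)
    -- (E2) mean exchangeability over treatment within the multi-source data
    (hE2 : (fun ω => (if R ω = true then (1 : ℝ) else 0) *
        condExp (sigmaGen (fun ω => (X ω, R ω))) P
          (fun ω => (if A ω = a then (1 : ℝ) else 0) * Ypot a ω) ω) =ᵐ[P]
      (fun ω => (if R ω = true then (1 : ℝ) else 0) *
        (condExp (sigmaGen (fun ω => (X ω, R ω))) P (Ypot a) ω *
          condExp (sigmaGen (fun ω => (X ω, R ω))) P
            (fun ω => if A ω = a then (1 : ℝ) else 0) ω)))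
    -- (E3) positivity
    (hE3 : ∀ᵐ ω ∂P,
      0 < condExp (sigmaGen X) P (fun ω => if R ω = true ∧ A ω = a then (1 : ℝ) else 0) ω)
    -- (E4) mean exchangeability over the external data indicator
    (hE4 : condExp (sigmaGen (fun ω => (X ω, R ω))) P (Ypot a) =ᵐ[P]
      condExp (sigmaGen X) P (Ypot a))
    (hE : 0 < P {ω | em (X ω) = xt ∧ R ω = false}) :
    (∫ ω in {ω | em (X ω) = xt ∧ R ω = false}, Ypot a ω ∂P) / (P {ω | em (X ω) = xt ∧ R ω = false}).toReal =
      (∫ ω in {ω | em (X ω) = xt ∧ R ω = false}, ga (X ω) ∂P) / (P {ω | em (X ω) = xt ∧ R ω = false}).toReal := by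
  classical
  -- σ-algebra order facts (stated before `set` so that ‹MeasurableSpace Ω› is the ambient one)
  have hmXAR_le : sigmaGen (fun ω => (X ω, A ω, R ω)) ≤ ‹MeasurableSpace Ω› :=
    (hX.prodMk (hA.prodMk hR)).comap_le
  have hmXR_le : sigmaGen (fun ω => (X ω, R ω)) ≤ ‹MeasurableSpace Ω› :=
    (hX.prodMk hR).comap_le
  have hmX_le : sigmaGen X ≤ ‹MeasurableSpace Ω› := hX.comap_le
  have hmX_XR : sigmaGen X ≤ sigmaGen (fun ω : Ω => (X ω, R ω)) := by
    have h : sigmaGen X = MeasurableSpace.comap (fun ω : Ω => (X ω, R ω))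
        (MeasurableSpace.comap Prod.fst inferInstance) := by
      rw [sigmaGen, MeasurableSpace.comap_comp]; rfl
    rw [h, sigmaGen]
    exact MeasurableSpace.comap_mono measurable_fst.comap_le
  have hmX_XAR : sigmaGen X ≤ sigmaGen (fun ω : Ω => (X ω, A ω, R ω)) := by
    have h : sigmaGen X = MeasurableSpace.comap (fun ω : Ω => (X ω, A ω, R ω))
        (MeasurableSpace.comap Prod.fst inferInstance) := by
      rw [sigmaGen, MeasurableSpace.comap_comp]; rfl
    rw [h, sigmaGen]
    exact MeasurableSpace.comap_mono measurable_fst.comap_le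
  have hmXR_XAR : sigmaGen (fun ω : Ω => (X ω, R ω)) ≤ sigmaGen (fun ω : Ω => (X ω, A ω, R ω)) := by
    have h : sigmaGen (fun ω : Ω => (X ω, R ω)) = MeasurableSpace.comap (fun ω : Ω => (X ω, A ω, R ω))
        (MeasurableSpace.comap (fun p : 𝒳 × 𝒜 × Bool => (p.1, p.2.2)) inferInstance) := by
      rw [sigmaGen, MeasurableSpace.comap_comp]; rfl
    rw [h, sigmaGen]
    exact MeasurableSpace.comap_mono (measurable_fst.prodMk measurable_snd.snd).comap_le
  -- ambient measurability of indicators (before `set`, to use ambient instance)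
  have hIRA_meas : Measurable (fun ω : Ω => if R ω = true ∧ A ω = a then (1 : ℝ) else 0) :=
    Measurable.ite ((hR (measurableSet_singleton true)).inter (hA (measurableSet_singleton a)))
      measurable_const measurable_const
  have hIR_meas : Measurable (fun ω : Ω => if R ω = true then (1 : ℝ) else 0) :=
    Measurable.ite (hR (measurableSet_singleton true)) measurable_const measurable_const
  have hIA_meas : Measurable (fun ω : Ω => if A ω = a then (1 : ℝ) else 0) :=
    Measurable.ite (hA (measurableSet_singleton a)) measurable_const measurable_const
  set mX := sigmaGen X with hmXdef
  set mXR := sigmaGen (fun ω => (X ω, R ω)) with hmXRdef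
  set mXAR := sigmaGen (fun ω => (X ω, A ω, R ω)) with hmXARdef
  -- indicator functions
  set IRA : Ω → ℝ := fun ω => if R ω = true ∧ A ω = a then (1 : ℝ) else 0 with hIRAdef
  set IR : Ω → ℝ := fun ω => if R ω = true then (1 : ℝ) else 0 with hIRdef
  set IA : Ω → ℝ := fun ω => if A ω = a then (1 : ℝ) else 0 with hIAdef
  -- measurability of the generating maps w.r.t. the generated σ-algebras
  have hXAR_meas : Measurable[mXAR] (fun ω => (X ω, A ω, R ω)) := measurable_iff_comap_le.mpr le_rfl
  have hXR_meas : Measurable[mXR] (fun ω => (X ω, R ω)) := measurable_iff_comap_le.mpr le_rfl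
  have hX_meas : Measurable[mX] X := measurable_iff_comap_le.mpr le_rfl
  -- measurability of indicators
  have hIRA_sm : StronglyMeasurable[mXAR] IRA := by
    have hs : MeasurableSet {p : 𝒳 × 𝒜 × Bool | p.2.2 = true ∧ p.2.1 = a} :=
      (measurable_snd.snd (measurableSet_singleton true)).inter
        (measurable_snd.fst (measurableSet_singleton a))
    have h0 : Measurable (fun p : 𝒳 × 𝒜 × Bool => if p.2.2 = true ∧ p.2.1 = a then (1 : ℝ) else 0) :=
      Measurable.ite hs measurable_const measurable_const
    exact (h0.comp hXAR_meas).stronglyMeasurable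
  have hIR_sm : StronglyMeasurable[mXR] IR := by
    have h0 : Measurable (fun p : 𝒳 × Bool => if p.2 = true then (1 : ℝ) else 0) :=
      Measurable.ite (measurable_snd (measurableSet_singleton true)) measurable_const
        measurable_const
    exact (h0.comp hXR_meas).stronglyMeasurable
  have hgaX_sm : StronglyMeasurable[mX] (fun ω => ga (X ω)) :=
    (hgam.comp hX_meas).stronglyMeasurable
  -- integrability
  have hYint : Integrable Y P := hY.integrable (by norm_num)
  have hYpa : Integrable (Ypot a) P := (hYpot a).integrable (by norm_num)
  have hIRA_bdd : ∀ ω, ‖IRA ω‖ ≤ 1 := by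
    intro ω; rw [hIRAdef]; dsimp only; split <;> simp
  have hIR_bdd : ∀ ω, ‖IR ω‖ ≤ 1 := by
    intro ω; rw [hIRdef]; dsimp only; split <;> simp
  have hIA_bdd : ∀ ω, ‖IA ω‖ ≤ 1 := by
    intro ω; rw [hIAdef]; dsimp only; split <;> simp
  have hIRAint : Integrable IRA P :=
    (integrable_const (1 : ℝ)).mono' hIRA_meas.aestronglyMeasurable
      (Filter.Eventually.of_forall fun ω => by simpa using hIRA_bdd ω)
  have hIAint : Integrable IA P :=
    (integrable_const (1 : ℝ)).mono' hIA_meas.aestronglyMeasurable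
      (Filter.Eventually.of_forall fun ω => by simpa using hIA_bdd ω)
  have hIRAY : Integrable (fun ω => IRA ω * Y ω) P :=
    hYint.bdd_mul hIRA_meas.aestronglyMeasurable (Filter.Eventually.of_forall hIRA_bdd)
  have hIRAYpa : Integrable (fun ω => IRA ω * Ypot a ω) P :=
    hYpa.bdd_mul hIRA_meas.aestronglyMeasurable (Filter.Eventually.of_forall hIRA_bdd)
  have hIAYpa : Integrable (fun ω => IA ω * Ypot a ω) P :=
    hYpa.bdd_mul hIA_meas.aestronglyMeasurable (Filter.Eventually.of_forall hIA_bdd)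
  have hIRIAYpa : Integrable (fun ω => IR ω * (IA ω * Ypot a ω)) P :=
    hIAYpa.bdd_mul hIR_meas.aestronglyMeasurable (Filter.Eventually.of_forall hIR_bdd)
  -- splitting of the indicator
  have hsplit : ∀ ω, IRA ω = IR ω * IA ω := by
    intro ω
    rw [hIRAdef, hIRdef, hIAdef]
    by_cases h1 : R ω = true <;> by_cases h2 : A ω = a <;> simp [h1, h2]
  ---- Step A: E[IRA·Y | mX] = ga(X) · E[IRA | mX]
  have tower1 : condExp mXAR P (fun ω => IRA ω * Y ω) =ᵐ[P] fun ω => IRA ω * ga (X ω) := by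
    have h := condExp_mul_of_stronglyMeasurable_left hIRA_sm
      (μ := P) (g := Y) hIRAY hYint
    exact h.trans hga
  have hIRAga_int : Integrable (fun ω => IRA ω * ga (X ω)) P :=
    integrable_condExp.congr tower1
  have stepA : condExp mX P (fun ω => IRA ω * Y ω) =ᵐ[P]
      fun ω => ga (X ω) * condExp mX P IRA ω := by
    have t1 : condExp mX P (fun ω => IRA ω * Y ω) =ᵐ[P]
        condExp mX P (condExp mXAR P (fun ω => IRA ω * Y ω)) :=
      (condExp_condExp_of_le hmX_XAR hmXAR_le).symm
    have t2 : condExp mX P (condExp mXAR P (fun ω => IRA ω * Y ω)) =ᵐ[P]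
        condExp mX P (fun ω => ga (X ω) * IRA ω) := by
      refine condExp_congr_ae (tower1.trans ?_)
      exact Filter.Eventually.of_forall fun ω => mul_comm _ _
    have t3 : condExp mX P (fun ω => ga (X ω) * IRA ω) =ᵐ[P]
        fun ω => ga (X ω) * condExp mX P IRA ω := by
      have := condExp_mul_of_stronglyMeasurable_left hgaX_sm
        (μ := P) (g := IRA)
        (by
          refine hIRAga_int.congr ?_
          exact Filter.Eventually.of_forall fun ω => mul_comm _ _) hIRAint
      exact this
    exact (t1.trans t2).trans t3
  ---- Step B: E[IRA·Ypot a | mX] = E[Ypot a | mX] · E[IRA | mX]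
  have pullIR : condExp mXR P (fun ω => IR ω * (IA ω * Ypot a ω)) =ᵐ[P]
      fun ω => IR ω * condExp mXR P (fun ω => IA ω * Ypot a ω) ω :=
    condExp_mul_of_stronglyMeasurable_left hIR_sm (μ := P)
      hIRIAYpa hIAYpa
  have pullIR2 : condExp mXR P IRA =ᵐ[P] fun ω => IR ω * condExp mXR P IA ω := by
    have h := condExp_mul_of_stronglyMeasurable_left hIR_sm (μ := P)
      (g := IA) (by refine hIRAint.congr ?_; exact Filter.Eventually.of_forall hsplit) hIAint
    refine Filter.EventuallyEq.trans ?_ h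
    refine condExp_congr_ae ?_
    exact Filter.Eventually.of_forall hsplit
  have c1 : condExp mXR P (fun ω => IRA ω * Ypot a ω) =ᵐ[P]
      fun ω => condExp mX P (Ypot a) ω * condExp mXR P IRA ω := by
    have e0 : condExp mXR P (fun ω => IRA ω * Ypot a ω) =ᵐ[P]
        condExp mXR P (fun ω => IR ω * (IA ω * Ypot a ω)) := by
      refine condExp_congr_ae (Filter.Eventually.of_forall fun ω => ?_)
      show IRA ω * Ypot a ω = IR ω * (IA ω * Ypot a ω)
      rw [hsplit ω, mul_assoc]
    refine ((e0.trans pullIR).trans (hE2)).trans ?_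
    filter_upwards [hE4, pullIR2] with ω h4 hp2
    rw [hp2, h4]; ring
  have hfc_int : Integrable (fun ω => condExp mX P (Ypot a) ω * condExp mXR P IRA ω) P :=
    integrable_condExp.congr c1
  have stepB : condExp mX P (fun ω => IRA ω * Ypot a ω) =ᵐ[P]
      fun ω => condExp mX P (Ypot a) ω * condExp mX P IRA ω := by
    have t1 : condExp mX P (fun ω => IRA ω * Ypot a ω) =ᵐ[P]
        condExp mX P (condExp mXR P (fun ω => IRA ω * Ypot a ω)) :=
      (condExp_condExp_of_le hmX_XR hmXR_le).symm
    have t2 : condExp mX P (condExp mXR P (fun ω => IRA ω * Ypot a ω)) =ᵐ[P]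
        condExp mX P (fun ω => condExp mX P (Ypot a) ω * condExp mXR P IRA ω) :=
      condExp_congr_ae c1
    have t3 : condExp mX P (fun ω => condExp mX P (Ypot a) ω * condExp mXR P IRA ω) =ᵐ[P]
        fun ω => condExp mX P (Ypot a) ω * condExp mX P (condExp mXR P IRA) ω := by
      exact condExp_mul_of_stronglyMeasurable_left stronglyMeasurable_condExp
        (μ := P) hfc_int integrable_condExp
    have t4 : (fun ω => condExp mX P (Ypot a) ω * condExp mX P (condExp mXR P IRA) ω) =ᵐ[P]
        fun ω => condExp mX P (Ypot a) ω * condExp mX P IRA ω := by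
      filter_upwards [condExp_condExp_of_le hmX_XR hmXR_le (f := IRA)] with ω h
      rw [h]
    exact ((t1.trans t2).trans t3).trans t4
  ---- Step C: consistency
  have stepC : (fun ω => IRA ω * Y ω) =ᵐ[P] fun ω => IRA ω * Ypot a ω := by
    filter_upwards [hE1] with ω h
    rw [hIRAdef]; dsimp only
    by_cases h2 : R ω = true ∧ A ω = a
    · rw [if_pos h2, h, h2.2]
    · rw [if_neg h2]; ring
  ---- combine: E[Ypot a | mX] = ga ∘ X a.e.
  have key : condExp mX P (Ypot a) =ᵐ[P] fun ω => ga (X ω) := by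
    have h1 : (fun ω => condExp mX P (Ypot a) ω * condExp mX P IRA ω) =ᵐ[P]
        fun ω => ga (X ω) * condExp mX P IRA ω :=
      (stepB.symm.trans (condExp_congr_ae stepC.symm)).trans stepA
    filter_upwards [h1, hE3] with ω h hpos
    exact mul_right_cancel₀ (ne_of_gt hpos) h
  ---- final integral computation
  have hSet : MeasurableSet[mXR] {ω | em (X ω) = xt ∧ R ω = false} := by
    refine ⟨{p : 𝒳 × Bool | em p.1 = xt ∧ p.2 = false}, ?_, rfl⟩
    have h1 : MeasurableSet {p : 𝒳 × Bool | em p.1 = xt} :=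
      (hem.comp measurable_fst) (measurableSet_singleton xt)
    have h2 : MeasurableSet {p : 𝒳 × Bool | p.2 = false} :=
      measurable_snd (measurableSet_singleton false)
    exact h1.inter h2
  have hint1 : ∫ ω in {ω | em (X ω) = xt ∧ R ω = false}, Ypot a ω ∂P
      = ∫ ω in {ω | em (X ω) = xt ∧ R ω = false}, ga (X ω) ∂P := by
    rw [← setIntegral_condExp hmXR_le hYpa hSet]
    refine integral_congr_ae (ae_restrict_of_ae ?_)
    exact hE4.trans key
  rw [hint1]
end

section
/- The influence function Ψ has mean zero: assume ℙ(X̃ = x̃ ∧ R = 0) > 0 and p(X)·e_a(X) ≥ ε a.s. for some ε > 0. Set γ := 1/ℙ(X̃ = x̃ ∧ R = 0), ψ := 𝔼[g_a(X) | X̃ = x̃ ∧ R = 0], and Ψ := γ·[ 1{X̃ = x̃, R = 0}·(g_a(X) − ψ) + 1{A = a, X̃ = x̃, R = 1}·((1 − p(X))/(p(X)·e_a(X)))·(Y − g_a(X)) ]. Then Ψ is integrable and 𝔼[Ψ] = 0. -/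
open MeasureTheory ProbabilityTheory

/-- helper: for `m`-strongly-measurable a.e.-bounded `f` and integrable `g`,
`f·g` is integrable and `∫ f·g = ∫ f·E[g|m]`. -/
lemma myhelper_integral_mul_condExp
    {Ω : Type*} {m m0 : MeasurableSpace Ω} (hm : m ≤ m0) (P : @Measure Ω m0)
    [IsProbabilityMeasure P] {f g : Ω → ℝ} (hf : StronglyMeasurable[m] f) {c : ℝ}
    (hfb : ∀ᵐ ω ∂P, ‖f ω‖ ≤ c) (hg : Integrable g P) :
    Integrable (fun ω => f ω * g ω) P ∧
      ∫ ω, f ω * g ω ∂P = ∫ ω, f ω * (condExp m P g) ω ∂P := by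
  have hfg : Integrable (fun ω => f ω * g ω) P :=
    hg.bdd_mul (hf.mono hm).aestronglyMeasurable hfb
  refine ⟨hfg, ?_⟩
  have h1 : ∫ ω, (condExp m P (f * g)) ω ∂P = ∫ ω, (f * g) ω ∂P := integral_condExp hm
  have h2 := condExp_stronglyMeasurable_mul_of_bound hm hf hg c hfb
  calc ∫ ω, f ω * g ω ∂P = ∫ ω, (condExp m P (f * g)) ω ∂P := h1.symm
    _ = ∫ ω, f ω * (condExp m P g) ω ∂P := integral_congr_ae (h2.mono fun ω h => h)

/-- the influence function Ψ is integrable with mean zero. -/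
theorem external_influence_function_mean_zero
    {Ω 𝒜 𝒯 𝒳 : Type*}
    [MeasurableSpace Ω]
    [Fintype 𝒜] [Nonempty 𝒜] [DecidableEq 𝒜] [MeasurableSpace 𝒜] [DiscreteMeasurableSpace 𝒜]
    [Fintype 𝒯] [Nonempty 𝒯] [DecidableEq 𝒯] [MeasurableSpace 𝒯] [DiscreteMeasurableSpace 𝒯]
    [MeasurableSpace 𝒳]
    (P : Measure Ω) [IsProbabilityMeasure P]
    (A : Ω → 𝒜) (R : Ω → Bool) (X : Ω → 𝒳) (em : 𝒳 → 𝒯) (Y : Ω → ℝ)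
    (hA : Measurable A) (hR : Measurable R) (hX : Measurable X) (hem : Measurable em)
    (hY : MemLp Y 2 P)
    (a : 𝒜) (xt : 𝒯)
    (pf ea ga : 𝒳 → ℝ) (hpfm : Measurable pf) (heam : Measurable ea) (hgam : Measurable ga)
    -- participation model: p(X) = E[1{R=1} | σ(X)] a.s.
    (hpf : (fun ω => pf (X ω)) =ᵐ[P]
      condExp (sigmaGen X) P (fun ω => if R ω = true then (1 : ℝ) else 0))
    -- propensity in the multi-source data: p(X)·e_a(X) = E[1{R=1, A=a} | σ(X)] a.s.
    (hea : (fun ω => pf (X ω) * ea (X ω)) =ᵐ[P]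
      condExp (sigmaGen X) P (fun ω => if R ω = true ∧ A ω = a then (1 : ℝ) else 0))
    -- outcome regression: 1{R=1, A=a}·E[Y | σ(X,A,R)] = 1{R=1, A=a}·g_a(X) a.s.
    (hga : (fun ω => (if R ω = true ∧ A ω = a then (1 : ℝ) else 0) *
        condExp (sigmaGen (fun ω => (X ω, A ω, R ω))) P Y ω) =ᵐ[P]
      (fun ω => (if R ω = true ∧ A ω = a then (1 : ℝ) else 0) * ga (X ω)))
    (ε : ℝ) (hε : 0 < ε) (hεpe : ∀ᵐ ω ∂P, ε ≤ pf (X ω) * ea (X ω))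
    (hE : 0 < P {ω | em (X ω) = xt ∧ R ω = false})
    (γ ψ : ℝ) (Ψ : Ω → ℝ)
    (hγ : γ = ((P {ω | em (X ω) = xt ∧ R ω = false}).toReal)⁻¹)
    (hψ : ψ = (∫ ω in {ω | em (X ω) = xt ∧ R ω = false}, ga (X ω) ∂P) / (P {ω | em (X ω) = xt ∧ R ω = false}).toReal)
    (hΨ : Ψ = fun ω => γ *
      ((if em (X ω) = xt ∧ R ω = false then (1 : ℝ) else 0) * (ga (X ω) - ψ) +
        (if A ω = a ∧ em (X ω) = xt ∧ R ω = true then (1 : ℝ) else 0) *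
          ((1 - pf (X ω)) / (pf (X ω) * ea (X ω))) * (Y ω - ga (X ω)))) :
    Integrable Ψ P ∧ ∫ ω, Ψ ω ∂P = 0 := by
  classical
  -- basic σ-algebras
  have hm : sigmaGen X ≤ (inferInstance : MeasurableSpace Ω) := hX.comap_le
  have hm2 : sigmaGen (fun ω : Ω => (X ω, A ω, R ω)) ≤ (inferInstance : MeasurableSpace Ω) :=
    (hX.prodMk (hA.prodMk hR)).comap_le
  have hXm : Measurable[sigmaGen X] X := comap_measurable X
  -- indicator of {R = 1, A = a}
  set I1 : Ω → ℝ := fun ω => if R ω = true ∧ A ω = a then (1 : ℝ) else 0 with hI1_def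
  have hI1set : MeasurableSet {ω | R ω = true ∧ A ω = a} := by
    have : {ω | R ω = true ∧ A ω = a} = R ⁻¹' {true} ∩ A ⁻¹' {a} := by
      ext ω; simp [Set.mem_setOf_eq]
    rw [this]
    exact (hR (measurableSet_singleton true)).inter (hA (measurableSet_singleton a))
  have hI1meas : Measurable I1 := Measurable.ite hI1set measurable_const measurable_const
  have hI1b : ∀ ω, ‖I1 ω‖ ≤ 1 := by
    intro ω; by_cases hc : R ω = true ∧ A ω = a <;> simp [hI1_def, hc]
  have hI1int : Integrable I1 P :=
    Integrable.mono' (integrable_const 1) hI1meas.aestronglyMeasurable (ae_of_all _ hI1b)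
  -- conditional expectation of Y given (X, A, R)
  set D : Ω → ℝ := condExp (sigmaGen (fun ω : Ω => (X ω, A ω, R ω))) P Y with hD_def
  have hDint : Integrable D P := integrable_condExp
  have hYint : Integrable Y P := hY.integrable one_le_two
  -- |ga ∘ X| * I1 is integrable
  have hI1Dint : Integrable (fun ω => I1 ω * D ω) P :=
    hDint.bdd_mul hI1meas.aestronglyMeasurable (ae_of_all _ hI1b)
  have hCint : Integrable (fun ω => |ga (X ω)| * I1 ω) P := by
    refine hI1Dint.abs.congr ?_
    filter_upwards [hga] with ω h
    by_cases hc : R ω = true ∧ A ω = a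
    · simp only [hI1_def, if_pos hc, one_mul, mul_one] at h ⊢
      rw [h]
    · simp [hI1_def, if_neg hc]
  set C : ℝ := ∫ ω, |ga (X ω)| * I1 ω ∂P with hC_def
  -- truncation bound
  have htrunc : ∀ n : ℕ, ∫ ω, min |ga (X ω)| (n : ℝ) ∂P ≤ C / ε := by
    intro n
    set fn : Ω → ℝ := fun ω => min |ga (X ω)| (n : ℝ) with hfn_def
    have hfn_nonneg : ∀ ω, 0 ≤ fn ω := fun ω => le_min (abs_nonneg _) (Nat.cast_nonneg n)
    have hfnm : Measurable[sigmaGen X] fn := (hgam.abs.min measurable_const).comp hXm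
    have hfnb : ∀ ω, ‖fn ω‖ ≤ (n : ℝ) := by
      intro ω
      rw [Real.norm_eq_abs, abs_of_nonneg (hfn_nonneg ω)]
      exact min_le_right _ _
    have hfnint : Integrable fn P :=
      Integrable.mono' (integrable_const (n : ℝ))
        ((hgam.abs.min measurable_const).comp hX).aestronglyMeasurable (ae_of_all _ hfnb)
    obtain ⟨hfnI1int, hstep1⟩ :=
      myhelper_integral_mul_condExp hm P hfnm.stronglyMeasurable (ae_of_all _ hfnb) hI1int
    have hfnceint : Integrable (fun ω => fn ω * (condExp (sigmaGen X) P I1) ω) P :=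
      integrable_condExp.bdd_mul (((hgam.abs.min measurable_const).comp hX)).aestronglyMeasurable
        (ae_of_all _ hfnb)
    have hstep2 : ∫ ω, fn ω * (condExp (sigmaGen X) P I1) ω ∂P = ∫ ω, fn ω * (pf (X ω) * ea (X ω)) ∂P := by
      refine integral_congr_ae ?_
      filter_upwards [hea] with ω h
      rw [← h]
    have hfnpeint : Integrable (fun ω => fn ω * (pf (X ω) * ea (X ω))) P := by
      refine hfnceint.congr ?_
      filter_upwards [hea] with ω h
      rw [← h]
    have hstep3 : ε * ∫ ω, fn ω ∂P ≤ ∫ ω, fn ω * (pf (X ω) * ea (X ω)) ∂P := by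
      rw [← integral_const_mul]
      refine integral_mono_ae (hfnint.const_mul ε) hfnpeint ?_
      filter_upwards [hεpe] with ω h
      have h0 := hfn_nonneg ω
      nlinarith
    have hstep4 : ∫ ω, fn ω * I1 ω ∂P ≤ C := by
      refine integral_mono hfnI1int hCint ?_
      intro ω
      have : (0:ℝ) ≤ I1 ω := by by_cases hc : R ω = true ∧ A ω = a <;> simp [hI1_def, hc]
      exact mul_le_mul_of_nonneg_right (min_le_left _ _) this
    have : ε * ∫ ω, fn ω ∂P ≤ C := by
      calc ε * ∫ ω, fn ω ∂P ≤ ∫ ω, fn ω * (pf (X ω) * ea (X ω)) ∂P := hstep3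
        _ = ∫ ω, fn ω * (condExp (sigmaGen X) P I1) ω ∂P := hstep2.symm
        _ = ∫ ω, fn ω * I1 ω ∂P := hstep1.symm
        _ ≤ C := hstep4
    rw [le_div_iff₀ hε]
    linarith
  -- integrability of ga ∘ X
  have hgaint : Integrable (fun ω => ga (X ω)) P := by
    refine ⟨(hgam.comp hX).aestronglyMeasurable, ?_⟩
    rw [hasFiniteIntegral_iff_norm]
    have hkey : ∫⁻ ω, ENNReal.ofReal ‖ga (X ω)‖ ∂P ≤ ENNReal.ofReal (C / ε) := by
      have hpt : ∀ ω, ENNReal.ofReal ‖ga (X ω)‖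
          = ⨆ n : ℕ, ENNReal.ofReal (min |ga (X ω)| (n : ℝ)) := by
        intro ω
        refine le_antisymm ?_ (iSup_le fun n => ENNReal.ofReal_le_ofReal (by
          rw [Real.norm_eq_abs]; exact min_le_left _ _))
        refine le_iSup_of_le ⌈|ga (X ω)|⌉₊ ?_
        rw [Real.norm_eq_abs, min_eq_left (Nat.le_ceil _)]
      calc ∫⁻ ω, ENNReal.ofReal ‖ga (X ω)‖ ∂P
          = ∫⁻ ω, ⨆ n : ℕ, ENNReal.ofReal (min |ga (X ω)| (n : ℝ)) ∂P :=
            lintegral_congr hpt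
        _ = ⨆ n : ℕ, ∫⁻ ω, ENNReal.ofReal (min |ga (X ω)| (n : ℝ)) ∂P := by
            refine lintegral_iSup (fun n => ?_) (fun i j hij ω => ?_)
            · exact ((hgam.abs.min measurable_const).comp hX).ennreal_ofReal
            · exact ENNReal.ofReal_le_ofReal
                (min_le_min le_rfl (by exact_mod_cast hij))
        _ ≤ ENNReal.ofReal (C / ε) := by
            refine iSup_le fun n => ?_
            have hfnint : Integrable (fun ω => min |ga (X ω)| (n : ℝ)) P :=
              Integrable.mono' (integrable_const (n : ℝ))
                ((hgam.abs.min measurable_const).comp hX).aestronglyMeasurable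
                (ae_of_all _ (fun ω => by
                  rw [Real.norm_eq_abs, abs_of_nonneg (le_min (abs_nonneg _) (Nat.cast_nonneg n))]
                  exact min_le_right _ _))
            rw [← ofReal_integral_eq_lintegral_ofReal hfnint
              (ae_of_all _ fun ω => le_min (abs_nonneg _) (Nat.cast_nonneg n))]
            exact ENNReal.ofReal_le_ofReal (htrunc n)
    exact lt_of_le_of_lt hkey ENNReal.ofReal_lt_top
  -- pf ∘ X lies in [0, 1] a.e.
  have hpf01 : ∀ᵐ ω ∂P, 0 ≤ pf (X ω) ∧ pf (X ω) ≤ 1 := by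
    set IR : Ω → ℝ := fun ω => if R ω = true then (1 : ℝ) else 0 with hIR_def
    have hIRmeas : Measurable IR :=
      Measurable.ite (hR (measurableSet_singleton true)) measurable_const measurable_const
    have hIRb : ∀ ω, ‖IR ω‖ ≤ 1 := by
      intro ω; by_cases hc : R ω = true <;> simp [hIR_def, hc]
    have hIRint : Integrable IR P :=
      Integrable.mono' (integrable_const 1) hIRmeas.aestronglyMeasurable (ae_of_all _ hIRb)
    have h0 : 0 ≤ᵐ[P] condExp (sigmaGen X) P IR :=
      condExp_nonneg (ae_of_all _ fun ω => by by_cases hc : R ω = true <;> simp [hIR_def, hc])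
    have h1 : condExp (sigmaGen X) P IR ≤ᵐ[P] condExp (sigmaGen X) P (fun _ => (1 : ℝ)) :=
      condExp_mono hIRint (integrable_const 1)
        (ae_of_all _ fun ω => by by_cases hc : R ω = true <;> simp [hIR_def, hc])
    have hconst : condExp (sigmaGen X) P (fun _ : Ω => (1 : ℝ)) = fun _ => (1 : ℝ) := condExp_const hm 1
    filter_upwards [hpf, h0, h1] with ω he h0ω h1ω
    rw [hconst] at h1ω
    constructor
    · rw [he]; exact h0ω
    · rw [he]; exact h1ω
  -- clipped weight function
  set w' : 𝒳 → ℝ := fun x => max (-ε⁻¹) (min ((1 - pf x) / (pf x * ea x)) ε⁻¹) with hw'_def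
  have hw'meas : Measurable w' :=
    Measurable.max measurable_const
      (Measurable.min ((measurable_const.sub hpfm).div (hpfm.mul heam)) measurable_const)
  have hεinv : (0:ℝ) ≤ ε⁻¹ := inv_nonneg.2 hε.le
  have hw'b : ∀ x, ‖w' x‖ ≤ ε⁻¹ := by
    intro x
    rw [Real.norm_eq_abs, abs_le]
    exact ⟨le_max_left _ _, max_le (by linarith) (min_le_right _ _)⟩
  have hw'eq : ∀ᵐ ω ∂P, w' (X ω) = (1 - pf (X ω)) / (pf (X ω) * ea (X ω)) := by
    filter_upwards [hεpe, hpf01] with ω h1 ⟨h2, h3⟩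
    have hden : 0 < pf (X ω) * ea (X ω) := lt_of_lt_of_le hε h1
    have hnum0 : (0:ℝ) ≤ 1 - pf (X ω) := by linarith
    have ht0 : 0 ≤ (1 - pf (X ω)) / (pf (X ω) * ea (X ω)) := div_nonneg hnum0 hden.le
    have ht1 : (1 - pf (X ω)) / (pf (X ω) * ea (X ω)) ≤ ε⁻¹ := by
      rw [div_le_iff₀ hden]
      have : ε⁻¹ * ε ≤ ε⁻¹ * (pf (X ω) * ea (X ω)) := by
        exact mul_le_mul_of_nonneg_left h1 hεinv
      rw [inv_mul_cancel₀ hε.ne'] at this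
      linarith
    rw [hw'_def]
    simp only
    rw [min_eq_left ht1, max_eq_right (by linarith)]
  -- the m2-measurable bounded factor h
  set I2 : Ω → ℝ := fun ω => if A ω = a ∧ em (X ω) = xt ∧ R ω = true then (1 : ℝ) else 0
    with hI2_def
  set h : Ω → ℝ := fun ω => I2 ω * w' (X ω) with hh_def
  have hφ : Measurable fun q : 𝒳 × 𝒜 × Bool =>
      (if q.2.1 = a ∧ em q.1 = xt ∧ q.2.2 = true then (1:ℝ) else 0) * w' q.1 := by
    refine Measurable.mul ?_ (hw'meas.comp measurable_fst)
    refine Measurable.ite ?_ measurable_const measurable_const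
    have : {q : 𝒳 × 𝒜 × Bool | q.2.1 = a ∧ em q.1 = xt ∧ q.2.2 = true}
        = (fun q : 𝒳 × 𝒜 × Bool => q.2.1) ⁻¹' {a} ∩
          ((fun q : 𝒳 × 𝒜 × Bool => em q.1) ⁻¹' {xt} ∩
            (fun q : 𝒳 × 𝒜 × Bool => q.2.2) ⁻¹' {true}) := by
      ext q; simp [Set.mem_setOf_eq, and_assoc]
    rw [this]
    exact ((measurable_fst.comp measurable_snd) (measurableSet_singleton a)).inter
      (((hem.comp measurable_fst) (measurableSet_singleton xt)).inter
        ((measurable_snd.comp measurable_snd) (measurableSet_singleton true)))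
  have hhm2 : Measurable[sigmaGen (fun ω : Ω => (X ω, A ω, R ω))] h := hφ.comp (comap_measurable _)
  have hhm0 : Measurable h := hφ.comp (hX.prodMk (hA.prodMk hR))
  have hhb : ∀ ω, ‖h ω‖ ≤ ε⁻¹ := by
    intro ω
    rw [hh_def]
    simp only
    by_cases hc : A ω = a ∧ em (X ω) = xt ∧ R ω = true
    · simp only [hI2_def, if_pos hc, one_mul]; exact hw'b _
    · simp [hI2_def, if_neg hc, hεinv]
  -- T2' and its zero integral
  obtain ⟨hhYint, hstepY⟩ :=
    myhelper_integral_mul_condExp hm2 P hhm2.stronglyMeasurable (ae_of_all _ hhb) hYint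
  have hhDint : Integrable (fun ω => h ω * D ω) P :=
    hDint.bdd_mul hhm0.aestronglyMeasurable (ae_of_all _ hhb)
  have hT2'int : Integrable (fun ω => h ω * (Y ω - D ω)) P :=
    (hYint.sub hDint).bdd_mul hhm0.aestronglyMeasurable (ae_of_all _ hhb)
  have hT2'zero : ∫ ω, h ω * (Y ω - D ω) ∂P = 0 := by
    have : ∀ ω, h ω * (Y ω - D ω) = h ω * Y ω - h ω * D ω := fun ω => mul_sub _ _ _
    simp_rw [this]
    rw [integral_sub hhYint hhDint, hstepY]
    exact sub_self _
  -- the actual second term equals T2' a.e.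
  have hT2eq : (fun ω => (if A ω = a ∧ em (X ω) = xt ∧ R ω = true then (1:ℝ) else 0) *
        ((1 - pf (X ω)) / (pf (X ω) * ea (X ω))) * (Y ω - ga (X ω)))
      =ᵐ[P] fun ω => h ω * (Y ω - D ω) := by
    filter_upwards [hga, hw'eq] with ω hgω hwω
    by_cases hc : A ω = a ∧ em (X ω) = xt ∧ R ω = true
    · have hc1 : R ω = true ∧ A ω = a := ⟨hc.2.2, hc.1⟩
      simp only [if_pos hc1, one_mul] at hgω
      simp only [if_pos hc, hh_def, hI2_def, one_mul]
      rw [hwω, hgω]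
    · simp [hh_def, hI2_def, if_neg hc]
  -- first term T1
  set E : Set Ω := {ω | em (X ω) = xt ∧ R ω = false} with hE_def
  have hEmeas : MeasurableSet E := by
    have : E = (fun ω => em (X ω)) ⁻¹' {xt} ∩ R ⁻¹' {false} := by
      ext ω; simp [hE_def, Set.mem_setOf_eq]
    rw [this]
    exact ((hem.comp hX) (measurableSet_singleton xt)).inter (hR (measurableSet_singleton false))
  have hT1ind : (fun ω => (if em (X ω) = xt ∧ R ω = false then (1:ℝ) else 0) * (ga (X ω) - ψ))
      = E.indicator (fun ω => ga (X ω) - ψ) := by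
    funext ω
    by_cases hc : em (X ω) = xt ∧ R ω = false
    · simp [Set.indicator_of_mem, hc, hE_def]
    · simp [Set.indicator_of_notMem, hc, hE_def]
  have hT1int : Integrable (fun ω =>
      (if em (X ω) = xt ∧ R ω = false then (1:ℝ) else 0) * (ga (X ω) - ψ)) P := by
    rw [hT1ind]
    exact (hgaint.sub (integrable_const ψ)).indicator hEmeas
  have hPEne : (P E).toReal ≠ 0 := by
    refine (ENNReal.toReal_pos hE.ne' (measure_ne_top P E)).ne'
  have hT1zero : ∫ ω, (if em (X ω) = xt ∧ R ω = false then (1:ℝ) else 0) * (ga (X ω) - ψ) ∂P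
      = 0 := by
    rw [hT1ind, integral_indicator hEmeas]
    rw [integral_sub hgaint.integrableOn (integrableOn_const (measure_ne_top P E))]
    rw [setIntegral_const]
    rw [measureReal_def]
    have : ψ * (P E).toReal = ∫ ω in E, ga (X ω) ∂P := by
      rw [hψ]
      field_simp
    rw [smul_eq_mul]
    rw [hψ]
    field_simp
    simp
  -- conclusion
  have hΨae : Ψ =ᵐ[P] fun ω =>
      γ * ((if em (X ω) = xt ∧ R ω = false then (1:ℝ) else 0) * (ga (X ω) - ψ)
        + h ω * (Y ω - D ω)) := by
    rw [hΨ]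
    filter_upwards [hT2eq] with ω h2
    rw [← h2]
  have hint : Integrable (fun ω =>
      γ * ((if em (X ω) = xt ∧ R ω = false then (1:ℝ) else 0) * (ga (X ω) - ψ)
        + h ω * (Y ω - D ω))) P := (hT1int.add hT2'int).const_mul γ
  constructor
  · exact hint.congr hΨae.symm
  · rw [integral_congr_ae hΨae]
    rw [integral_const_mul]
    rw [integral_add hT1int hT2'int, hT1zero, hT2'zero]
    simp
end

section
/- Second-order (doubly robust) bias identity for the external-population estimator: assume ℙ(X̃ = x̃ ∧ R = 0) > 0 and p(X)·e_a(X) ≥ ε a.s. for some ε > 0; set γ := 1/ℙ(X̃ = x̃ ∧ R = 0) and ψ := 𝔼[g_a(X) | X̃ = x̃ ∧ R = 0]. Let g', e', p' : 𝒳 → ℝ be measurable with p'(X)·e'(X) ≥ ε a.s., 0 ≤ p'(X) ≤ 1 a.s., g'(X) square-integrable, and let γ' ∈ ℝ. Define H := γ'·[ 1{X̃ = x̃, R = 0}·g'(X) + 1{A = a, X̃ = x̃, R = 1}·((1 − p'(X))/(p'(X)·e'(X)))·(Y − g'(X)) ]. Then 𝔼[H] − ψ = γ'·𝔼[ 1{X̃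 = x̃} · { (p'(X) − p(X)) + (1 − p'(X))·(1 − p(X)·e_a(X)/(p'(X)·e'(X))) } · (g'(X) − g_a(X)) ] + (γ'/γ − 1)·ψ. -/
open MeasureTheory ProbabilityTheory

section Aux
variable {Ω : Type*}

private lemma int_mul_bdd {m0 : MeasurableSpace Ω} {P : Measure Ω} {f g : Ω → ℝ}
    (hg : Integrable g P) (hf : AEStronglyMeasurable f P) {C : ℝ}
    (hbd : ∀ᵐ ω ∂P, |f ω| ≤ C) :
    Integrable (fun ω => f ω * g ω) P := by
  refine Integrable.mono' (hg.abs.const_mul C) (hf.mul hg.aestronglyMeasurable) ?_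
  filter_upwards [hbd] with ω h
  rw [Real.norm_eq_abs, abs_mul]
  exact mul_le_mul_of_nonneg_right h (abs_nonneg _)

private lemma pull_out {m m0 : MeasurableSpace Ω} (hm : m ≤ m0) (P : Measure Ω)
    [IsFiniteMeasure P] {c y : Ω → ℝ} (hc : StronglyMeasurable[m] c)
    (hcy : Integrable (fun ω => c ω * y ω) P) (hy : Integrable y P) :
    ∫ ω, c ω * y ω ∂P = ∫ ω, c ω * (condExp m P y) ω ∂P := by
  have h1 : ∫ ω, (condExp m P (fun ω => c ω * y ω)) ω ∂P = ∫ ω, c ω * y ω ∂P :=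
    integral_condExp hm
  rw [← h1]
  refine integral_congr_ae ?_
  refine (condExp_mul_of_stronglyMeasurable_left hc hcy hy).trans (ae_of_all _ fun ω => ?_)
  simp only [Pi.mul_apply]

private lemma pull_replace {m m0 : MeasurableSpace Ω} (hm : m ≤ m0) (P : Measure Ω)
    [IsFiniteMeasure P] {c y r : Ω → ℝ} (hc : StronglyMeasurable[m] c)
    (hcy : Integrable (fun ω => c ω * y ω) P) (hy : Integrable y P)
    (hr : r =ᵐ[P] condExp m P y) :
    ∫ ω, c ω * y ω ∂P = ∫ ω, c ω * r ω ∂P := by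
  rw [pull_out hm P hc hcy hy]
  refine integral_congr_ae ?_
  filter_upwards [hr] with ω h
  rw [h]

private lemma abs_mul_le {a b A B : ℝ} (ha : |a| ≤ A) (hb : |b| ≤ B) : |a * b| ≤ A * B := by
  rw [abs_mul]
  exact mul_le_mul ha hb (abs_nonneg _) ((abs_nonneg a).trans ha)

end Aux

/-- second-order (doubly robust) bias identity, external population. -/
theorem second_order_bias_identity_external
    {Ω 𝒜 𝒯 𝒳 : Type*}
    [MeasurableSpace Ω]
    [Fintype 𝒜] [Nonempty 𝒜] [DecidableEq 𝒜] [MeasurableSpace 𝒜] [DiscreteMeasurableSpace 𝒜]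
    [Fintype 𝒯] [Nonempty 𝒯] [DecidableEq 𝒯] [MeasurableSpace 𝒯] [DiscreteMeasurableSpace 𝒯]
    [MeasurableSpace 𝒳]
    (P : Measure Ω) [IsProbabilityMeasure P]
    (A : Ω → 𝒜) (R : Ω → Bool) (X : Ω → 𝒳) (em : 𝒳 → 𝒯) (Y : Ω → ℝ)
    (hA : Measurable A) (hR : Measurable R) (hX : Measurable X) (hem : Measurable em)
    (hY : MemLp Y 2 P)
    (a : 𝒜) (xt : 𝒯)
    (pf ea ga : 𝒳 → ℝ) (hpfm : Measurable pf) (heam : Measurable ea) (hgam : Measurable ga)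
    -- participation model: p(X) = E[1{R=1} | σ(X)] a.s.
    (hpf : (fun ω => pf (X ω)) =ᵐ[P]
      condExp (sigmaGen X) P (fun ω => if R ω = true then (1 : ℝ) else 0))
    -- propensity in the multi-source data: p(X)·e_a(X) = E[1{R=1, A=a} | σ(X)] a.s.
    (hea : (fun ω => pf (X ω) * ea (X ω)) =ᵐ[P]
      condExp (sigmaGen X) P (fun ω => if R ω = true ∧ A ω = a then (1 : ℝ) else 0))
    -- outcome regression: 1{R=1, A=a}·E[Y | σ(X,A,R)] = 1{R=1, A=a}·g_a(X) a.s.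
    (hga : (fun ω => (if R ω = true ∧ A ω = a then (1 : ℝ) else 0) *
        condExp (sigmaGen (fun ω => (X ω, A ω, R ω))) P Y ω) =ᵐ[P]
      (fun ω => (if R ω = true ∧ A ω = a then (1 : ℝ) else 0) * ga (X ω)))
    (ε : ℝ) (hε : 0 < ε) (hεpe : ∀ᵐ ω ∂P, ε ≤ pf (X ω) * ea (X ω))
    (hE : 0 < P {ω | em (X ω) = xt ∧ R ω = false})
    (γ ψ : ℝ)
    (hγ : γ = ((P {ω | em (X ω) = xt ∧ R ω = false}).toReal)⁻¹)
    (hψ : ψ = (∫ ω in {ω | em (X ω) = xt ∧ R ω = false}, ga (X ω) ∂P) / (P {ω | em (X ω) = xt ∧ R ω = false}).toReal)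
    (g' e' p' : 𝒳 → ℝ) (hg'm : Measurable g') (he'm : Measurable e') (hp'm : Measurable p')
    (hp'e' : ∀ᵐ ω ∂P, ε ≤ p' (X ω) * e' (X ω))
    (hp'bd : ∀ᵐ ω ∂P, 0 ≤ p' (X ω) ∧ p' (X ω) ≤ 1)
    (hg'L2 : MemLp (fun ω => g' (X ω)) 2 P)
    (γ' : ℝ) (H : Ω → ℝ)
    (hH : H = fun ω => γ' *
      ((if em (X ω) = xt ∧ R ω = false then (1 : ℝ) else 0) * g' (X ω) +
        (if A ω = a ∧ em (X ω) = xt ∧ R ω = true then (1 : ℝ) else 0) *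
          ((1 - p' (X ω)) / (p' (X ω) * e' (X ω))) * (Y ω - g' (X ω)))) :
    (∫ ω, H ω ∂P) - ψ =
      γ' * (∫ ω, (if em (X ω) = xt then (1 : ℝ) else 0) *
          ((p' (X ω) - pf (X ω)) +
            (1 - p' (X ω)) * (1 - pf (X ω) * ea (X ω) / (p' (X ω) * e' (X ω)))) *
          (g' (X ω) - ga (X ω)) ∂P) +
        (γ' / γ - 1) * ψ := by
  -- σ-algebra facts
  have hm1 : sigmaGen X ≤ ‹MeasurableSpace Ω› := by
    rintro s ⟨t, ht, rfl⟩; exact hX ht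
  have hTmeas : Measurable (fun ω => (X ω, A ω, R ω)) := hX.prodMk (hA.prodMk hR)
  have hm2 : sigmaGen (fun ω => (X ω, A ω, R ω)) ≤ ‹MeasurableSpace Ω› := by
    rintro s ⟨t, ht, rfl⟩; exact hTmeas ht
  have hXm1 : Measurable[sigmaGen X] X := fun s hs => ⟨s, hs, rfl⟩
  have hTm2 : Measurable[sigmaGen (fun ω => (X ω, A ω, R ω))] (fun ω => (X ω, A ω, R ω)) :=
    fun s hs => ⟨s, hs, rfl⟩
  have hXm2 : Measurable[sigmaGen (fun ω => (X ω, A ω, R ω))] X := measurable_fst.comp hTm2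
  have hAm2 : Measurable[sigmaGen (fun ω => (X ω, A ω, R ω))] A :=
    (measurable_fst.comp measurable_snd).comp hTm2
  have hRm2 : Measurable[sigmaGen (fun ω => (X ω, A ω, R ω))] R :=
    (measurable_snd.comp measurable_snd).comp hTm2
  -- measurability of the basic factors
  have hχm : Measurable (fun ω => if em (X ω) = xt then (1 : ℝ) else 0) :=
    Measurable.ite ((hem.comp hX) (measurableSet_singleton xt)) measurable_const measurable_const
  have hχm1 : Measurable[sigmaGen X] (fun ω => if em (X ω) = xt then (1 : ℝ) else 0) :=
    Measurable.ite ((hem.comp hXm1) (measurableSet_singleton xt)) measurable_const measurable_const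
  have hχm2 : Measurable[sigmaGen (fun ω => (X ω, A ω, R ω))]
      (fun ω => if em (X ω) = xt then (1 : ℝ) else 0) :=
    Measurable.ite ((hem.comp hXm2) (measurableSet_singleton xt)) measurable_const measurable_const
  have hDRm : Measurable (fun ω => if R ω = true then (1 : ℝ) else 0) :=
    Measurable.ite (hR (measurableSet_singleton true)) measurable_const measurable_const
  have hDram : Measurable (fun ω => if R ω = true ∧ A ω = a then (1 : ℝ) else 0) :=
    Measurable.ite ((hR (measurableSet_singleton true)).inter (hA (measurableSet_singleton a)))
      measurable_const measurable_const
  have hDram2 : Measurable[sigmaGen (fun ω => (X ω, A ω, R ω))]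
      (fun ω => if R ω = true ∧ A ω = a then (1 : ℝ) else 0) :=
    Measurable.ite ((hRm2 (measurableSet_singleton true)).inter (hAm2 (measurableSet_singleton a)))
      measurable_const measurable_const
  have hwm : Measurable (fun ω => (1 - p' (X ω)) / (p' (X ω) * e' (X ω))) :=
    (measurable_const.sub (hp'm.comp hX)).div ((hp'm.comp hX).mul (he'm.comp hX))
  have hwm1 : Measurable[sigmaGen X] (fun ω => (1 - p' (X ω)) / (p' (X ω) * e' (X ω))) :=
    (measurable_const.sub (hp'm.comp hXm1)).div ((hp'm.comp hXm1).mul (he'm.comp hXm1))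
  have hwm2 : Measurable[sigmaGen (fun ω => (X ω, A ω, R ω))]
      (fun ω => (1 - p' (X ω)) / (p' (X ω) * e' (X ω))) :=
    (measurable_const.sub (hp'm.comp hXm2)).div ((hp'm.comp hXm2).mul (he'm.comp hXm2))
  -- pointwise bounds on indicators
  have hχ01 : ∀ ω, 0 ≤ (if em (X ω) = xt then (1 : ℝ) else 0) ∧
      (if em (X ω) = xt then (1 : ℝ) else 0) ≤ 1 := by
    intro ω; split <;> norm_num
  have hDR01 : ∀ ω, 0 ≤ (if R ω = true then (1 : ℝ) else 0) ∧
      (if R ω = true then (1 : ℝ) else 0) ≤ 1 := by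
    intro ω; split <;> norm_num
  have hDra01 : ∀ ω, 0 ≤ (if R ω = true ∧ A ω = a then (1 : ℝ) else 0) ∧
      (if R ω = true ∧ A ω = a then (1 : ℝ) else 0) ≤ 1 := by
    intro ω; split <;> norm_num
  have hχa : ∀ ω, |(if em (X ω) = xt then (1 : ℝ) else 0)| ≤ 1 := fun ω =>
    abs_le.mpr ⟨by linarith [(hχ01 ω).1], (hχ01 ω).2⟩
  have hDRa : ∀ ω, |(if R ω = true then (1 : ℝ) else 0)| ≤ 1 := fun ω =>
    abs_le.mpr ⟨by linarith [(hDR01 ω).1], (hDR01 ω).2⟩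
  have hDraa : ∀ ω, |(if R ω = true ∧ A ω = a then (1 : ℝ) else 0)| ≤ 1 := fun ω =>
    abs_le.mpr ⟨by linarith [(hDra01 ω).1], (hDra01 ω).2⟩
  -- a.e. bound on the weight
  have hw : ∀ᵐ ω ∂P, 0 ≤ (1 - p' (X ω)) / (p' (X ω) * e' (X ω)) ∧
      (1 - p' (X ω)) / (p' (X ω) * e' (X ω)) ≤ ε⁻¹ := by
    filter_upwards [hp'e', hp'bd] with ω h1 h2
    have hpos : (0 : ℝ) < p' (X ω) * e' (X ω) := lt_of_lt_of_le hε h1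
    constructor
    · exact div_nonneg (by linarith [h2.2]) hpos.le
    · calc (1 - p' (X ω)) / (p' (X ω) * e' (X ω)) ≤ 1 / ε :=
          div_le_div₀ zero_le_one (by linarith [h2.1]) hε h1
        _ = ε⁻¹ := one_div ε
  have hwa : ∀ᵐ ω ∂P, |(1 - p' (X ω)) / (p' (X ω) * e' (X ω))| ≤ ε⁻¹ := by
    filter_upwards [hw] with ω h
    exact abs_le.mpr ⟨by have := inv_nonneg.mpr hε.le; linarith [h.1], h.2⟩
  -- basic integrability
  have hYint : Integrable Y P := hY.integrable (by norm_num)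
  have hg'int : Integrable (fun ω => g' (X ω)) P := hg'L2.integrable (by norm_num)
  have hDRint : Integrable (fun ω => if R ω = true then (1 : ℝ) else 0) P := by
    refine Integrable.mono' (integrable_const (1 : ℝ)) hDRm.aestronglyMeasurable
      (ae_of_all _ fun ω => ?_)
    rw [Real.norm_eq_abs]; exact hDRa ω
  have hDraint : Integrable (fun ω => if R ω = true ∧ A ω = a then (1 : ℝ) else 0) P := by
    refine Integrable.mono' (integrable_const (1 : ℝ)) hDram.aestronglyMeasurable
      (ae_of_all _ fun ω => ?_)
    rw [Real.norm_eq_abs]; exact hDraa ω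
  -- a.e. bounds on pf and pf*ea
  have hpf01 : ∀ᵐ ω ∂P, 0 ≤ pf (X ω) ∧ pf (X ω) ≤ 1 := by
    have h0 : 0 ≤ᵐ[P] condExp (sigmaGen X) P (fun ω => if R ω = true then (1 : ℝ) else 0) :=
      condExp_nonneg (ae_of_all _ fun ω => (hDR01 ω).1)
    have h1 : condExp (sigmaGen X) P (fun ω => if R ω = true then (1 : ℝ) else 0)
        ≤ᵐ[P] fun _ => (1 : ℝ) := by
      have h2 := condExp_mono (m := sigmaGen X) hDRint (integrable_const (1 : ℝ))
        (ae_of_all _ fun ω => (hDR01 ω).2)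
      rwa [condExp_const hm1] at h2
    filter_upwards [hpf, h0, h1] with ω he h0' h1'
    exact ⟨he ▸ h0', he ▸ h1'⟩
  have hpea01 : ∀ᵐ ω ∂P, ε ≤ pf (X ω) * ea (X ω) ∧ pf (X ω) * ea (X ω) ≤ 1 := by
    have h1 : condExp (sigmaGen X) P (fun ω => if R ω = true ∧ A ω = a then (1 : ℝ) else 0)
        ≤ᵐ[P] fun _ => (1 : ℝ) := by
      have h2 := condExp_mono (m := sigmaGen X) hDraint (integrable_const (1 : ℝ))
        (ae_of_all _ fun ω => (hDra01 ω).2)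
      rwa [condExp_const hm1] at h2
    filter_upwards [hεpe, hea, h1] with ω h0 he h1'
    exact ⟨h0, he ▸ h1'⟩
  have hpfa : ∀ᵐ ω ∂P, |pf (X ω)| ≤ 1 := by
    filter_upwards [hpf01] with ω h; exact abs_le.mpr ⟨by linarith [h.1], h.2⟩
  have hpfa' : ∀ᵐ ω ∂P, |1 - pf (X ω)| ≤ 1 := by
    filter_upwards [hpf01] with ω h; exact abs_le.mpr ⟨by linarith [h.2], by linarith [h.1]⟩
  have hpeaa : ∀ᵐ ω ∂P, |pf (X ω) * ea (X ω)| ≤ 1 := by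
    filter_upwards [hpea01] with ω h; exact abs_le.mpr ⟨by nlinarith [h.1], h.2⟩
  -- integrability of ga ∘ X
  have hgaint : Integrable (fun ω => ga (X ω)) P := by
    have hq1 : Integrable (fun ω => (if R ω = true ∧ A ω = a then (1 : ℝ) else 0) *
        (condExp (sigmaGen (fun ω => (X ω, A ω, R ω))) P Y) ω) P :=
      int_mul_bdd integrable_condExp hDram.aestronglyMeasurable (ae_of_all _ hDraa)
    have hq2 : Integrable (fun ω => (if R ω = true ∧ A ω = a then (1 : ℝ) else 0) *
        ga (X ω)) P := hq1.congr hga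
    have habs : Integrable (fun ω => |ga (X ω)| *
        (if R ω = true ∧ A ω = a then (1 : ℝ) else 0)) P := by
      refine hq2.abs.congr (ae_of_all _ fun ω => ?_)
      dsimp only
      rw [abs_mul, mul_comm]
      congr 1
      rw [abs_of_nonneg (hDra01 ω).1]
    have hgabs1 : StronglyMeasurable[sigmaGen X] (fun ω => |ga (X ω)|) :=
      ((hgam.abs).comp hXm1).stronglyMeasurable
    have hpull : condExp (sigmaGen X) P (fun ω => |ga (X ω)| *
          (if R ω = true ∧ A ω = a then (1 : ℝ) else 0)) =ᵐ[P]
        fun ω => |ga (X ω)| *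
          condExp (sigmaGen X) P (fun ω => if R ω = true ∧ A ω = a then (1 : ℝ) else 0) ω :=
      condExp_mul_of_stronglyMeasurable_left hgabs1 habs hDraint
    refine Integrable.mono' ((integrable_condExp (m := sigmaGen X)
        (f := fun ω => |ga (X ω)| * (if R ω = true ∧ A ω = a then (1 : ℝ) else 0))).const_mul ε⁻¹)
      ((hgam.comp hX).aestronglyMeasurable) ?_
    filter_upwards [hpull, hea, hεpe] with ω h1 h2 h3
    have hq : condExp (sigmaGen X) P (fun ω => |ga (X ω)| *
        (if R ω = true ∧ A ω = a then (1 : ℝ) else 0)) ω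
        = |ga (X ω)| * (pf (X ω) * ea (X ω)) := by
      rw [h1, ← h2]
    have hkey : ε * |ga (X ω)| ≤ condExp (sigmaGen X) P (fun ω => |ga (X ω)| *
        (if R ω = true ∧ A ω = a then (1 : ℝ) else 0)) ω := by
      rw [hq]; nlinarith [abs_nonneg (ga (X ω))]
    rw [Real.norm_eq_abs]
    calc |ga (X ω)| = ε⁻¹ * (ε * |ga (X ω)|) := by field_simp
      _ ≤ ε⁻¹ * condExp (sigmaGen X) P (fun ω => |ga (X ω)| *
          (if R ω = true ∧ A ω = a then (1 : ℝ) else 0)) ω := by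
          exact mul_le_mul_of_nonneg_left hkey (inv_nonneg.mpr hε.le)
  -- integrable products
  have i7 : Integrable (fun ω => (if em (X ω) = xt then (1 : ℝ) else 0) * g' (X ω)) P :=
    int_mul_bdd hg'int hχm.aestronglyMeasurable (ae_of_all _ hχa)
  have i8 : Integrable (fun ω => (if em (X ω) = xt then (1 : ℝ) else 0) * ga (X ω)) P :=
    int_mul_bdd hgaint hχm.aestronglyMeasurable (ae_of_all _ hχa)
  have i1 : Integrable (fun ω => (if em (X ω) = xt then (1 : ℝ) else 0) * g' (X ω) *
      (if R ω = true then (1 : ℝ) else 0)) P := by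
    have h := int_mul_bdd (C := 1 * 1) hg'int ((hχm.mul hDRm).aestronglyMeasurable)
      (ae_of_all _ fun ω => abs_mul_le (hχa ω) (hDRa ω))
    exact h.congr (ae_of_all _ fun ω => by (try dsimp only); (try simp only [Function.comp_apply, Pi.sub_apply, Pi.mul_apply]); ring)
  have i2 : Integrable (fun ω => (if em (X ω) = xt then (1 : ℝ) else 0) * ga (X ω) *
      (if R ω = true then (1 : ℝ) else 0)) P := by
    have h := int_mul_bdd (C := 1 * 1) hgaint ((hχm.mul hDRm).aestronglyMeasurable)
      (ae_of_all _ fun ω => abs_mul_le (hχa ω) (hDRa ω))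
    exact h.congr (ae_of_all _ fun ω => by (try dsimp only); (try simp only [Function.comp_apply, Pi.sub_apply, Pi.mul_apply]); ring)
  have i9 : Integrable (fun ω => (if em (X ω) = xt then (1 : ℝ) else 0) * g' (X ω) *
      pf (X ω)) P := by
    have h := int_mul_bdd (C := 1 * 1) hg'int ((hχm.mul (hpfm.comp hX)).aestronglyMeasurable)
      (by filter_upwards [hpfa] with ω h; exact abs_mul_le (hχa ω) h)
    exact h.congr (ae_of_all _ fun ω => by (try dsimp only); (try simp only [Function.comp_apply, Pi.sub_apply, Pi.mul_apply]); ring)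
  have i10 : Integrable (fun ω => (if em (X ω) = xt then (1 : ℝ) else 0) * ga (X ω) *
      pf (X ω)) P := by
    have h := int_mul_bdd (C := 1 * 1) hgaint ((hχm.mul (hpfm.comp hX)).aestronglyMeasurable)
      (by filter_upwards [hpfa] with ω h; exact abs_mul_le (hχa ω) h)
    exact h.congr (ae_of_all _ fun ω => by (try dsimp only); (try simp only [Function.comp_apply, Pi.sub_apply, Pi.mul_apply]); ring)
  have i12 : Integrable (fun ω => (if em (X ω) = xt then (1 : ℝ) else 0) * g' (X ω) *
      (1 - pf (X ω))) P := by
    have h := int_mul_bdd (C := 1 * 1) hg'int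
      ((hχm.mul (measurable_const.sub (hpfm.comp hX))).aestronglyMeasurable)
      (by filter_upwards [hpfa'] with ω h; exact abs_mul_le (hχa ω) h)
    exact h.congr (ae_of_all _ fun ω => by (try dsimp only); (try simp only [Function.comp_apply, Pi.sub_apply, Pi.mul_apply]); ring)
  have i13 : Integrable (fun ω => (if em (X ω) = xt then (1 : ℝ) else 0) * ga (X ω) *
      (1 - pf (X ω))) P := by
    have h := int_mul_bdd (C := 1 * 1) hgaint
      ((hχm.mul (measurable_const.sub (hpfm.comp hX))).aestronglyMeasurable)
      (by filter_upwards [hpfa'] with ω h; exact abs_mul_le (hχa ω) h)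
    exact h.congr (ae_of_all _ fun ω => by (try dsimp only); (try simp only [Function.comp_apply, Pi.sub_apply, Pi.mul_apply]); ring)
  have i3 : Integrable (fun ω => (if em (X ω) = xt then (1 : ℝ) else 0) *
      (((1 - p' (X ω)) / (p' (X ω) * e' (X ω))) * (ga (X ω) - g' (X ω))) *
      (if R ω = true ∧ A ω = a then (1 : ℝ) else 0)) P := by
    have h := int_mul_bdd (C := 1 * 1 * ε⁻¹) (hgaint.sub hg'int)
      (((hχm.mul hDram).mul hwm).aestronglyMeasurable)
      (by filter_upwards [hwa] with ω h; exact abs_mul_le (abs_mul_le (hχa ω) (hDraa ω)) h)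
    exact h.congr (ae_of_all _ fun ω => by (try dsimp only); (try simp only [Function.comp_apply, Pi.sub_apply, Pi.mul_apply]); ring)
  have i4 : Integrable (fun ω => (if em (X ω) = xt then (1 : ℝ) else 0) *
      (if R ω = true ∧ A ω = a then (1 : ℝ) else 0) *
      ((1 - p' (X ω)) / (p' (X ω) * e' (X ω))) * Y ω) P := by
    have h := int_mul_bdd (C := 1 * 1 * ε⁻¹) hYint
      (((hχm.mul hDram).mul hwm).aestronglyMeasurable)
      (by filter_upwards [hwa] with ω h; exact abs_mul_le (abs_mul_le (hχa ω) (hDraa ω)) h)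
    exact h
  have i5 : Integrable (fun ω => (if em (X ω) = xt then (1 : ℝ) else 0) *
      (if R ω = true ∧ A ω = a then (1 : ℝ) else 0) *
      ((1 - p' (X ω)) / (p' (X ω) * e' (X ω))) * g' (X ω)) P := by
    have h := int_mul_bdd (C := 1 * 1 * ε⁻¹) hg'int
      (((hχm.mul hDram).mul hwm).aestronglyMeasurable)
      (by filter_upwards [hwa] with ω h; exact abs_mul_le (abs_mul_le (hχa ω) (hDraa ω)) h)
    exact h
  have i6 : Integrable (fun ω => (if em (X ω) = xt then (1 : ℝ) else 0) *
      (if R ω = true ∧ A ω = a then (1 : ℝ) else 0) *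
      ((1 - p' (X ω)) / (p' (X ω) * e' (X ω))) * ga (X ω)) P := by
    have h := int_mul_bdd (C := 1 * 1 * ε⁻¹) hgaint
      (((hχm.mul hDram).mul hwm).aestronglyMeasurable)
      (by filter_upwards [hwa] with ω h; exact abs_mul_le (abs_mul_le (hχa ω) (hDraa ω)) h)
    exact h
  have i11 : Integrable (fun ω => (if em (X ω) = xt then (1 : ℝ) else 0) *
      (pf (X ω) * ea (X ω)) *
      (((1 - p' (X ω)) / (p' (X ω) * e' (X ω))) * (ga (X ω) - g' (X ω)))) P := by
    have h := int_mul_bdd (C := 1 * 1 * ε⁻¹) (hgaint.sub hg'int)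
      (((hχm.mul ((hpfm.comp hX).mul (heam.comp hX))).mul hwm).aestronglyMeasurable)
      (by filter_upwards [hwa, hpeaa] with ω h h'
          exact abs_mul_le (abs_mul_le (hχa ω) h') h)
    exact h.congr (ae_of_all _ fun ω => by (try dsimp only); (try simp only [Function.comp_apply, Pi.sub_apply, Pi.mul_apply]); ring)
  -- conditional expectation identities
  have E1 : ∫ ω, (if em (X ω) = xt then (1 : ℝ) else 0) * g' (X ω) *
        (if R ω = true then (1 : ℝ) else 0) ∂P
      = ∫ ω, (if em (X ω) = xt then (1 : ℝ) else 0) * g' (X ω) * pf (X ω) ∂P :=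
    pull_replace hm1 P ((hχm1.mul (hg'm.comp hXm1)).stronglyMeasurable) i1 hDRint hpf
  have E2 : ∫ ω, (if em (X ω) = xt then (1 : ℝ) else 0) * ga (X ω) *
        (if R ω = true then (1 : ℝ) else 0) ∂P
      = ∫ ω, (if em (X ω) = xt then (1 : ℝ) else 0) * ga (X ω) * pf (X ω) ∂P :=
    pull_replace hm1 P ((hχm1.mul (hgam.comp hXm1)).stronglyMeasurable) i2 hDRint hpf
  have E3 : ∫ ω, (if em (X ω) = xt then (1 : ℝ) else 0) *
        (((1 - p' (X ω)) / (p' (X ω) * e' (X ω))) * (ga (X ω) - g' (X ω))) *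
        (if R ω = true ∧ A ω = a then (1 : ℝ) else 0) ∂P
      = ∫ ω, (if em (X ω) = xt then (1 : ℝ) else 0) *
        (((1 - p' (X ω)) / (p' (X ω) * e' (X ω))) * (ga (X ω) - g' (X ω))) *
        (pf (X ω) * ea (X ω)) ∂P :=
    pull_replace hm1 P
      ((hχm1.mul (hwm1.mul ((hgam.comp hXm1).sub (hg'm.comp hXm1)))).stronglyMeasurable)
      i3 hDraint hea
  have E4 : ∫ ω, (if em (X ω) = xt then (1 : ℝ) else 0) *
        (if R ω = true ∧ A ω = a then (1 : ℝ) else 0) *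
        ((1 - p' (X ω)) / (p' (X ω) * e' (X ω))) * Y ω ∂P
      = ∫ ω, (if em (X ω) = xt then (1 : ℝ) else 0) *
        (if R ω = true ∧ A ω = a then (1 : ℝ) else 0) *
        ((1 - p' (X ω)) / (p' (X ω) * e' (X ω))) * ga (X ω) ∂P := by
    have hc : StronglyMeasurable[sigmaGen (fun ω => (X ω, A ω, R ω))]
        (fun ω => (if em (X ω) = xt then (1 : ℝ) else 0) *
          (if R ω = true ∧ A ω = a then (1 : ℝ) else 0) *
          ((1 - p' (X ω)) / (p' (X ω) * e' (X ω)))) :=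
      ((hχm2.mul hDram2).mul hwm2).stronglyMeasurable
    have h1 := pull_out hm2 P hc i4 hYint
    refine h1.trans (integral_congr_ae ?_)
    filter_upwards [hga] with ω h
    have h' : (if R ω = true ∧ A ω = a then (1 : ℝ) else 0) *
        condExp (sigmaGen (fun ω => (X ω, A ω, R ω))) P Y ω
        = (if R ω = true ∧ A ω = a then (1 : ℝ) else 0) * ga (X ω) := h
    try dsimp only
    linear_combination ((if em (X ω) = xt then (1 : ℝ) else 0) *
      ((1 - p' (X ω)) / (p' (X ω) * e' (X ω)))) * h'
  -- the event and its measure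
  have hEset : MeasurableSet {ω | em (X ω) = xt ∧ R ω = false} :=
    (((hem.comp hX) (measurableSet_singleton xt)).inter (hR (measurableSet_singleton false)))
  have hc0 : ((P {ω | em (X ω) = xt ∧ R ω = false}).toReal) ≠ 0 :=
    (ENNReal.toReal_pos hE.ne' (measure_ne_top P _)).ne'
  -- LHS computation
  have hfE : Integrable (fun ω => (if em (X ω) = xt ∧ R ω = false then (1 : ℝ) else 0) *
      g' (X ω)) P := by
    refine int_mul_bdd (C := 1) hg'int
      ((Measurable.ite hEset measurable_const measurable_const).aestronglyMeasurable)
      (ae_of_all _ fun ω => by split <;> simp)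
  have hindTm : Measurable (fun ω =>
      if A ω = a ∧ em (X ω) = xt ∧ R ω = true then (1 : ℝ) else 0) :=
    Measurable.ite ((hA (measurableSet_singleton a)).inter
      (((hem.comp hX) (measurableSet_singleton xt)).inter (hR (measurableSet_singleton true))))
      measurable_const measurable_const
  have hfT : Integrable (fun ω =>
      (if A ω = a ∧ em (X ω) = xt ∧ R ω = true then (1 : ℝ) else 0) *
      ((1 - p' (X ω)) / (p' (X ω) * e' (X ω))) * (Y ω - g' (X ω))) P := by
    have h := int_mul_bdd (C := 1 * ε⁻¹) (hYint.sub hg'int)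
      ((hindTm.mul hwm).aestronglyMeasurable)
      (by filter_upwards [hwa] with ω h
          refine abs_mul_le ?_ h
          dsimp only
          split <;> simp)
    exact h
  have hL1 : ∫ ω, (if em (X ω) = xt ∧ R ω = false then (1 : ℝ) else 0) * g' (X ω) ∂P
      = (∫ ω, (if em (X ω) = xt then (1 : ℝ) else 0) * g' (X ω) ∂P)
        - ∫ ω, (if em (X ω) = xt then (1 : ℝ) else 0) * g' (X ω) *
            (if R ω = true then (1 : ℝ) else 0) ∂P := by
    rw [← integral_sub i7 i1]
    refine integral_congr_ae (ae_of_all _ fun ω => ?_)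
    dsimp only
    by_cases h1 : em (X ω) = xt <;> by_cases h2 : R ω = true <;>
      simp [h1, h2] <;> ring
  have hL2 : ∫ ω, (if A ω = a ∧ em (X ω) = xt ∧ R ω = true then (1 : ℝ) else 0) *
        ((1 - p' (X ω)) / (p' (X ω) * e' (X ω))) * (Y ω - g' (X ω)) ∂P
      = (∫ ω, (if em (X ω) = xt then (1 : ℝ) else 0) *
          (if R ω = true ∧ A ω = a then (1 : ℝ) else 0) *
          ((1 - p' (X ω)) / (p' (X ω) * e' (X ω))) * Y ω ∂P)
        - ∫ ω, (if em (X ω) = xt then (1 : ℝ) else 0) *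
          (if R ω = true ∧ A ω = a then (1 : ℝ) else 0) *
          ((1 - p' (X ω)) / (p' (X ω) * e' (X ω))) * g' (X ω) ∂P := by
    rw [← integral_sub i4 i5]
    refine integral_congr_ae (ae_of_all _ fun ω => ?_)
    dsimp only
    by_cases h1 : em (X ω) = xt <;> by_cases h2 : R ω = true <;> by_cases h3 : A ω = a <;>
      simp [h1, h2, h3] <;> ring
  have hA2 : (∫ ω, (if em (X ω) = xt then (1 : ℝ) else 0) * g' (X ω) ∂P)
      - (∫ ω, (if em (X ω) = xt then (1 : ℝ) else 0) * g' (X ω) * pf (X ω) ∂P)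
      = ∫ ω, (if em (X ω) = xt then (1 : ℝ) else 0) * g' (X ω) * (1 - pf (X ω)) ∂P := by
    rw [← integral_sub i7 i9]
    exact integral_congr_ae (ae_of_all _ fun ω => by dsimp only; ring)
  have hAfin : ∫ ω, (if em (X ω) = xt ∧ R ω = false then (1 : ℝ) else 0) * g' (X ω) ∂P
      = ∫ ω, (if em (X ω) = xt then (1 : ℝ) else 0) * g' (X ω) * (1 - pf (X ω)) ∂P := by
    rw [hL1, E1, hA2]
  have hC2 : (∫ ω, (if em (X ω) = xt then (1 : ℝ) else 0) *
        (if R ω = true ∧ A ω = a then (1 : ℝ) else 0) *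
        ((1 - p' (X ω)) / (p' (X ω) * e' (X ω))) * ga (X ω) ∂P)
      - (∫ ω, (if em (X ω) = xt then (1 : ℝ) else 0) *
        (if R ω = true ∧ A ω = a then (1 : ℝ) else 0) *
        ((1 - p' (X ω)) / (p' (X ω) * e' (X ω))) * g' (X ω) ∂P)
      = ∫ ω, (if em (X ω) = xt then (1 : ℝ) else 0) *
        (((1 - p' (X ω)) / (p' (X ω) * e' (X ω))) * (ga (X ω) - g' (X ω))) *
        (if R ω = true ∧ A ω = a then (1 : ℝ) else 0) ∂P := by
    rw [← integral_sub i6 i5]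
    exact integral_congr_ae (ae_of_all _ fun ω => by dsimp only; ring)
  have hC3 : ∫ ω, (if em (X ω) = xt then (1 : ℝ) else 0) *
        (((1 - p' (X ω)) / (p' (X ω) * e' (X ω))) * (ga (X ω) - g' (X ω))) *
        (pf (X ω) * ea (X ω)) ∂P
      = ∫ ω, (if em (X ω) = xt then (1 : ℝ) else 0) * (pf (X ω) * ea (X ω)) *
        (((1 - p' (X ω)) / (p' (X ω) * e' (X ω))) * (ga (X ω) - g' (X ω))) ∂P :=
    integral_congr_ae (ae_of_all _ fun ω => by dsimp only; ring)
  have hCfin : ∫ ω, (if A ω = a ∧ em (X ω) = xt ∧ R ω = true then (1 : ℝ) else 0) *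
        ((1 - p' (X ω)) / (p' (X ω) * e' (X ω))) * (Y ω - g' (X ω)) ∂P
      = ∫ ω, (if em (X ω) = xt then (1 : ℝ) else 0) * (pf (X ω) * ea (X ω)) *
        (((1 - p' (X ω)) / (p' (X ω) * e' (X ω))) * (ga (X ω) - g' (X ω))) ∂P := by
    rw [hL2, E4, hC2, E3, hC3]
  have hLHS : ∫ ω, H ω ∂P
      = γ' * ((∫ ω, (if em (X ω) = xt then (1 : ℝ) else 0) * g' (X ω) * (1 - pf (X ω)) ∂P)
        + ∫ ω, (if em (X ω) = xt then (1 : ℝ) else 0) * (pf (X ω) * ea (X ω)) *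
          (((1 - p' (X ω)) / (p' (X ω) * e' (X ω))) * (ga (X ω) - g' (X ω))) ∂P) := by
    rw [hH]
    rw [show (∫ ω, (fun ω => γ' *
      ((if em (X ω) = xt ∧ R ω = false then (1 : ℝ) else 0) * g' (X ω) +
        (if A ω = a ∧ em (X ω) = xt ∧ R ω = true then (1 : ℝ) else 0) *
          ((1 - p' (X ω)) / (p' (X ω) * e' (X ω))) * (Y ω - g' (X ω)))) ω ∂P)
      = γ' * ∫ ω, ((if em (X ω) = xt ∧ R ω = false then (1 : ℝ) else 0) * g' (X ω) +
        (if A ω = a ∧ em (X ω) = xt ∧ R ω = true then (1 : ℝ) else 0) *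
          ((1 - p' (X ω)) / (p' (X ω) * e' (X ω))) * (Y ω - g' (X ω))) ∂P
      from integral_const_mul γ' _]
    rw [integral_add hfE hfT, hAfin, hCfin]
  -- IB and ψ
  have hIB1 : ∫ ω, (if em (X ω) = xt then (1 : ℝ) else 0) * ga (X ω) * (1 - pf (X ω)) ∂P
      = (∫ ω, (if em (X ω) = xt then (1 : ℝ) else 0) * ga (X ω) ∂P)
        - ∫ ω, (if em (X ω) = xt then (1 : ℝ) else 0) * ga (X ω) * pf (X ω) ∂P := by
    rw [← integral_sub i8 i10]
    exact integral_congr_ae (ae_of_all _ fun ω => by dsimp only; ring)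
  have hIB2 : (∫ ω, (if em (X ω) = xt then (1 : ℝ) else 0) * ga (X ω) ∂P)
        - (∫ ω, (if em (X ω) = xt then (1 : ℝ) else 0) * ga (X ω) *
            (if R ω = true then (1 : ℝ) else 0) ∂P)
      = ∫ ω, (if em (X ω) = xt ∧ R ω = false then (1 : ℝ) else 0) * ga (X ω) ∂P := by
    rw [← integral_sub i8 i2]
    refine integral_congr_ae (ae_of_all _ fun ω => ?_)
    dsimp only
    by_cases h1 : em (X ω) = xt <;> by_cases h2 : R ω = true <;> simp [h1, h2] <;> ring
  have hIB3 : ∫ ω, (if em (X ω) = xt ∧ R ω = false then (1 : ℝ) else 0) * ga (X ω) ∂P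
      = ∫ ω in {ω | em (X ω) = xt ∧ R ω = false}, ga (X ω) ∂P := by
    rw [← integral_indicator hEset]
    refine integral_congr_ae (ae_of_all _ fun ω => ?_)
    by_cases h : em (X ω) = xt ∧ R ω = false <;>
      simp [Set.indicator_apply, Set.mem_setOf_eq, h]
  have hIB : ∫ ω, (if em (X ω) = xt then (1 : ℝ) else 0) * ga (X ω) * (1 - pf (X ω)) ∂P
      = ψ * (P {ω | em (X ω) = xt ∧ R ω = false}).toReal := by
    rw [hIB1, ← E2, hIB2, hIB3, hψ]
    field_simp
  -- RHS computation
  have hJ : ∫ ω, (if em (X ω) = xt then (1 : ℝ) else 0) *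
        ((p' (X ω) - pf (X ω)) +
          (1 - p' (X ω)) * (1 - pf (X ω) * ea (X ω) / (p' (X ω) * e' (X ω)))) *
        (g' (X ω) - ga (X ω)) ∂P
      = (∫ ω, (if em (X ω) = xt then (1 : ℝ) else 0) * g' (X ω) * (1 - pf (X ω)) ∂P)
        - (∫ ω, (if em (X ω) = xt then (1 : ℝ) else 0) * ga (X ω) * (1 - pf (X ω)) ∂P)
        + ∫ ω, (if em (X ω) = xt then (1 : ℝ) else 0) * (pf (X ω) * ea (X ω)) *
          (((1 - p' (X ω)) / (p' (X ω) * e' (X ω))) * (ga (X ω) - g' (X ω))) ∂P := by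
    have k0 : ∫ ω, (if em (X ω) = xt then (1 : ℝ) else 0) *
          ((p' (X ω) - pf (X ω)) +
            (1 - p' (X ω)) * (1 - pf (X ω) * ea (X ω) / (p' (X ω) * e' (X ω)))) *
          (g' (X ω) - ga (X ω)) ∂P
        = ∫ ω, ((if em (X ω) = xt then (1 : ℝ) else 0) * g' (X ω) * (1 - pf (X ω))
            - (if em (X ω) = xt then (1 : ℝ) else 0) * ga (X ω) * (1 - pf (X ω))
            + (if em (X ω) = xt then (1 : ℝ) else 0) * (pf (X ω) * ea (X ω)) *
              (((1 - p' (X ω)) / (p' (X ω) * e' (X ω))) * (ga (X ω) - g' (X ω)))) ∂P := by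
      refine integral_congr_ae (ae_of_all _ fun ω => ?_)
      try dsimp only
      ring
    have k1 : ∫ ω, ((if em (X ω) = xt then (1 : ℝ) else 0) * g' (X ω) * (1 - pf (X ω))
            - (if em (X ω) = xt then (1 : ℝ) else 0) * ga (X ω) * (1 - pf (X ω))
            + (if em (X ω) = xt then (1 : ℝ) else 0) * (pf (X ω) * ea (X ω)) *
              (((1 - p' (X ω)) / (p' (X ω) * e' (X ω))) * (ga (X ω) - g' (X ω)))) ∂P
        = (∫ ω, ((if em (X ω) = xt then (1 : ℝ) else 0) * g' (X ω) * (1 - pf (X ω))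
            - (if em (X ω) = xt then (1 : ℝ) else 0) * ga (X ω) * (1 - pf (X ω))) ∂P)
          + ∫ ω, (if em (X ω) = xt then (1 : ℝ) else 0) * (pf (X ω) * ea (X ω)) *
              (((1 - p' (X ω)) / (p' (X ω) * e' (X ω))) * (ga (X ω) - g' (X ω))) ∂P :=
      integral_add (i12.sub i13) i11
    have k2 : ∫ ω, ((if em (X ω) = xt then (1 : ℝ) else 0) * g' (X ω) * (1 - pf (X ω))
            - (if em (X ω) = xt then (1 : ℝ) else 0) * ga (X ω) * (1 - pf (X ω))) ∂P
        = (∫ ω, (if em (X ω) = xt then (1 : ℝ) else 0) * g' (X ω) * (1 - pf (X ω)) ∂P)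
          - ∫ ω, (if em (X ω) = xt then (1 : ℝ) else 0) * ga (X ω) * (1 - pf (X ω)) ∂P :=
      integral_sub i12 i13
    rw [k0, k1, k2]
  rw [hLHS, hJ, hIB, hγ, div_inv_eq_mul]
  ring
end
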